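/- arXiv:1912.08080 — 10 statements merged into one kernel-verified Lean document; each statement's English description precedes it below -/
import Mathlib

section
/- Let F be a family of 2k−1 closed bounded intervals of the real line such that no point of ℝ is contained in more than k members of F. Then there exists an interval in F that contains every point of ℝ which is contained in at least k members of F. -/
/-!
The `k`-covered points form a compact set, a finite union of intersections of `k` of the
intervals. Its least point `a` and greatest point `b` each lie in `k` of the `2k - 1`
intervals, so by pigeonhole one interval contains both, and by convexity all of `[a, b]`.
-/

open Set

section CoveredPoints

variable {ι α : Type*} [Fintype ι] (F : ι → Set α) (k : ℕ)

theorem setOf_le_ncard_mem_eq_biUnion :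
    {x | k ≤ {i | x ∈ F i}.ncard} = ⋃ T ∈ Finset.univ.powersetCard k, ⋂ i ∈ T, F i := by
  classical
  ext x
  simp only [mem_ofPred_eq, mem_iUnion, mem_iInter, Finset.mem_powersetCard,
    Finset.subset_univ, true_and, exists_prop]
  constructor
  · intro hx
    rw [ncard_eq_toFinset_card'] at hx
    obtain ⟨T, hT, rfl⟩ := Finset.exists_subset_card_eq hx
    exact ⟨T, rfl, fun i hi => by simpa using hT hi⟩
  · rintro ⟨T, rfl, hT⟩
    rw [← ncard_coe_finset]
    exact ncard_le_ncard fun i hi => hT i hi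

variable {F k}

theorem isCompact_setOf_le_ncard_mem [TopologicalSpace α] [T2Space α] (hk : k ≠ 0)
    (hF : ∀ i, IsCompact (F i)) : IsCompact {x | k ≤ {i | x ∈ F i}.ncard} := by
  rw [setOf_le_ncard_mem_eq_biUnion]
  refine (Finset.powersetCard k Finset.univ).isCompact_biUnion fun T hT => ?_
  obtain ⟨i, hi⟩ : T.Nonempty := by
    rw [← Finset.card_ne_zero, (Finset.mem_powersetCard.1 hT).2]
    exact hk
  exact (hF i).of_isClosed_subset (isClosed_biInter fun j _ => (hF j).isClosed)
    (biInter_subset_of_mem hi)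

end CoveredPoints

theorem petruska_intervals_general (k : ℕ) (hk : 1 ≤ k) (F : Fin (2 * k - 1) → Set ℝ)
    (hcomp : ∀ i, IsCompact (F i)) (hconv : ∀ i, Convex ℝ (F i)) :
    ∃ i, ∀ x : ℝ, k ≤ ({j | x ∈ F j} : Set (Fin (2 * k - 1))).ncard → x ∈ F i := by
  set S := {x : ℝ | k ≤ ({j | x ∈ F j} : Set (Fin (2 * k - 1))).ncard}
  rcases S.eq_empty_or_nonempty with hS | hS
  · exact ⟨⟨0, by omega⟩, fun x hx => (hS.subset hx).elim⟩
  have hSc : IsCompact S := isCompact_setOf_le_ncard_mem (by omega) hcomp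
  obtain ⟨a, haS, ha⟩ := hSc.exists_isLeast hS
  obtain ⟨b, hbS, hb⟩ := hSc.exists_isGreatest hS
  obtain ⟨i, hia, hib⟩ : ({j | a ∈ F j} ∩ {j | b ∈ F j}).Nonempty := by
    refine nonempty_inter_of_lt_ncard_add_ncard ?_
    rw [Nat.card_fin]
    exact lt_of_lt_of_le (by omega) (add_le_add haS hbS)
  exact ⟨i, fun x hx => (hconv i).ordConnected.out hia hib ⟨ha hx, hb hx⟩⟩

/-- Petruska's observation for intervals: among `2k-1` compact convex subsets
(intervals) of `ℝ` such that no point is covered more than `k` times, some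
member contains every `k`-covered point. -/
theorem petruska_intervals (k : ℕ) (hk : 1 ≤ k) (F : Fin (2 * k - 1) → Set ℝ)
    (hcomp : ∀ i, IsCompact (F i)) (hconv : ∀ i, Convex ℝ (F i))
    (hcov : ∀ x : ℝ, ({i | x ∈ F i} : Set (Fin (2 * k - 1))).ncard ≤ k) :
    ∃ i, ∀ x : ℝ, k ≤ ({j | x ∈ F j} : Set (Fin (2 * k - 1))).ncard → x ∈ F i :=
  petruska_intervals_general k hk F hcomp hconv
end

section
/- Let A, B, C be compact convex sets in ℝ² that pairwise intersect but have empty triple intersection (a 'hole'). Then there exists a point ω ∉ A ∪ B ∪ C such that ω ∈ M for every compact convex set M satisfying M ∩ (X ∩ Y) ≠ ∅ for all pairs {X,Y} ⊆ {A,B,C}. -/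
/-!
Fix `p ∈ A ∩ B`, `q ∈ B ∩ C`, `r ∈ C ∩ A`. A line separating the compact convex set `A ∩ B` from
`C` cuts the triangle `pqr` in a chord from a point of `B` (on `[p, q]`) to a point of `A`
(on `[p, r]`); the chord misses `A ∩ B` and `C`, so by connectedness some point `ω` of it lies
outside `A ∪ B ∪ C`.

Since the triple intersection is empty, every triangle with vertices in
`(A ∩ B) × (B ∩ C) × (C ∩ A)` is nondegenerate, and its sides lie in `B`, `C` and `A`, so they
never pass through `ω`. The barycentric coordinates of `ω` depend continuously on the vertices,
and the set of vertex triples is convex, hence connected; so `ω` lies inside all these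
triangles, in particular inside the one spanned by points of a lid `M`, and hence in `M`.
-/

open Set

noncomputable def cross (u v : ℝ × ℝ) : ℝ := u.1 * v.2 - u.2 * v.1

/-- The barycentric coordinate of `ω` at the vertex `p` of the triangle `pqr`, as a ratio of
signed areas (junk value `0` when the triangle is degenerate). -/
noncomputable def baryCoord (ω p q r : ℝ × ℝ) : ℝ := cross (q - ω) (r - ω) / cross (q - p) (r - p)

noncomputable def minBaryCoord (ω p q r : ℝ × ℝ) : ℝ :=
  min (baryCoord ω p q r) (min (baryCoord ω q r p) (baryCoord ω r p q))

theorem cross_sub_sub_rotate (p q r : ℝ × ℝ) : cross (r - q) (p - q) = cross (q - p) (r - p) := by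
  simp only [cross, Prod.fst_sub, Prod.snd_sub]; ring

@[fun_prop]
theorem Continuous.cross {X : Type*} [TopologicalSpace X] {f g : X → ℝ × ℝ} (hf : Continuous f)
    (hg : Continuous g) : Continuous fun x => _root_.cross (f x) (g x) := by
  unfold _root_.cross; fun_prop

theorem exists_eq_smul_of_cross_eq_zero {u v : ℝ × ℝ} (hu : u ≠ 0) (h : cross u v = 0) :
    ∃ t : ℝ, v = t • u := by
  have hu' : u.1 ^ 2 + u.2 ^ 2 ≠ 0 := by
    contrapose! hu
    ext <;> simp only [Prod.fst_zero, Prod.snd_zero] <;> nlinarith [sq_nonneg u.1, sq_nonneg u.2]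
  -- `v` is its own orthogonal projection onto the line spanned by `u`
  refine ⟨(u.1 * v.1 + u.2 * v.2) / (u.1 ^ 2 + u.2 ^ 2), ?_⟩
  simp only [cross] at h
  ext <;> simp only [Prod.smul_fst, Prod.smul_snd, smul_eq_mul] <;> field_simp
  · linear_combination (-u.2) * h
  · linear_combination u.1 * h

theorem collinear_of_cross_eq_zero {p q r : ℝ × ℝ} (h : cross (q - p) (r - p) = 0) :
    Collinear ℝ {p, q, r} := by
  rcases eq_or_ne q p with rfl | hqp
  · simpa using collinear_pair ℝ q r
  obtain ⟨t, ht⟩ := exists_eq_smul_of_cross_eq_zero (sub_ne_zero.2 hqp) h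
  have hr : r ∈ line[ℝ, p, q] := by
    have := smul_vsub_vadd_mem_affineSpan_pair t p q
    rwa [vsub_eq_sub, ← ht, vadd_eq_add, sub_add_cancel] at this
  have := collinear_insert_of_mem_affineSpan_pair hr
  rwa [insert_comm, pair_comm] at this

theorem mem_convexHull_triple_iff {𝕜 E : Type*} [Field 𝕜] [LinearOrder 𝕜] [IsStrictOrderedRing 𝕜]
    [AddCommGroup E] [Module 𝕜 E] {ω p q r : E} :
    ω ∈ convexHull 𝕜 {p, q, r} ↔
      ∃ a b c : 𝕜, 0 ≤ a ∧ 0 ≤ b ∧ 0 ≤ c ∧ a + b + c = 1 ∧ a • p + b • q + c • r = ω := by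
  constructor
  · rw [convexHull_insert (insert_nonempty q {r}), convexHull_pair, convexJoin_singleton_left]
    simp only [mem_iUnion]
    rintro ⟨_, ⟨b, c, hb, hc, hbc, rfl⟩, a, t, ha, ht, hat, rfl⟩
    refine ⟨a, t * b, t * c, ha, mul_nonneg ht hb, mul_nonneg ht hc, ?_, ?_⟩
    · linear_combination t * hbc + hat
    · simp only [smul_add, smul_smul, add_assoc]
  · rintro ⟨a, b, c, ha, hb, hc, habc, rfl⟩
    refine mem_convexHull_of_exists_fintype ![a, b, c] ![p, q, r] (fun i => ?_) ?_ (fun i => ?_) ?_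
    · fin_cases i <;> assumption
    · simpa [Fin.sum_univ_three] using habc
    · fin_cases i <;> simp
    · simp [Fin.sum_univ_three]

section Triangle

variable {ω p q r : ℝ × ℝ}

theorem baryCoord_add_baryCoord_add_baryCoord (hD : cross (q - p) (r - p) ≠ 0) :
    baryCoord ω p q r + baryCoord ω q r p + baryCoord ω r p q = 1 := by
  rw [baryCoord, baryCoord, baryCoord, cross_sub_sub_rotate q r p, cross_sub_sub_rotate p q r,
    ← add_div, ← add_div, div_eq_one_iff_eq hD]
  simp only [cross, Prod.fst_sub, Prod.snd_sub]; ring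

theorem baryCoord_smul_add_baryCoord_smul_add_baryCoord_smul (hD : cross (q - p) (r - p) ≠ 0) :
    baryCoord ω p q r • p + baryCoord ω q r p • q + baryCoord ω r p q • r = ω := by
  rw [baryCoord, baryCoord, baryCoord, cross_sub_sub_rotate q r p, cross_sub_sub_rotate p q r]
  simp only [div_eq_inv_mul, ← smul_smul, ← smul_add, inv_smul_eq_iff₀ hD]
  ext <;> simp only [cross, Prod.fst_sub, Prod.snd_sub, Prod.fst_add, Prod.snd_add,
    Prod.smul_fst, Prod.smul_snd, smul_eq_mul] <;> ring

theorem baryCoord_eq {a b c : ℝ} (hD : cross (q - p) (r - p) ≠ 0) (habc : a + b + c = 1)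
    (hω : a • p + b • q + c • r = ω) : baryCoord ω p q r = a := by
  obtain rfl : a = 1 - b - c := by linarith
  rw [baryCoord, div_eq_iff hD, ← hω]
  simp only [cross, Prod.fst_sub, Prod.snd_sub, Prod.fst_add, Prod.snd_add,
    Prod.smul_fst, Prod.smul_snd, smul_eq_mul]
  ring

theorem minBaryCoord_nonneg_iff (hD : cross (q - p) (r - p) ≠ 0) :
    0 ≤ minBaryCoord ω p q r ↔ ω ∈ convexHull ℝ {p, q, r} := by
  rw [minBaryCoord, le_min_iff, le_min_iff, mem_convexHull_triple_iff]
  constructor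
  · rintro ⟨ha, hb, hc⟩
    exact ⟨_, _, _, ha, hb, hc, baryCoord_add_baryCoord_add_baryCoord hD,
      baryCoord_smul_add_baryCoord_smul_add_baryCoord_smul hD⟩
  · rintro ⟨a, b, c, ha, hb, hc, habc, rfl⟩
    rw [baryCoord_eq hD habc rfl,
      baryCoord_eq (a := b) (b := c) (c := a) (by rwa [cross_sub_sub_rotate]) (by linarith)
        (by abel),
      baryCoord_eq (a := c) (b := a) (c := b) (by rwa [cross_sub_sub_rotate, cross_sub_sub_rotate])
        (by linarith) (by abel)]
    exact ⟨ha, hb, hc⟩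

theorem mem_segment_of_minBaryCoord_eq_zero (hD : cross (q - p) (r - p) ≠ 0)
    (h : minBaryCoord ω p q r = 0) :
    ω ∈ segment ℝ q r ∨ ω ∈ segment ℝ r p ∨ ω ∈ segment ℝ p q := by
  obtain ⟨ha, hb, hc⟩ : 0 ≤ baryCoord ω p q r ∧ 0 ≤ baryCoord ω q r p ∧ 0 ≤ baryCoord ω r p q := by
    simpa only [minBaryCoord, le_min_iff] using h.ge
  have hsum := baryCoord_add_baryCoord_add_baryCoord (ω := ω) hD
  have hω := baryCoord_smul_add_baryCoord_smul_add_baryCoord_smul (ω := ω) hD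
  rcases ha.eq_or_lt with ha0 | ha0
  · refine .inl ⟨_, _, hb, hc, by linarith, ?_⟩
    rwa [← ha0, zero_smul, zero_add] at hω
  rcases hb.eq_or_lt with hb0 | hb0
  · refine .inr (.inl ⟨_, _, hc, ha, by linarith, ?_⟩)
    rwa [← hb0, zero_smul, add_zero, add_comm] at hω
  rcases hc.eq_or_lt with hc0 | hc0
  · refine .inr (.inr ⟨_, _, ha, hb, by linarith, ?_⟩)
    rwa [← hc0, zero_smul, add_zero] at hω
  exact absurd h (lt_min ha0 (lt_min hb0 hc0)).ne'

end Triangle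

theorem continuousOn_minBaryCoord (ω : ℝ × ℝ) :
    ContinuousOn (fun τ : (ℝ × ℝ) × (ℝ × ℝ) × (ℝ × ℝ) => minBaryCoord ω τ.1 τ.2.1 τ.2.2)
      {τ | cross (τ.2.1 - τ.1) (τ.2.2 - τ.1) ≠ 0} := by
  refine ContinuousOn.inf ?_ (.inf ?_ ?_) <;>
    refine .div (by fun_prop) (by fun_prop) fun τ hτ => ?_
  · exact hτ
  · rwa [cross_sub_sub_rotate]
  · rwa [cross_sub_sub_rotate, cross_sub_sub_rotate]

section Hole

variable {A B C : Set (ℝ × ℝ)}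

theorem cross_ne_zero_of_inter_eq_empty (hA : Convex ℝ A) (hB : Convex ℝ B) (hC : Convex ℝ C)
    (htri : A ∩ B ∩ C = ∅) {p q r : ℝ × ℝ} (hp : p ∈ A ∩ B) (hq : q ∈ B ∩ C) (hr : r ∈ C ∩ A) :
    cross (q - p) (r - p) ≠ 0 := by
  intro h
  have hnot := Set.eq_empty_iff_forall_notMem.1 htri
  rcases (collinear_of_cross_eq_zero h).wbtw_or_wbtw_or_wbtw with h | h | h
  · exact hnot q ⟨⟨hA.segment_subset hp.1 hr.2 h.mem_segment, hq.1⟩, hq.2⟩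
  · exact hnot r ⟨⟨hr.2, hB.segment_subset hq.1 hp.2 h.mem_segment⟩, hr.1⟩
  · exact hnot p ⟨hp, hC.segment_subset hr.1 hq.2 h.mem_segment⟩

theorem exists_mem_convexHull_notMem_union (hAc : IsCompact A) (hBc : IsClosed B)
    (hCc : IsClosed C) (hA : Convex ℝ A) (hB : Convex ℝ B) (hC : Convex ℝ C)
    (htri : A ∩ B ∩ C = ∅) {p q r : ℝ × ℝ} (hp : p ∈ A ∩ B) (hq : q ∈ B ∩ C) (hr : r ∈ C ∩ A) :
    ∃ ω ∈ convexHull ℝ {p, q, r}, ω ∉ A ∪ B ∪ C := by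
  obtain ⟨f, u, v, hfAB, huv, hfC⟩ := geometric_hahn_banach_compact_closed (hA.inter hB)
    (hAc.inter_right hBc) hC hCc (disjoint_iff_inter_eq_empty.2 htri)
  have hlevel {x y : ℝ × ℝ} (hx : x ∈ A ∩ B) (hy : y ∈ C) : ∃ z ∈ segment ℝ x y, f z = u :=
    (convex_segment x y).isPreconnected.intermediate_value (left_mem_segment ℝ x y)
      (right_mem_segment ℝ x y) f.continuous.continuousOn
      ⟨(hfAB x hx).le, (huv.trans (hfC y hy)).le⟩
  obtain ⟨x, hxpq, hx⟩ := hlevel hp hq.2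
  obtain ⟨y, hypr, hy⟩ := hlevel hp hr.1
  have hxy : segment ℝ x y ⊆ {z | f z = u} :=
    (convex_hyperplane f.toLinearMap.isLinear u).segment_subset hx hy
  -- the chord `[x, y]` joins `B` to `A` but misses `A ∩ B`, so it is not covered by `A ∪ B`
  obtain ⟨ω, hωxy, hωAB⟩ : ∃ ω ∈ segment ℝ x y, ω ∉ A ∪ B := by
    by_contra! hcover
    obtain ⟨z, hz, hzAB⟩ := isPreconnected_closed_iff.1 (convex_segment x y).isPreconnected
      A B hAc.isClosed hBc hcover
      ⟨y, right_mem_segment ℝ x y, hA.segment_subset hp.1 hr.2 hypr⟩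
      ⟨x, left_mem_segment ℝ x y, hB.segment_subset hp.2 hq.1 hxpq⟩
    exact (hfAB z hzAB).ne (hxy hz)
  have hhull := convex_convexHull ℝ ({p, q, r} : Set (ℝ × ℝ))
  refine ⟨ω, hhull.segment_subset (segment_subset_convexHull (by simp) (by simp) hxpq)
    (segment_subset_convexHull (by simp) (by simp) hypr) hωxy, ?_⟩
  rintro (hω | hω)
  · exact hωAB hω
  · exact (huv.trans (hfC ω hω)).ne' (hxy hωxy)

theorem mem_convexHull_of_inter_eq_empty (hA : Convex ℝ A) (hB : Convex ℝ B) (hC : Convex ℝ C)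
    (htri : A ∩ B ∩ C = ∅) {ω p₀ q₀ r₀ p q r : ℝ × ℝ} (hω : ω ∉ A ∪ B ∪ C)
    (hp₀ : p₀ ∈ A ∩ B) (hq₀ : q₀ ∈ B ∩ C) (hr₀ : r₀ ∈ C ∩ A)
    (hω₀ : ω ∈ convexHull ℝ {p₀, q₀, r₀})
    (hp : p ∈ A ∩ B) (hq : q ∈ B ∩ C) (hr : r ∈ C ∩ A) :
    ω ∈ convexHull ℝ {p, q, r} := by
  set T := (A ∩ B) ×ˢ (B ∩ C) ×ˢ (C ∩ A)
  set g := fun τ : (ℝ × ℝ) × (ℝ × ℝ) × (ℝ × ℝ) => minBaryCoord ω τ.1 τ.2.1 τ.2.2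
  have hD (τ) (hτ : τ ∈ T) : cross (τ.2.1 - τ.1) (τ.2.2 - τ.1) ≠ 0 :=
    cross_ne_zero_of_inter_eq_empty hA hB hC htri hτ.1 hτ.2.1 hτ.2.2
  -- `ω` lies on no side of a triangle with vertices in `T`, since the sides lie in `A`, `B`, `C`
  have hg_ne (τ) (hτ : τ ∈ T) : g τ ≠ 0 := by
    intro h0
    obtain ⟨⟨hpA, hpB⟩, ⟨hqB, hqC⟩, ⟨hrC, hrA⟩⟩ := hτ
    rcases mem_segment_of_minBaryCoord_eq_zero (hD τ ⟨⟨hpA, hpB⟩, ⟨hqB, hqC⟩, ⟨hrC, hrA⟩⟩) h0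
      with h | h | h
    · exact hω (.inr (hC.segment_subset hqC hrC h))
    · exact hω (.inl (.inl (hA.segment_subset hrA hpA h)))
    · exact hω (.inl (.inr (hB.segment_subset hpB hqB h)))
  have hτ₀ : (p₀, q₀, r₀) ∈ T := ⟨hp₀, hq₀, hr₀⟩
  have hg₀ : 0 < g (p₀, q₀, r₀) :=
    ((minBaryCoord_nonneg_iff (hD _ hτ₀)).2 hω₀).lt_of_ne (hg_ne _ hτ₀).symm
  rw [← minBaryCoord_nonneg_iff (hD (p, q, r) ⟨hp, hq, hr⟩)]
  by_contra! hneg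
  obtain ⟨τ, hτ, h0⟩ := ((hA.inter hB).prod ((hB.inter hC).prod (hC.inter hA))).isPreconnected
    |>.intermediate_value ⟨hp, hq, hr⟩ hτ₀ ((continuousOn_minBaryCoord ω).mono hD)
      ⟨hneg.le, hg₀.le⟩
  exact hg_ne τ hτ h0

end Hole

/-- If compact convex sets `A, B, C ⊆ ℝ²` form a hole (pairwise intersecting,
empty triple intersection), then there is a point `ω ∉ A ∪ B ∪ C` contained in
every compact convex lid `M`. -/
theorem hole_omega (A B C : Set (ℝ × ℝ))
    (hAcp : IsCompact A) (hBcp : IsCompact B) (hCcp : IsCompact C)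
    (hAcv : Convex ℝ A) (hBcv : Convex ℝ B) (hCcv : Convex ℝ C)
    (hAB : (A ∩ B).Nonempty) (hBC : (B ∩ C).Nonempty) (hCA : (C ∩ A).Nonempty)
    (htri : A ∩ B ∩ C = ∅) :
    ∃ ω : ℝ × ℝ, ω ∉ A ∪ B ∪ C ∧
      ∀ M : Set (ℝ × ℝ), IsCompact M → Convex ℝ M →
        (M ∩ (A ∩ B)).Nonempty → (M ∩ (B ∩ C)).Nonempty → (M ∩ (C ∩ A)).Nonempty →
        ω ∈ M := by
  obtain ⟨p, hp⟩ := hAB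
  obtain ⟨q, hq⟩ := hBC
  obtain ⟨r, hr⟩ := hCA
  obtain ⟨ω, hωpqr, hω⟩ := exists_mem_convexHull_notMem_union hAcp hBcp.isClosed hCcp.isClosed
    hAcv hBcv hCcv htri hp hq hr
  refine ⟨ω, hω, fun M _ hM ⟨p', hp'M, hp'⟩ ⟨q', hq'M, hq'⟩ ⟨r', hr'M, hr'⟩ => ?_⟩
  refine convexHull_min ?_ hM
    (mem_convexHull_of_inter_eq_empty hAcv hBcv hCcv htri hω hp hq hr hωpqr hp' hq' hr')
  simp [Set.insert_subset_iff, hp'M, hq'M, hr'M]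
end

section
/- Let A, B, C be compact convex sets in ℝ² that pairwise intersect but have empty triple intersection. Then there exist points p* ∈ A ∩ B, q* ∈ B ∩ C, r* ∈ C ∩ A such that every compact convex set M intersecting all three pairwise intersections A∩B, B∩C, C∩A contains p*, q*, and r*. -/
/-!
Write `P = A ∩ B`, `Q = B ∩ C`, `R = C ∩ A`. A triangle `pqr` with `p ∈ P`, `q ∈ Q`, `r ∈ R` is
never degenerate: if it were, one vertex would lie between the other two and hence in `A ∩ B ∩ C`.
As `P × Q × R` is connected, all these triangles have the same orientation, say counterclockwise.
Then `p*` is taken in `P` and to the left of every side `pq` and `rp` of these triangles, so that it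
lies in all of them; a convex `M` meeting `P`, `Q` and `R` contains one of them, hence `p*`.
Such a point exists by Helly's theorem in the plane and compactness: two of the half-planes meet
inside `P` (at a vertex, or where a segment of `A` crosses a segment of `B`), and three of them
share a point of `Q ∪ R`.
-/

open Set
open scoped Finset

/-- Twice the signed area of the triangle `abc`: positive iff `a, b, c` are counterclockwise. -/
def orient (a b c : ℝ × ℝ) : ℝ :=
  (b.1 - a.1) * (c.2 - a.2) - (b.2 - a.2) * (c.1 - a.1)

lemma orient_rotate (a b c : ℝ × ℝ) : orient b c a = orient a b c := by unfold orient; ring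

lemma orient_swap₁₂ (a b c : ℝ × ℝ) : orient b a c = -orient a b c := by unfold orient; ring

lemma orient_swap₂₃ (a b c : ℝ × ℝ) : orient a c b = -orient a b c := by unfold orient; ring

lemma orient_swap₁₃ (a b c : ℝ × ℝ) : orient c b a = -orient a b c := by unfold orient; ring

def leftHalfPlane (a b : ℝ × ℝ) : Set (ℝ × ℝ) := {x | 0 ≤ orient a b x}

@[simp] lemma mem_leftHalfPlane {a b x : ℝ × ℝ} : x ∈ leftHalfPlane a b ↔ 0 ≤ orient a b x :=
  Iff.rfl

lemma left_mem_leftHalfPlane (a b : ℝ × ℝ) : a ∈ leftHalfPlane a b := by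
  simp [orient]

lemma right_mem_leftHalfPlane (a b : ℝ × ℝ) : b ∈ leftHalfPlane a b := by
  simp [orient, mul_comm]

lemma convex_leftHalfPlane (a b : ℝ × ℝ) : Convex ℝ (leftHalfPlane a b) := by
  intro x hx y hy s t hs ht hst
  have hcomb : orient a b (s • x + t • y) = s * orient a b x + t * orient a b y := by
    obtain rfl : t = 1 - s := by linarith
    simp only [orient, Prod.fst_add, Prod.snd_add, Prod.smul_fst, Prod.smul_snd, smul_eq_mul]
    ring
  simp only [mem_leftHalfPlane, hcomb] at *
  positivity

lemma isClosed_leftHalfPlane (a b : ℝ × ℝ) : IsClosed (leftHalfPlane a b) :=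
  isClosed_le continuous_const (by unfold orient; fun_prop)

lemma segment_inter_segment_nonempty {a b c d : ℝ × ℝ} (hca : 0 ≤ orient c d a)
    (hcb : orient c d b < 0) (hac : orient a b c ≤ 0) (had : 0 ≤ orient a b d) :
    (segment ℝ a b ∩ segment ℝ c d).Nonempty := by
  set D := orient c d a - orient c d b
  have hD : 0 < D := by linarith
  have hsum : orient a b d - orient a b c = D := by simp only [D, orient]; ring
  -- both sides are `D` times the crossing point
  have hcomb : (-orient c d b) • a + orient c d a • b = orient a b d • c + (-orient a b c) • d := by
    ext <;> simp [orient] <;> ring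
  refine ⟨(-orient c d b / D) • a + (orient c d a / D) • b,
    ⟨_, _, div_nonneg (by linarith) hD.le, div_nonneg hca hD.le, by field_simp; ring, rfl⟩,
    ⟨orient a b d / D, -orient a b c / D, div_nonneg had hD.le, div_nonneg (by linarith) hD.le,
      by field_simp; linarith, ?_⟩⟩
  simp only [div_eq_inv_mul, mul_smul, ← smul_add, hcomb]

lemma mem_convexHull_of_orient {a b c x : ℝ × ℝ} (h : 0 < orient a b c)
    (hab : 0 ≤ orient a b x) (hbc : 0 ≤ orient b c x) (hca : 0 ≤ orient c a x) :
    x ∈ convexHull ℝ {a, b, c} := by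
  have hsum : orient b c x + orient c a x + orient a b x = orient a b c := by
    simp only [orient]; ring
  have hcomb : orient b c x • a + orient c a x • b + orient a b x • c = orient a b c • x := by
    ext <;> simp [orient] <;> ring
  refine mem_convexHull_of_exists_fintype
    (fun i => ![orient b c x, orient c a x, orient a b x] i / orient a b c) ![a, b, c]
    (fun i => by fin_cases i <;> simp <;> positivity) ?_ (fun i => by fin_cases i <;> simp) ?_
  · simp [Fin.sum_univ_three, ← add_div, hsum, h.ne']
  · simp [Fin.sum_univ_three, div_eq_inv_mul, mul_smul, ← smul_add, hcomb, h.ne']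

lemma mem_affineSpan_pair_of_orient_eq_zero {a b c : ℝ × ℝ} (hab : a ≠ b)
    (h : orient a b c = 0) : c ∈ line[ℝ, a, b] := by
  set N := (b.1 - a.1) ^ 2 + (b.2 - a.2) ^ 2
  have hN : N ≠ 0 := by
    intro hN
    apply hab
    ext <;> nlinarith [sq_nonneg (b.1 - a.1), sq_nonneg (b.2 - a.2)]
  -- `c - a` is parallel to `b - a`, hence equal to its projection on `b - a`
  have hc : AffineMap.lineMap a b
      (((b.1 - a.1) * (c.1 - a.1) + (b.2 - a.2) * (c.2 - a.2)) / N) = c := by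
    simp only [orient] at h
    ext <;> simp [AffineMap.lineMap_apply] <;> field_simp <;>
      [linear_combination (b.2 - a.2) * h; linear_combination -(b.1 - a.1) * h]
  exact hc ▸ AffineMap.lineMap_mem_affineSpan_pair _ a b

lemma nonempty_biInter_of_card_le_three {ι α : Type*} [Nonempty α] {F : ι → Set α}
    (hF : ∀ i j k, (F i ∩ F j ∩ F k).Nonempty) {I : Finset ι} (hI : #I ≤ 3) :
    (⋂ i ∈ I, F i).Nonempty := by
  classical
  obtain hI | hI | hI | hI : #I = 0 ∨ #I = 1 ∨ #I = 2 ∨ #I = 3 := by omega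
  · simp [Finset.card_eq_zero.1 hI]
  · obtain ⟨i, rfl⟩ := Finset.card_eq_one.1 hI
    obtain ⟨x, ⟨hi, -⟩, -⟩ := hF i i i
    exact ⟨x, by simpa using hi⟩
  · obtain ⟨i, j, -, rfl⟩ := Finset.card_eq_two.1 hI
    obtain ⟨x, ⟨hi, hj⟩, -⟩ := hF i j j
    exact ⟨x, by simp [hi, hj]⟩
  · obtain ⟨i, j, k, -, -, -, rfl⟩ := Finset.card_eq_three.1 hI
    simpa [Set.inter_assoc] using hF i j k

lemma orient_ne_zero {A B C : Set (ℝ × ℝ)} (hA : Convex ℝ A) (hB : Convex ℝ B)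
    (hC : Convex ℝ C) (htri : A ∩ B ∩ C = ∅) {p q r : ℝ × ℝ}
    (hp : p ∈ A ∩ B) (hq : q ∈ B ∩ C) (hr : r ∈ C ∩ A) : orient p q r ≠ 0 := by
  have hABC : ∀ x ∈ A, x ∈ B → x ∉ C := fun x hxA hxB hxC =>
    eq_empty_iff_forall_notMem.1 htri x ⟨⟨hxA, hxB⟩, hxC⟩
  intro h
  have hpq : p ≠ q := by rintro rfl; exact hABC p hp.1 hp.2 hq.2
  have hcol : Collinear ℝ {r, p, q} :=
    collinear_insert_of_mem_affineSpan_pair (mem_affineSpan_pair_of_orient_eq_zero hpq h)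
  rcases hcol.wbtw_or_wbtw_or_wbtw with hrpq | hpqr | hqrp
  · exact hABC p hp.1 hp.2 (hC.segment_subset hr.1 hq.2 hrpq.mem_segment)
  · exact hABC q (hA.segment_subset hp.1 hr.2 hpqr.mem_segment) hq.1 hq.2
  · exact hABC r hr.2 (hB.segment_subset hq.1 hp.2 hqrp.mem_segment) hr.1

def PositivelyOriented (P Q R : Set (ℝ × ℝ)) : Prop :=
  ∀ p ∈ P, ∀ q ∈ Q, ∀ r ∈ R, 0 < orient p q r

section Corner

variable {A B C : Set (ℝ × ℝ)}

lemma positivelyOriented_or (hA : Convex ℝ A) (hB : Convex ℝ B) (hC : Convex ℝ C)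
    (htri : A ∩ B ∩ C = ∅) :
    PositivelyOriented (A ∩ B) (B ∩ C) (C ∩ A) ∨ PositivelyOriented (A ∩ B) (C ∩ A) (B ∩ C) := by
  unfold PositivelyOriented
  by_contra! h
  obtain ⟨⟨p₁, hp₁, q₁, hq₁, r₁, hr₁, h₁⟩, ⟨p₂, hp₂, r₂, hr₂, q₂, hq₂, h₂⟩⟩ := h
  rw [orient_swap₂₃, neg_nonpos] at h₂
  have hS : IsPreconnected ((A ∩ B) ×ˢ (B ∩ C) ×ˢ (C ∩ A)) :=
    ((hA.inter hB).prod ((hB.inter hC).prod (hC.inter hA))).isPreconnected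
  obtain ⟨⟨p, q, r⟩, ⟨hp, hq, hr⟩, h₀⟩ := hS.intermediate_value₂
    (f := fun w => orient w.1 w.2.1 w.2.2) (g := fun _ => 0)
    (a := (p₁, q₁, r₁)) (b := (p₂, q₂, r₂)) ⟨hp₁, hq₁, hr₁⟩ ⟨hp₂, hq₂, hr₂⟩
    (by unfold orient; fun_prop) continuousOn_const h₁ h₂
  exact orient_ne_zero hA hB hC htri hp hq hr h₀

lemma exists_mem_leftHalfPlane_of_toBC_toBC (hA : Convex ℝ A) (hB : Convex ℝ B)
    (hpos : PositivelyOriented (A ∩ B) (B ∩ C) (C ∩ A)) {p₁ q₁ p₂ q₂ r : ℝ × ℝ}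
    (hp₁ : p₁ ∈ A ∩ B) (hq₁ : q₁ ∈ B ∩ C) (hp₂ : p₂ ∈ A ∩ B) (hq₂ : q₂ ∈ B ∩ C)
    (hr : r ∈ C ∩ A) :
    ∃ x ∈ A ∩ B, x ∈ leftHalfPlane p₁ q₁ ∧ x ∈ leftHalfPlane p₂ q₂ := by
  wlog h : 0 ≤ orient p₂ r p₁ generalizing p₁ q₁ p₂ q₂
  · obtain ⟨x, hx, h₂, h₁⟩ := this hp₂ hq₂ hp₁ hq₁ (by rw [orient_swap₁₃]; linarith)
    exact ⟨x, hx, h₁, h₂⟩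
  by_cases hp₂₁ : p₂ ∈ leftHalfPlane p₁ q₁
  · exact ⟨p₂, hp₂, hp₂₁, left_mem_leftHalfPlane _ _⟩
  rw [mem_leftHalfPlane, not_le] at hp₂₁
  -- the segment `[p₂, r] ⊆ A` then crosses the side `[q₁, p₁] ⊆ B`, inside both half-planes
  obtain ⟨m, hm₁, hm₂⟩ := segment_inter_segment_nonempty (a := p₂) (b := r) (c := q₁) (d := p₁)
    (by rw [orient_swap₁₂]; linarith) (by rw [orient_swap₁₂]; linarith [hpos p₁ hp₁ q₁ hq₁ r hr])
    (by rw [orient_swap₂₃]; linarith [hpos p₂ hp₂ q₁ hq₁ r hr]) h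
  exact ⟨m, ⟨hA.segment_subset hp₂.1 hr.2 hm₁, hB.segment_subset hq₁.1 hp₁.2 hm₂⟩,
    (convex_leftHalfPlane _ _).segment_subset (right_mem_leftHalfPlane _ _)
      (left_mem_leftHalfPlane _ _) hm₂,
    (convex_leftHalfPlane _ _).segment_subset (left_mem_leftHalfPlane _ _)
      (hpos p₂ hp₂ q₂ hq₂ r hr).le hm₁⟩

lemma exists_mem_leftHalfPlane_of_toBC_fromCA (hA : Convex ℝ A) (hB : Convex ℝ B)
    (hpos : PositivelyOriented (A ∩ B) (B ∩ C) (C ∩ A)) {p₁ q₁ r₂ p₂ : ℝ × ℝ}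
    (hp₁ : p₁ ∈ A ∩ B) (hq₁ : q₁ ∈ B ∩ C) (hr₂ : r₂ ∈ C ∩ A) (hp₂ : p₂ ∈ A ∩ B) :
    ∃ x ∈ A ∩ B, x ∈ leftHalfPlane p₁ q₁ ∧ x ∈ leftHalfPlane r₂ p₂ := by
  by_cases hp₂₁ : p₂ ∈ leftHalfPlane p₁ q₁
  · exact ⟨p₂, hp₂, hp₂₁, right_mem_leftHalfPlane _ _⟩
  by_cases hp₁₂ : p₁ ∈ leftHalfPlane r₂ p₂
  · exact ⟨p₁, hp₁, left_mem_leftHalfPlane _ _, hp₁₂⟩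
  rw [mem_leftHalfPlane, not_le] at hp₂₁ hp₁₂
  obtain ⟨m, hm₁, hm₂⟩ := segment_inter_segment_nonempty (a := p₂) (b := r₂) (c := q₁) (d := p₁)
    (by rw [orient_swap₁₂]; linarith) (by rw [orient_swap₁₂]; linarith [hpos p₁ hp₁ q₁ hq₁ r₂ hr₂])
    (by rw [orient_swap₂₃]; linarith [hpos p₂ hp₂ q₁ hq₁ r₂ hr₂])
    (by rw [orient_swap₁₂]; linarith)
  exact ⟨m, ⟨hA.segment_subset hp₂.1 hr₂.2 hm₁, hB.segment_subset hq₁.1 hp₁.2 hm₂⟩,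
    (convex_leftHalfPlane _ _).segment_subset (right_mem_leftHalfPlane _ _)
      (left_mem_leftHalfPlane _ _) hm₂,
    (convex_leftHalfPlane _ _).segment_subset (right_mem_leftHalfPlane _ _)
      (left_mem_leftHalfPlane _ _) hm₁⟩

lemma exists_mem_leftHalfPlane_of_fromCA_fromCA (hA : Convex ℝ A) (hB : Convex ℝ B)
    (hpos : PositivelyOriented (A ∩ B) (B ∩ C) (C ∩ A)) {r₁ p₁ r₂ p₂ q : ℝ × ℝ}
    (hr₁ : r₁ ∈ C ∩ A) (hp₁ : p₁ ∈ A ∩ B) (hr₂ : r₂ ∈ C ∩ A) (hp₂ : p₂ ∈ A ∩ B)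
    (hq : q ∈ B ∩ C) :
    ∃ x ∈ A ∩ B, x ∈ leftHalfPlane r₁ p₁ ∧ x ∈ leftHalfPlane r₂ p₂ := by
  wlog h : orient p₂ q p₁ ≤ 0 generalizing r₁ p₁ r₂ p₂
  · obtain ⟨x, hx, h₂, h₁⟩ := this hr₂ hp₂ hr₁ hp₁ (by rw [orient_swap₁₃]; linarith)
    exact ⟨x, hx, h₁, h₂⟩
  by_cases hp₂₁ : p₂ ∈ leftHalfPlane r₁ p₁
  · exact ⟨p₂, hp₂, hp₂₁, right_mem_leftHalfPlane _ _⟩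
  rw [mem_leftHalfPlane, not_le] at hp₂₁
  obtain ⟨m, hm₁, hm₂⟩ := segment_inter_segment_nonempty (a := p₂) (b := q) (c := p₁) (d := r₁)
    (by rw [orient_swap₁₂]; linarith) (by rw [orient_swap₂₃]; linarith [hpos p₁ hp₁ q hq r₁ hr₁])
    h (hpos p₂ hp₂ q hq r₁ hr₁).le
  exact ⟨m, ⟨hA.segment_subset hp₁.1 hr₁.2 hm₂, hB.segment_subset hp₂.2 hq.1 hm₁⟩,
    (convex_leftHalfPlane _ _).segment_subset (right_mem_leftHalfPlane _ _)
      (left_mem_leftHalfPlane _ _) hm₂,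
    (convex_leftHalfPlane _ _).segment_subset (right_mem_leftHalfPlane _ _)
      (by rw [mem_leftHalfPlane, ← orient_rotate]; exact (hpos p₂ hp₂ q hq r₂ hr₂).le) hm₁⟩

/-- The counterclockwise sides `(p, q)` and `(r, p)` at the vertex `p ∈ A ∩ B` of the triangles
`pqr` with `q ∈ B ∩ C` and `r ∈ C ∩ A`. -/
def cornerSides (A B C : Set (ℝ × ℝ)) : Set ((ℝ × ℝ) × (ℝ × ℝ)) :=
  (A ∩ B) ×ˢ (B ∩ C) ∪ (C ∩ A) ×ˢ (A ∩ B)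

lemma exists_mem_leftHalfPlane_pair (hA : Convex ℝ A) (hB : Convex ℝ B)
    (hpos : PositivelyOriented (A ∩ B) (B ∩ C) (C ∩ A))
    (hBC : (B ∩ C).Nonempty) (hCA : (C ∩ A).Nonempty) {l m : (ℝ × ℝ) × (ℝ × ℝ)}
    (hl : l ∈ cornerSides A B C) (hm : m ∈ cornerSides A B C) :
    ∃ x ∈ A ∩ B, x ∈ leftHalfPlane l.1 l.2 ∧ x ∈ leftHalfPlane m.1 m.2 := by
  obtain ⟨q, hq⟩ := hBC
  obtain ⟨r, hr⟩ := hCA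
  rcases hl with ⟨hl₁, hl₂⟩ | ⟨hl₁, hl₂⟩ <;> rcases hm with ⟨hm₁, hm₂⟩ | ⟨hm₁, hm₂⟩
  · exact exists_mem_leftHalfPlane_of_toBC_toBC hA hB hpos hl₁ hl₂ hm₁ hm₂ hr
  · exact exists_mem_leftHalfPlane_of_toBC_fromCA hA hB hpos hl₁ hl₂ hm₁ hm₂
  · obtain ⟨x, hx, hxm, hxl⟩ := exists_mem_leftHalfPlane_of_toBC_fromCA hA hB hpos hm₁ hm₂ hl₁ hl₂
    exact ⟨x, hx, hxl, hxm⟩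
  · exact exists_mem_leftHalfPlane_of_fromCA_fromCA hA hB hpos hl₁ hl₂ hm₁ hm₂ hq

lemma exists_mem_leftHalfPlane_triple (hpos : PositivelyOriented (A ∩ B) (B ∩ C) (C ∩ A))
    (hBC : (B ∩ C).Nonempty) (hCA : (C ∩ A).Nonempty) {l m n : (ℝ × ℝ) × (ℝ × ℝ)}
    (hl : l ∈ cornerSides A B C) (hm : m ∈ cornerSides A B C) (hn : n ∈ cornerSides A B C) :
    ∃ x ∈ A ∪ B, x ∈ leftHalfPlane l.1 l.2 ∧ x ∈ leftHalfPlane m.1 m.2 ∧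
      x ∈ leftHalfPlane n.1 n.2 := by
  obtain ⟨q, hq⟩ := hBC
  obtain ⟨r, hr⟩ := hCA
  have hR : ∀ s ∈ (A ∩ B) ×ˢ (B ∩ C), ∀ r ∈ C ∩ A, r ∈ leftHalfPlane s.1 s.2 :=
    fun s hs r hr => (hpos _ hs.1 _ hs.2 r hr).le
  have hQ : ∀ s ∈ (C ∩ A) ×ˢ (A ∩ B), ∀ q ∈ B ∩ C, q ∈ leftHalfPlane s.1 s.2 := by
    intro s hs q hq
    rw [mem_leftHalfPlane, ← orient_rotate]
    exact (hpos _ hs.2 q hq _ hs.1).le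
  have hl₁ := left_mem_leftHalfPlane l.1 l.2
  have hm₁ := left_mem_leftHalfPlane m.1 m.2
  have hn₁ := left_mem_leftHalfPlane n.1 n.2
  have hl₂ := right_mem_leftHalfPlane l.1 l.2
  have hm₂ := right_mem_leftHalfPlane m.1 m.2
  have hn₂ := right_mem_leftHalfPlane n.1 n.2
  rcases hl with hl | hl <;> rcases hm with hm | hm <;> rcases hn with hn | hn
  · exact ⟨r, .inl hr.2, hR l hl r hr, hR m hm r hr, hR n hn r hr⟩
  · exact ⟨n.1, .inl hn.1.2, hR l hl _ hn.1, hR m hm _ hn.1, hn₁⟩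
  · exact ⟨m.1, .inl hm.1.2, hR l hl _ hm.1, hm₁, hR n hn _ hm.1⟩
  · exact ⟨l.2, .inr hl.2.1, hl₂, hQ m hm _ hl.2, hQ n hn _ hl.2⟩
  · exact ⟨l.1, .inl hl.1.2, hl₁, hR m hm _ hl.1, hR n hn _ hl.1⟩
  · exact ⟨m.2, .inr hm.2.1, hQ l hl _ hm.2, hm₂, hQ n hn _ hm.2⟩
  · exact ⟨n.2, .inr hn.2.1, hQ l hl _ hn.2, hQ m hm _ hn.2, hn₂⟩
  · exact ⟨q, .inr hq.1, hQ l hl q hq, hQ m hm q hq, hQ n hn q hq⟩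

lemma exists_mem_forall_mem_leftHalfPlane (hAcp : IsCompact A) (hBcp : IsCompact B)
    (hAcv : Convex ℝ A) (hBcv : Convex ℝ B) (hAB : (A ∩ B).Nonempty) (hBC : (B ∩ C).Nonempty)
    (hCA : (C ∩ A).Nonempty) (hpos : PositivelyOriented (A ∩ B) (B ∩ C) (C ∩ A)) :
    ∃ x ∈ A ∩ B, ∀ s ∈ cornerSides A B C, x ∈ leftHalfPlane s.1 s.2 := by
  obtain ⟨ρ, hρ⟩ := (hAcp.union hBcp).isBounded.subset_closedBall (0 : ℝ × ℝ)
  -- the half-planes are cut down to a ball around `A ∪ B` to make them compact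
  let F : Option (cornerSides A B C) → Set (ℝ × ℝ) := fun o =>
    o.elim (A ∩ B) fun s => Metric.closedBall 0 ρ ∩ leftHalfPlane s.1.1 s.1.2
  have hF : ∀ a b c, (F a ∩ F b ∩ F c).Nonempty := by
    have hpair : ∀ s t : cornerSides A B C, ∃ x ∈ A ∩ B, x ∈ F s ∧ x ∈ F t := fun s t => by
      obtain ⟨x, hx, hs, ht⟩ := exists_mem_leftHalfPlane_pair hAcv hBcv hpos hBC hCA s.2 t.2
      exact ⟨x, hx, ⟨hρ (.inl hx.1), hs⟩, ⟨hρ (.inl hx.1), ht⟩⟩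
    rintro (_ | s) (_ | t) (_ | u)
    · obtain ⟨x, hx⟩ := hAB; exact ⟨x, ⟨hx, hx⟩, hx⟩
    · obtain ⟨x, hx, hu, -⟩ := hpair u u; exact ⟨x, ⟨hx, hx⟩, hu⟩
    · obtain ⟨x, hx, ht, -⟩ := hpair t t; exact ⟨x, ⟨hx, ht⟩, hx⟩
    · obtain ⟨x, hx, ht, hu⟩ := hpair t u; exact ⟨x, ⟨hx, ht⟩, hu⟩
    · obtain ⟨x, hx, hs, -⟩ := hpair s s; exact ⟨x, ⟨hs, hx⟩, hx⟩
    · obtain ⟨x, hx, hs, hu⟩ := hpair s u; exact ⟨x, ⟨hs, hx⟩, hu⟩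
    · obtain ⟨x, hx, hs, ht⟩ := hpair s t; exact ⟨x, ⟨hs, ht⟩, hx⟩
    · obtain ⟨x, hx, hs, ht, hu⟩ := exists_mem_leftHalfPlane_triple hpos hBC hCA s.2 t.2 u.2
      exact ⟨x, ⟨⟨hρ hx, hs⟩, ⟨hρ hx, ht⟩⟩, ⟨hρ hx, hu⟩⟩
  have hFcv : ∀ o, Convex ℝ (F o) := by
    rintro (_ | s)
    exacts [hAcv.inter hBcv, (convex_closedBall _ _).inter (convex_leftHalfPlane _ _)]
  have hFcp : ∀ o, IsCompact (F o) := by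
    rintro (_ | s)
    exacts [hAcp.inter_right hBcp.isClosed,
      (isCompact_closedBall _ _).inter_right (isClosed_leftHalfPlane _ _)]
  obtain ⟨x, hx⟩ := Convex.helly_theorem_compact' hFcv hFcp fun I hI =>
    nonempty_biInter_of_card_le_three hF (by simpa [Module.finrank_prod] using hI)
  rw [mem_iInter] at hx
  exact ⟨x, hx none, fun s hs => (hx (some ⟨s, hs⟩)).2⟩

lemma exists_mem_forall_mem_convexHull_of_positivelyOriented (hAcp : IsCompact A)
    (hBcp : IsCompact B) (hAcv : Convex ℝ A) (hBcv : Convex ℝ B) (hAB : (A ∩ B).Nonempty)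
    (hBC : (B ∩ C).Nonempty) (hCA : (C ∩ A).Nonempty)
    (hpos : PositivelyOriented (A ∩ B) (B ∩ C) (C ∩ A)) :
    ∃ x ∈ A ∩ B, ∀ p ∈ A ∩ B, ∀ q ∈ B ∩ C, ∀ r ∈ C ∩ A, x ∈ convexHull ℝ {p, q, r} := by
  obtain ⟨x, hx, hxs⟩ := exists_mem_forall_mem_leftHalfPlane hAcp hBcp hAcv hBcv hAB hBC hCA hpos
  refine ⟨x, hx, fun p hp q hq r hr => mem_convexHull_of_orient (hpos p hp q hq r hr)
    (hxs (p, q) (.inl ⟨hp, hq⟩)) ?_ (hxs (r, p) (.inr ⟨hr, hp⟩))⟩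
  rw [orient_rotate]
  exact (hpos x hx q hq r hr).le

lemma exists_mem_forall_mem_convexHull (hAcp : IsCompact A) (hBcp : IsCompact B)
    (hAcv : Convex ℝ A) (hBcv : Convex ℝ B) (hCcv : Convex ℝ C) (hAB : (A ∩ B).Nonempty)
    (hBC : (B ∩ C).Nonempty) (hCA : (C ∩ A).Nonempty) (htri : A ∩ B ∩ C = ∅) :
    ∃ x ∈ A ∩ B, ∀ p ∈ A ∩ B, ∀ q ∈ B ∩ C, ∀ r ∈ C ∩ A, x ∈ convexHull ℝ {p, q, r} := by
  rcases positivelyOriented_or hAcv hBcv hCcv htri with hpos | hneg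
  · exact exists_mem_forall_mem_convexHull_of_positivelyOriented hAcp hBcp hAcv hBcv hAB hBC hCA
      hpos
  -- with the opposite orientation, exchange the roles of `A` and `B`
  rw [inter_comm A B, inter_comm C A, inter_comm B C] at hneg
  obtain ⟨x, hx, hxM⟩ := exists_mem_forall_mem_convexHull_of_positivelyOriented hBcp hAcp hBcv
    hAcv (inter_comm A B ▸ hAB) (inter_comm C A ▸ hCA) (inter_comm B C ▸ hBC) hneg
  refine ⟨x, ⟨hx.2, hx.1⟩, fun p hp q hq r hr => ?_⟩
  rw [pair_comm]
  exact hxM p ⟨hp.2, hp.1⟩ r ⟨hr.2, hr.1⟩ q ⟨hq.2, hq.1⟩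

end Corner

/-- The Lid lemma: if compact convex sets `A, B, C ⊆ ℝ²` pairwise intersect but
have empty triple intersection, then there are points `p* ∈ A ∩ B`, `q* ∈ B ∩ C`,
`r* ∈ C ∩ A` contained in every compact convex lid `M`. -/
theorem lid_lemma (A B C : Set (ℝ × ℝ))
    (hAcp : IsCompact A) (hBcp : IsCompact B) (hCcp : IsCompact C)
    (hAcv : Convex ℝ A) (hBcv : Convex ℝ B) (hCcv : Convex ℝ C)
    (hAB : (A ∩ B).Nonempty) (hBC : (B ∩ C).Nonempty) (hCA : (C ∩ A).Nonempty)
    (htri : A ∩ B ∩ C = ∅) :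
    ∃ p q r : ℝ × ℝ, p ∈ A ∩ B ∧ q ∈ B ∩ C ∧ r ∈ C ∩ A ∧
      ∀ M : Set (ℝ × ℝ), IsCompact M → Convex ℝ M →
        (M ∩ (A ∩ B)).Nonempty → (M ∩ (B ∩ C)).Nonempty → (M ∩ (C ∩ A)).Nonempty →
        p ∈ M ∧ q ∈ M ∧ r ∈ M := by
  have hBCA : B ∩ C ∩ A = ∅ := by rwa [inter_comm, ← inter_assoc]
  have hCAB : C ∩ A ∩ B = ∅ := by rwa [inter_assoc, inter_comm]
  obtain ⟨p, hp, hpM⟩ :=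
    exists_mem_forall_mem_convexHull hAcp hBcp hAcv hBcv hCcv hAB hBC hCA htri
  obtain ⟨q, hq, hqM⟩ :=
    exists_mem_forall_mem_convexHull hBcp hCcp hBcv hCcv hAcv hBC hCA hAB hBCA
  obtain ⟨r, hr, hrM⟩ :=
    exists_mem_forall_mem_convexHull hCcp hAcp hCcv hAcv hBcv hCA hAB hBC hCAB
  refine ⟨p, q, r, hp, hq, hr, fun M _ hM ⟨p', hp'M, hp'⟩ ⟨q', hq'M, hq'⟩ ⟨r', hr'M, hr'⟩ => ?_⟩
  have hull : ∀ {a b c}, a ∈ M → b ∈ M → c ∈ M → convexHull ℝ {a, b, c} ⊆ M :=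
    fun ha hb hc => convexHull_min (by simp [insert_subset_iff, ha, hb, hc]) hM
  exact ⟨hull hp'M hq'M hr'M (hpM p' hp' q' hq' r' hr'),
    hull hq'M hr'M hp'M (hqM q' hq' r' hr' p' hp'), hull hr'M hp'M hq'M (hrM r' hr' p' hp' q' hq')⟩
end

section
/- Let A, B, C, A', B', C' be compact convex sets in ℝ². Suppose that for every choice of two sets X, Y from {A,B,C} (distinct) and one set Z from {A',B',C'}, the intersection X ∩ Y ∩ Z is nonempty. Then A ∩ B ∩ C ≠ ∅ or A' ∩ B' ∩ C' ≠ ∅. -/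
/-!
Lovász's argument for the colourful Helly theorem, with the lexicographic order of the plane in
place of a generic linear functional. For every rainbow choice `σ` of sets let `m σ` be the
lexicographic minimum of their intersection, and fix `σ` with `m σ` largest. Helly's theorem,
applied to the chosen sets together with the convex set of points lexicographically below `m σ`,
shows that `m σ` is already a lower bound for the intersection of the chosen sets of all colours
but one, `c`. Exchanging the set of colour `c` for any other set of that colour therefore keeps
the minimum at `m σ` (maximality bounds it from above), so `m σ` lies in every set of colour `c`.
The theorem is the case of the colour classes `{A, B, C}`, `{A, B, C}` and `{A', B', C'}`.
-/

open Module

theorem Convex.iInter_nonempty_of_iInter_ne_nonempty {ι 𝕜 E : Type*} [Fintype ι] [Field 𝕜]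
    [LinearOrder 𝕜] [IsStrictOrderedRing 𝕜] [AddCommGroup E] [Module 𝕜 E] [FiniteDimensional 𝕜 E]
    {F : ι → Set E} (hcard : finrank 𝕜 E + 1 < Fintype.card ι) (hconvex : ∀ i, Convex 𝕜 (F i))
    (hne : ∀ j, (⋂ i ≠ j, F i).Nonempty) : (⋂ i, F i).Nonempty := by
  classical
  have := Convex.helly_theorem' (s := Finset.univ) (fun i _ ↦ hconvex i) fun I _ hI ↦ by
    obtain ⟨j, -, hj⟩ := Finset.exists_mem_notMem_of_card_lt_card (s := I) (t := Finset.univ)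
      (by rw [Finset.card_univ]; omega)
    exact (hne j).mono (Set.biInter_subset_biInter_left fun i hi ↦ ne_of_mem_of_not_mem hi hj)
  simpa using this

instance Prod.Lex.posSMulStrictMono {𝕜 α β : Type*} [Zero 𝕜] [Preorder 𝕜] [SMul 𝕜 α] [SMul 𝕜 β]
    [Preorder α] [Preorder β] [PosSMulStrictMono 𝕜 α] [PosSMulStrictMono 𝕜 β] :
    PosSMulStrictMono 𝕜 (Lex (α × β)) where
  smul_lt_smul_of_pos_left c hc x y hxy := by
    rcases Prod.Lex.lt_iff.1 hxy with h | ⟨h, h'⟩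
    · exact Prod.Lex.lt_iff.2 (Or.inl (smul_lt_smul_of_pos_left h hc))
    · exact Prod.Lex.lt_iff.2 (Or.inr ⟨congrArg (c • ·) h, smul_lt_smul_of_pos_left h' hc⟩)

theorem convex_setOf_toLex_lt (x : ℝ × ℝ) : Convex ℝ {y : ℝ × ℝ | toLex y < toLex x} :=
  (convex_Iio (toLex x)).linear_preimage (toLexLinearEquiv ℝ (ℝ × ℝ)).toLinearMap

theorem IsCompact.exists_forall_toLex_le {S : Set (ℝ × ℝ)} (hS : IsCompact S) (hne : S.Nonempty) :
    ∃ x ∈ S, ∀ y ∈ S, toLex x ≤ toLex y := by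
  obtain ⟨x₀, hx₀S, hx₀⟩ := hS.exists_isMinOn hne continuous_fst.continuousOn
  have hcol : IsCompact (S ∩ {p | p.1 = x₀.1}) :=
    hS.inter_right (isClosed_eq continuous_fst continuous_const)
  obtain ⟨x, ⟨hxS, hx₁⟩, hx⟩ := hcol.exists_isMinOn ⟨x₀, hx₀S, rfl⟩ continuous_snd.continuousOn
  refine ⟨x, hxS, fun y hy ↦ Prod.Lex.le_iff.2 ?_⟩
  have hle : x₀.1 ≤ y.1 := hx₀ hy
  rcases hle.eq_or_lt with h | h
  · exact Or.inr ⟨hx₁.trans h, hx ⟨hy, h.symm⟩⟩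
  · exact Or.inl (hx₁ ▸ h)

theorem exists_forall_mem_iInter_ne_toLex_le {ι : Type*} [Fintype ι] (hι : 3 ≤ Fintype.card ι)
    {K : ι → Set (ℝ × ℝ)} (hK : ∀ i, Convex ℝ (K i)) (hne : (⋂ i, K i).Nonempty) {x : ℝ × ℝ}
    (hx : ∀ y ∈ ⋂ i, K i, toLex x ≤ toLex y) :
    ∃ j, ∀ y ∈ ⋂ i ≠ j, K i, toLex x ≤ toLex y := by
  by_contra! hbelow
  let G : Option ι → Set (ℝ × ℝ) := fun o ↦ o.elim {y | toLex y < toLex x} K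
  obtain ⟨p, hp⟩ : (⋂ o, G o).Nonempty := by
    refine Convex.iInter_nonempty_of_iInter_ne_nonempty (𝕜 := ℝ) ?_ ?_ ?_
    · simp only [finrank_prod, finrank_self, Fintype.card_option]; omega
    · rintro (_ | i)
      exacts [convex_setOf_toLex_lt x, hK i]
    · rintro (_ | j)
      · obtain ⟨p, hp⟩ := hne
        refine ⟨p, Set.mem_iInter₂.2 fun o ho ↦ ?_⟩
        obtain ⟨i, rfl⟩ := Option.ne_none_iff_exists'.1 ho
        exact Set.mem_iInter.1 hp i
      · obtain ⟨y, hy, hyx⟩ := hbelow j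
        refine ⟨y, Set.mem_iInter₂.2 fun o ho ↦ ?_⟩
        cases o with
        | none => exact hyx
        | some i => exact Set.mem_iInter₂.1 hy i (Option.some_injective _ |>.ne_iff.1 ho)
  have hpK : p ∈ ⋂ i, K i := Set.mem_iInter.2 fun i ↦ Set.mem_iInter.1 hp (some i)
  exact (hx p hpK).not_gt (Set.mem_iInter.1 hp none)

theorem colorful_helly_theorem_real_prod {ι : Type*} [Fintype ι] (hι : 3 ≤ Fintype.card ι)
    {κ : ι → Type*} [∀ c, Finite (κ c)] {F : (c : ι) → κ c → Set (ℝ × ℝ)}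
    (hcompact : ∀ c k, IsCompact (F c k)) (hconvex : ∀ c k, Convex ℝ (F c k))
    (hrainbow : ∀ σ : (c : ι) → κ c, (⋂ c, F c (σ c)).Nonempty) :
    ∃ c, (⋂ k, F c k).Nonempty := by
  classical
  rcases isEmpty_or_nonempty ((c : ι) → κ c) with hσ | hσ
  · obtain ⟨c, hc⟩ := isEmpty_pi.1 hσ
    exact ⟨c, by simp⟩
  have hι₀ : Nonempty ι := Fintype.card_pos_iff.1 (by omega)
  have hmin (σ : (c : ι) → κ c) : ∃ x ∈ ⋂ c, F c (σ c), ∀ y ∈ ⋂ c, F c (σ c), toLex x ≤ toLex y :=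
    IsCompact.exists_forall_toLex_le
      ((hcompact hι₀.some _).of_isClosed_subset (isClosed_iInter fun c ↦ (hcompact c _).isClosed)
        (Set.iInter_subset _ _)) (hrainbow σ)
  choose m hm hmin using hmin
  obtain ⟨σ, hσmax⟩ := Finite.exists_max fun σ ↦ toLex (m σ)
  obtain ⟨c, hc⟩ :=
    exists_forall_mem_iInter_ne_toLex_le hι (fun c ↦ hconvex c (σ c)) ⟨_, hm σ⟩ (hmin σ)
  refine ⟨c, m σ, Set.mem_iInter.2 fun k ↦ ?_⟩
  set τ := Function.update σ c k
  have hτ : m τ ∈ ⋂ c' ≠ c, F c' (σ c') := Set.mem_iInter₂.2 fun c' hc' ↦ by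
    simpa [τ, Function.update_of_ne hc'] using Set.mem_iInter.1 (hm τ) c'
  have : m τ = m σ := toLex_inj.1 ((hσmax τ).antisymm (hc _ hτ))
  simpa [τ, this] using Set.mem_iInter.1 (hm τ) c

/-- Colorful-Helly consequence: if every mixed triple (two distinct sets among
`{A,B,C}` and one set among `{A',B',C'}`) has a common point, then
`A ∩ B ∩ C ≠ ∅` or `A' ∩ B' ∩ C' ≠ ∅`. -/
theorem colorful_mixed_triples (A B C A' B' C' : Set (ℝ × ℝ))
    (hAcp : IsCompact A) (hBcp : IsCompact B) (hCcp : IsCompact C)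
    (hA'cp : IsCompact A') (hB'cp : IsCompact B') (hC'cp : IsCompact C')
    (hAcv : Convex ℝ A) (hBcv : Convex ℝ B) (hCcv : Convex ℝ C)
    (hA'cv : Convex ℝ A') (hB'cv : Convex ℝ B') (hC'cv : Convex ℝ C')
    (hmix : ∀ Z ∈ ({A', B', C'} : Set (Set (ℝ × ℝ))),
      (A ∩ B ∩ Z).Nonempty ∧ (B ∩ C ∩ Z).Nonempty ∧ (C ∩ A ∩ Z).Nonempty) :
    (A ∩ B ∩ C).Nonempty ∨ (A' ∩ B' ∩ C').Nonempty := by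
  let F : Fin 3 → Fin 3 → Set (ℝ × ℝ) := ![![A, B, C], ![A, B, C], ![A', B', C']]
  have hpair : ∀ i j k, (F 0 i ∩ F 1 j ∩ F 2 k).Nonempty := by
    intro i j k
    obtain ⟨hAB, hBC, hCA⟩ := hmix (F 2 k) (by fin_cases k <;> simp [F])
    -- for `i = j` any of the three pairs containing `F 0 i` will do
    fin_cases i <;> fin_cases j <;>
      first
      | exact hAB.mono (by rintro p ⟨⟨_, _⟩, hz⟩; exact ⟨⟨‹_›, ‹_›⟩, hz⟩)
      | exact hBC.mono (by rintro p ⟨⟨_, _⟩, hz⟩; exact ⟨⟨‹_›, ‹_›⟩, hz⟩)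
      | exact hCA.mono (by rintro p ⟨⟨_, _⟩, hz⟩; exact ⟨⟨‹_›, ‹_›⟩, hz⟩)
  obtain ⟨c, p, hp⟩ := colorful_helly_theorem_real_prod (F := F) (by simp)
    (fun c k ↦ by fin_cases c <;> fin_cases k <;> assumption)
    (fun c k ↦ by fin_cases c <;> fin_cases k <;> assumption)
    (fun σ ↦ by
      obtain ⟨p, ⟨h0, h1⟩, h2⟩ := hpair (σ 0) (σ 1) (σ 2)
      exact ⟨p, Set.mem_iInter.2 fun c ↦ by fin_cases c <;> assumption⟩)
  have hpc : ∀ k, p ∈ F c k := Set.mem_iInter.1 hp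
  fin_cases c
  · exact Or.inl ⟨p, ⟨hpc 0, hpc 1⟩, hpc 2⟩
  · exact Or.inl ⟨p, ⟨hpc 0, hpc 1⟩, hpc 2⟩
  · exact Or.inr ⟨p, ⟨hpc 0, hpc 1⟩, hpc 2⟩
end

section
/- Let A, B, C, A', B' be compact convex sets in ℝ² with A ∩ B ∩ C = ∅ and A' ∩ B' ∩ C = ∅. Then there exist two distinct sets X, Y from {A,B,C} and one set Z from {A',B'} such that X ∩ Y ∩ Z = ∅. -/
private lemma cross_line (f : (ℝ × ℝ) →L[ℝ] ℝ) {P Q : ℝ × ℝ} {w : ℝ}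
    (h1 : f P ≤ w) (h2 : w ≤ f Q) : ∃ k ∈ segment ℝ P Q, f k = w := by
  rcases eq_or_lt_of_le (h1.trans h2) with h | h
  · exact ⟨P, left_mem_segment ℝ P Q, le_antisymm h1 (by linarith [h.le])⟩
  · have hQP : 0 < f Q - f P := by linarith
    set t := (w - f P) / (f Q - f P) with htdef
    have ht0 : 0 ≤ t := div_nonneg (by linarith) hQP.le
    have ht1 : t ≤ 1 := by rw [htdef, div_le_one hQP]; linarith
    have hmul : t * (f Q - f P) = w - f P := by
      rw [htdef]; exact div_mul_cancel₀ _ (ne_of_gt hQP)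
    refine ⟨(1 - t) • P + t • Q, ⟨1 - t, t, by linarith, ht0, by ring, rfl⟩, ?_⟩
    have hfe : f ((1 - t) • P + t • Q) = (1 - t) * f P + t * f Q := by
      rw [map_add, map_smul, map_smul, smul_eq_mul, smul_eq_mul]
    rw [hfe]
    linear_combination hmul

private lemma inj2 {a b : ℝ} (hab : ¬(a = 0 ∧ b = 0)) {p s : ℝ × ℝ}
    (h1 : a * p.1 + b * p.2 = a * s.1 + b * s.2)
    (h2 : -b * p.1 + a * p.2 = -b * s.1 + a * s.2) : p = s := by
  have hpos : a ^ 2 + b ^ 2 ≠ 0 := by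
    intro h
    have ha2 : a ^ 2 = 0 := by nlinarith [sq_nonneg a, sq_nonneg b]
    have hb2 : b ^ 2 = 0 := by nlinarith [sq_nonneg a, sq_nonneg b]
    exact hab ⟨pow_eq_zero_iff (two_ne_zero) |>.mp ha2,
      pow_eq_zero_iff (two_ne_zero) |>.mp hb2⟩
  have e1 : (p.1 - s.1) * (a ^ 2 + b ^ 2) = 0 := by linear_combination a * h1 - b * h2
  have e2 : (p.2 - s.2) * (a ^ 2 + b ^ 2) = 0 := by linear_combination b * h1 + a * h2
  have f1 : p.1 = s.1 := by
    rcases mul_eq_zero.mp e1 with h | h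
    · linarith [sub_eq_zero.mp h]
    · exact absurd h hpos
  have f2 : p.2 = s.2 := by
    rcases mul_eq_zero.mp e2 with h | h
    · linarith [sub_eq_zero.mp h]
    · exact absurd h hpos
  exact Prod.ext_iff.mpr ⟨f1, f2⟩

private lemma seg_param_aux {a b w : ℝ} (hab : ¬(a = 0 ∧ b = 0)) {p q s : ℝ × ℝ}
    (hp : a * p.1 + b * p.2 = w) (hq : a * q.1 + b * q.2 = w) (hs : a * s.1 + b * s.2 = w)
    (hl : -b * p.1 + a * p.2 ≤ -b * s.1 + a * s.2)
    (hr : -b * s.1 + a * s.2 ≤ -b * q.1 + a * q.2) : s ∈ segment ℝ p q := by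
  rcases eq_or_lt_of_le (hl.trans hr) with h | h
  · have hgs : -b * p.1 + a * p.2 = -b * s.1 + a * s.2 := le_antisymm hl (by linarith [h.le])
    have hps : p = s := inj2 hab (by rw [hp, hs]) hgs
    rw [← hps]
    exact left_mem_segment ℝ p q
  · have hd : (0:ℝ) < (-b * q.1 + a * q.2) - (-b * p.1 + a * p.2) := by linarith
    set t := ((-b * s.1 + a * s.2) - (-b * p.1 + a * p.2)) /
      ((-b * q.1 + a * q.2) - (-b * p.1 + a * p.2)) with htdef
    have ht0 : 0 ≤ t := div_nonneg (by linarith) hd.le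
    have ht1 : t ≤ 1 := by rw [htdef, div_le_one hd]; linarith
    have hmul : t * ((-b * q.1 + a * q.2) - (-b * p.1 + a * p.2)) =
        (-b * s.1 + a * s.2) - (-b * p.1 + a * p.2) := by
      rw [htdef]; exact div_mul_cancel₀ _ (ne_of_gt hd)
    have hs1 : s = ((1 - t) * p.1 + t * q.1, (1 - t) * p.2 + t * q.2) := by
      refine inj2 hab ?_ ?_
      · show a * s.1 + b * s.2 = a * ((1 - t) * p.1 + t * q.1) + b * ((1 - t) * p.2 + t * q.2)
        linear_combination hs - (1 - t) * hp - t * hq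
      · show -b * s.1 + a * s.2 = -b * ((1 - t) * p.1 + t * q.1) + a * ((1 - t) * p.2 + t * q.2)
        linear_combination -hmul
    refine ⟨1 - t, t, by linarith, ht0, by ring, ?_⟩
    rw [hs1]
    exact Prod.ext_iff.mpr ⟨by simp, by simp⟩

private lemma seg_param {a b w : ℝ} (hab : ¬(a = 0 ∧ b = 0)) {p q s : ℝ × ℝ}
    (hp : a * p.1 + b * p.2 = w) (hq : a * q.1 + b * q.2 = w) (hs : a * s.1 + b * s.2 = w)
    (h : (-b * p.1 + a * p.2 ≤ -b * s.1 + a * s.2 ∧ -b * s.1 + a * s.2 ≤ -b * q.1 + a * q.2) ∨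
      (-b * q.1 + a * q.2 ≤ -b * s.1 + a * s.2 ∧ -b * s.1 + a * s.2 ≤ -b * p.1 + a * p.2)) :
    s ∈ segment ℝ p q := by
  rcases h with ⟨hl, hr⟩ | ⟨hl, hr⟩
  · exact seg_param_aux hab hp hq hs hl hr
  · rw [segment_symm]
    exact seg_param_aux hab hq hp hs hl hr

private lemma six_cases (α β γ δ : ℝ) :
    (α ≤ γ ∧ γ ≤ β ∨ β ≤ γ ∧ γ ≤ α) ∨
    (α ≤ δ ∧ δ ≤ β ∨ β ≤ δ ∧ δ ≤ α) ∨
    (γ ≤ α ∧ α ≤ δ ∨ δ ≤ α ∧ α ≤ γ) ∨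
    (γ ≤ β ∧ β ≤ δ ∨ δ ≤ β ∧ β ≤ γ) ∨
    (δ ≤ α ∧ α ≤ β ∨ β ≤ α ∧ α ≤ δ) ∨
    (γ ≤ β ∧ β ≤ α ∨ α ≤ β ∧ β ≤ γ) := by
  rcases le_total α β with h | h <;>
  rcases le_total γ α with h1 | h1 <;>
  rcases le_total γ β with h2 | h2 <;>
  rcases le_total δ α with h3 | h3 <;>
  rcases le_total δ β with h4 | h4 <;>
  tauto

/-- Proposition (H2): if `A ∩ B ∩ C = ∅` and `A' ∩ B' ∩ C = ∅` for compact
convex planar sets, then some mixed triple (two distinct sets among `{A,B,C}`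
and one among `{A',B'}`) has empty intersection. -/
theorem blue_edges_sharing_vertex (A B C A' B' : Set (ℝ × ℝ))
    (hAcp : IsCompact A) (hBcp : IsCompact B) (hCcp : IsCompact C)
    (hA'cp : IsCompact A') (hB'cp : IsCompact B')
    (hAcv : Convex ℝ A) (hBcv : Convex ℝ B) (hCcv : Convex ℝ C)
    (hA'cv : Convex ℝ A') (hB'cv : Convex ℝ B')
    (h1 : A ∩ B ∩ C = ∅) (h2 : A' ∩ B' ∩ C = ∅) :
    ∃ Z ∈ ({A', B'} : Set (Set (ℝ × ℝ))),
      A ∩ B ∩ Z = ∅ ∨ B ∩ C ∩ Z = ∅ ∨ C ∩ A ∩ Z = ∅ := by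
  by_contra hcon
  push_neg at hcon
  obtain ⟨hne1, hne2, hne3⟩ := hcon A' (Set.mem_insert _ _)
  obtain ⟨hne1', hne2', hne3'⟩ := hcon B' (Set.mem_insert_of_mem _ rfl)
  obtain ⟨x1, hx1⟩ := hne1
  obtain ⟨x2, hx2⟩ := hne2
  obtain ⟨x3, hx3⟩ := hne3
  obtain ⟨y1, hy1⟩ := hne1'
  obtain ⟨y2, hy2⟩ := hne2'
  obtain ⟨y3, hy3⟩ := hne3'
  -- strictly separate A' ∩ C from B' ∩ C
  have hdisj : Disjoint (A' ∩ C) (B' ∩ C) := by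
    rw [Set.disjoint_left]
    rintro z ⟨hzA', hzC⟩ ⟨hzB', _⟩
    exact Set.eq_empty_iff_forall_notMem.mp h2 z ⟨⟨hzA', hzB'⟩, hzC⟩
  obtain ⟨f, u, v, hfu, huv, hfv⟩ :=
    geometric_hahn_banach_compact_closed (hA'cv.inter hCcv)
      (hA'cp.inter_right hCcp.isClosed) (hB'cv.inter hCcv)
      (hB'cp.inter_right hCcp.isClosed).isClosed hdisj
  set w := (u + v) / 2 with hw
  have huw : u < w := by rw [hw]; linarith
  have hwv : w < v := by rw [hw]; linarith
  have hfx2 : f x2 < u := hfu x2 ⟨hx2.2, hx2.1.2⟩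
  have hfx3 : f x3 < u := hfu x3 ⟨hx3.2, hx3.1.1⟩
  have hfy2 : v < f y2 := hfv y2 ⟨hy2.2, hy2.1.2⟩
  have hfy3 : v < f y3 := hfv y3 ⟨hy3.2, hy3.1.1⟩
  have fcomb : ∀ {p q : ℝ × ℝ}, f p = w → f q = w → ∀ c ∈ segment ℝ p q, f c = w := by
    rintro p q hp hq c ⟨s, t, hs, ht, hst, rfl⟩
    rw [map_add, map_smul, map_smul, smul_eq_mul, smul_eq_mul, hp, hq]
    linear_combination w * hst
  -- crossing points in B ∩ C and A ∩ C on the line f = w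
  obtain ⟨k2, hk2seg, hfk2⟩ := cross_line f (le_of_lt (hfx2.trans huw)) (le_of_lt (hwv.trans hfy2))
  obtain ⟨k3, hk3seg, hfk3⟩ := cross_line f (le_of_lt (hfx3.trans huw)) (le_of_lt (hwv.trans hfy3))
  have hk2BC : k2 ∈ B ∩ C :=
    (hBcv.inter hCcv).segment_subset ⟨hx2.1.1, hx2.1.2⟩ ⟨hy2.1.1, hy2.1.2⟩ hk2seg
  have hk3AC : k3 ∈ A ∩ C :=
    (hAcv.inter hCcv).segment_subset ⟨hx3.1.2, hx3.1.1⟩ ⟨hy3.1.2, hy3.1.1⟩ hk3seg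
  -- a point of A and a point of B on the line, whose segment avoids C
  obtain ⟨P3, P2, hP3A, hP2B, hfP3, hfP2, hPC⟩ :
      ∃ P3 P2 : ℝ × ℝ, P3 ∈ A ∧ P2 ∈ B ∧ f P3 = w ∧ f P2 = w ∧
        ∀ c ∈ segment ℝ P3 P2, c ∉ C := by
    rcases le_or_gt w (f x1) with hc1 | hc1
    · obtain ⟨P3, hP3seg, hP3w⟩ := cross_line f (le_of_lt (hfx3.trans huw)) hc1
      obtain ⟨P2, hP2seg, hP2w⟩ := cross_line f (le_of_lt (hfx2.trans huw)) hc1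
      have hP3' : P3 ∈ A ∩ A' :=
        (hAcv.inter hA'cv).segment_subset ⟨hx3.1.2, hx3.2⟩ ⟨hx1.1.1, hx1.2⟩ hP3seg
      have hP2' : P2 ∈ B ∩ A' :=
        (hBcv.inter hA'cv).segment_subset ⟨hx2.1.1, hx2.2⟩ ⟨hx1.1.2, hx1.2⟩ hP2seg
      refine ⟨P3, P2, hP3'.1, hP2'.1, hP3w, hP2w, ?_⟩
      intro c hc hcC
      have hcA' : c ∈ A' := hA'cv.segment_subset hP3'.2 hP2'.2 hc
      have hcw : f c = w := fcomb hP3w hP2w c hc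
      have := hfu c ⟨hcA', hcC⟩
      linarith
    · rcases le_or_gt (f y1) w with hc2 | hc2
      · obtain ⟨P3, hP3seg, hP3w⟩ := cross_line f hc2 (le_of_lt (hwv.trans hfy3))
        obtain ⟨P2, hP2seg, hP2w⟩ := cross_line f hc2 (le_of_lt (hwv.trans hfy2))
        have hP3' : P3 ∈ A ∩ B' :=
          (hAcv.inter hB'cv).segment_subset ⟨hy1.1.1, hy1.2⟩ ⟨hy3.1.2, hy3.2⟩ hP3seg
        have hP2' : P2 ∈ B ∩ B' :=
          (hBcv.inter hB'cv).segment_subset ⟨hy1.1.2, hy1.2⟩ ⟨hy2.1.1, hy2.2⟩ hP2seg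
        refine ⟨P3, P2, hP3'.1, hP2'.1, hP3w, hP2w, ?_⟩
        intro c hc hcC
        have hcB' : c ∈ B' := hB'cv.segment_subset hP3'.2 hP2'.2 hc
        have hcw : f c = w := fcomb hP3w hP2w c hc
        have := hfv c ⟨hcB', hcC⟩
        linarith
      · obtain ⟨r, hrseg, hrw⟩ := cross_line f hc1.le hc2.le
        have hrAB : r ∈ A ∩ B :=
          (hAcv.inter hBcv).segment_subset ⟨hx1.1.1, hx1.1.2⟩ ⟨hy1.1.1, hy1.1.2⟩ hrseg
        refine ⟨r, r, hrAB.1, hrAB.2, hrw, hrw, ?_⟩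
        intro c hc hcC
        rw [segment_same, Set.mem_singleton_iff] at hc
        subst hc
        exact Set.eq_empty_iff_forall_notMem.mp h1 c ⟨hrAB, hcC⟩
  -- coordinates
  have hf : ∀ z : ℝ × ℝ, f z = f (1, 0) * z.1 + f (0, 1) * z.2 := by
    intro z
    have hz : z = z.1 • ((1:ℝ), (0:ℝ)) + z.2 • ((0:ℝ), (1:ℝ)) :=
      Prod.ext_iff.mpr ⟨by simp, by simp⟩
    conv_lhs => rw [hz]
    rw [map_add, map_smul, map_smul, smul_eq_mul, smul_eq_mul]
    ring
  have hab : ¬(f ((1:ℝ), (0:ℝ)) = 0 ∧ f ((0:ℝ), (1:ℝ)) = 0) := by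
    rintro ⟨ha0, hb0⟩
    have h1' := hf x2
    have h2' := hf y2
    rw [ha0, hb0] at h1' h2'
    simp at h1' h2'
    linarith
  have ek3 : f (1, 0) * k3.1 + f (0, 1) * k3.2 = w := by rw [← hf k3]; exact hfk3
  have ek2 : f (1, 0) * k2.1 + f (0, 1) * k2.2 = w := by rw [← hf k2]; exact hfk2
  have eP3 : f (1, 0) * P3.1 + f (0, 1) * P3.2 = w := by rw [← hf P3]; exact hfP3
  have eP2 : f (1, 0) * P2.1 + f (0, 1) * P2.2 = w := by rw [← hf P2]; exact hfP2
  rcases six_cases (-f (0, 1) * k3.1 + f (1, 0) * k3.2) (-f (0, 1) * k2.1 + f (1, 0) * k2.2)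
      (-f (0, 1) * P3.1 + f (1, 0) * P3.2) (-f (0, 1) * P2.1 + f (1, 0) * P2.2)
    with h | h | h | h | h | h
  · exact hPC P3 (left_mem_segment ℝ P3 P2)
      ((hCcv.segment_subset hk3AC.2 hk2BC.2) (seg_param hab ek3 ek2 eP3 h))
  · exact hPC P2 (right_mem_segment ℝ P3 P2)
      ((hCcv.segment_subset hk3AC.2 hk2BC.2) (seg_param hab ek3 ek2 eP2 h))
  · exact hPC k3 (seg_param hab eP3 eP2 ek3 h) hk3AC.2
  · exact hPC k2 (seg_param hab eP3 eP2 ek2 h) hk2BC.2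
  · have hk3B : k3 ∈ B := (hBcv.segment_subset hP2B hk2BC.1) (seg_param hab eP2 ek2 ek3 h)
    exact Set.eq_empty_iff_forall_notMem.mp h1 k3 ⟨⟨hk3AC.1, hk3B⟩, hk3AC.2⟩
  · have hk2A : k2 ∈ A := (hAcv.segment_subset hP3A hk3AC.1) (seg_param hab eP3 ek3 ek2 h)
    exact Set.eq_empty_iff_forall_notMem.mp h1 k2 ⟨⟨hk2A, hk2BC.1⟩, hk2BC.2⟩
end

section
/- There do not exist five compact convex sets A₁,…,A₅ in ℝ² together with three triples e₁ = {A₁,A₂,A₃}, e₂ = {A₃,A₄,A₅}, e₃ = {A₅,A₁,A₂'} forming three pairwise intersecting 3-element index sets with no common index, such that each of these three triples has empty intersection while every other triple of the five sets has nonempty intersection. Formally: if e₁, e₂, e₃ are 3-element subsets of a 5-element family of compact convex sets in ℝ², pairwise intersecting as sets of indices but with empty common index, then it is impossible that exactly the triples e₁, e₂, e₃ have empty intersection while all other 3-element subfamilies have a common point. -/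
set_option maxRecDepth 1000000
set_option maxHeartbeats 1000000

/- ### Combinatorial part -/

private lemma comb0 : ∀ t₁ t₂ t₃ : Finset (Fin 5), t₁.card = 3 → t₂.card = 3 → t₃.card = 3 →
    (t₂ ∩ t₃).Nonempty → (t₁ ∩ t₃).Nonempty →
    t₁ ∩ t₂ ∩ t₃ = ∅ →
    (t₁ ∩ t₂).card = 2 ∨ (t₂ ∩ t₃).card = 2 ∨ (t₁ ∩ t₃).card = 2 := by decide

private lemma extract (t₁ t₂ t₃ : Finset (Fin 5))
    (hc₁ : t₁.card = 3) (hc₂ : t₂.card = 3) (hc₃ : t₃.card = 3)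
    (h23 : (t₂ ∩ t₃).Nonempty) (h13 : (t₁ ∩ t₃).Nonempty)
    (hcom : t₁ ∩ t₂ ∩ t₃ = ∅) (h2 : (t₁ ∩ t₂).card = 2) :
    ∃ a b x y z : Fin 5,
      (a ≠ b ∧ a ≠ x ∧ a ≠ y ∧ a ≠ z ∧ b ≠ x ∧ b ≠ y ∧ b ≠ z ∧ x ≠ y ∧ x ≠ z ∧ y ≠ z) ∧
      ∀ s : Finset (Fin 5), (s = t₁ ∨ s = t₂ ∨ s = t₃) ↔
        (s = {a,b,x} ∨ s = {a,b,y} ∨ s = {x,y,z}) := by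
  obtain ⟨a, b, hab, hI⟩ := Finset.card_eq_two.mp h2
  have haI : a ∈ t₁ ∩ t₂ := by rw [hI]; simp
  have hbI : b ∈ t₁ ∩ t₂ := by rw [hI]; simp
  have hat₁ : a ∈ t₁ := (Finset.mem_inter.mp haI).1
  have hat₂ : a ∈ t₂ := (Finset.mem_inter.mp haI).2
  have hbt₁ : b ∈ t₁ := (Finset.mem_inter.mp hbI).1
  have hbt₂ : b ∈ t₂ := (Finset.mem_inter.mp hbI).2
  have hcardab : ({a,b} : Finset (Fin 5)).card = 2 := by
    rw [Finset.card_insert_of_notMem (by simp [hab]), Finset.card_singleton]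
  -- third element of t₁
  have hsub₁ : ({a,b} : Finset (Fin 5)) ⊆ t₁ := by
    intro i hi; simp at hi; rcases hi with rfl | rfl; exacts [hat₁, hbt₁]
  have hsd₁ : (t₁ \ {a,b}).card = 1 := by
    rw [Finset.card_sdiff_of_subset hsub₁, hc₁, hcardab]
  obtain ⟨x, hx⟩ := Finset.card_eq_one.mp hsd₁
  have hxmem : x ∈ t₁ \ ({a,b} : Finset (Fin 5)) := by rw [hx]; simp
  have hxt₁ : x ∈ t₁ := (Finset.mem_sdiff.mp hxmem).1
  have hxab : x ∉ ({a,b} : Finset (Fin 5)) := (Finset.mem_sdiff.mp hxmem).2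
  have ht₁ : t₁ = {a,b,x} := by
    apply Finset.ext; intro i
    simp only [Finset.mem_insert, Finset.mem_singleton]
    constructor
    · intro hi
      by_cases h : i ∈ ({a,b} : Finset (Fin 5))
      · simp at h; tauto
      · have : i ∈ t₁ \ ({a,b} : Finset (Fin 5)) := Finset.mem_sdiff.mpr ⟨hi, h⟩
        rw [hx] at this; simp at this; tauto
    · rintro (rfl | rfl | rfl); exacts [hat₁, hbt₁, hxt₁]
  -- third element of t₂
  have hsub₂ : ({a,b} : Finset (Fin 5)) ⊆ t₂ := by
    intro i hi; simp at hi; rcases hi with rfl | rfl; exacts [hat₂, hbt₂]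
  have hsd₂ : (t₂ \ {a,b}).card = 1 := by
    rw [Finset.card_sdiff_of_subset hsub₂, hc₂, hcardab]
  obtain ⟨y, hy⟩ := Finset.card_eq_one.mp hsd₂
  have hymem : y ∈ t₂ \ ({a,b} : Finset (Fin 5)) := by rw [hy]; simp
  have hyt₂ : y ∈ t₂ := (Finset.mem_sdiff.mp hymem).1
  have hyab : y ∉ ({a,b} : Finset (Fin 5)) := (Finset.mem_sdiff.mp hymem).2
  have ht₂ : t₂ = {a,b,y} := by
    apply Finset.ext; intro i
    simp only [Finset.mem_insert, Finset.mem_singleton]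
    constructor
    · intro hi
      by_cases h : i ∈ ({a,b} : Finset (Fin 5))
      · simp at h; tauto
      · have : i ∈ t₂ \ ({a,b} : Finset (Fin 5)) := Finset.mem_sdiff.mpr ⟨hi, h⟩
        rw [hy] at this; simp at this; tauto
    · rintro (rfl | rfl | rfl); exacts [hat₂, hbt₂, hyt₂]
  simp only [Finset.mem_insert, Finset.mem_singleton] at hxab hyab
  push_neg at hxab hyab
  -- x ≠ y
  have hxy : x ≠ y := by
    rintro rfl
    have : t₁ = t₂ := by rw [ht₁, ht₂]
    rw [this, Finset.inter_self, hc₂] at h2; omega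
  -- a,b not in t₃
  have hat₃ : a ∉ t₃ := by
    intro h
    have : a ∈ t₁ ∩ t₂ ∩ t₃ := Finset.mem_inter.mpr ⟨haI, h⟩
    rw [hcom] at this; simp at this
  have hbt₃ : b ∉ t₃ := by
    intro h
    have : b ∈ t₁ ∩ t₂ ∩ t₃ := Finset.mem_inter.mpr ⟨hbI, h⟩
    rw [hcom] at this; simp at this
  -- x, y ∈ t₃
  have hxt₃ : x ∈ t₃ := by
    obtain ⟨w, hw⟩ := h13
    have hw₁ : w ∈ t₁ := (Finset.mem_inter.mp hw).1
    have hw₃ : w ∈ t₃ := (Finset.mem_inter.mp hw).2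
    rw [ht₁] at hw₁; simp only [Finset.mem_insert, Finset.mem_singleton] at hw₁
    rcases hw₁ with rfl | rfl | rfl
    · exact absurd hw₃ hat₃
    · exact absurd hw₃ hbt₃
    · exact hw₃
  have hyt₃ : y ∈ t₃ := by
    obtain ⟨w, hw⟩ := h23
    have hw₂ : w ∈ t₂ := (Finset.mem_inter.mp hw).1
    have hw₃ : w ∈ t₃ := (Finset.mem_inter.mp hw).2
    rw [ht₂] at hw₂; simp only [Finset.mem_insert, Finset.mem_singleton] at hw₂
    rcases hw₂ with rfl | rfl | rfl
    · exact absurd hw₃ hat₃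
    · exact absurd hw₃ hbt₃
    · exact hw₃
  -- third element of t₃
  have hcardxy : ({x,y} : Finset (Fin 5)).card = 2 := by
    rw [Finset.card_insert_of_notMem (by simp [hxy]), Finset.card_singleton]
  have hsub₃ : ({x,y} : Finset (Fin 5)) ⊆ t₃ := by
    intro i hi; simp at hi; rcases hi with rfl | rfl; exacts [hxt₃, hyt₃]
  have hsd₃ : (t₃ \ {x,y}).card = 1 := by
    rw [Finset.card_sdiff_of_subset hsub₃, hc₃, hcardxy]
  obtain ⟨z, hz⟩ := Finset.card_eq_one.mp hsd₃
  have hzmem : z ∈ t₃ \ ({x,y} : Finset (Fin 5)) := by rw [hz]; simp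
  have hzt₃ : z ∈ t₃ := (Finset.mem_sdiff.mp hzmem).1
  have hzxy : z ∉ ({x,y} : Finset (Fin 5)) := (Finset.mem_sdiff.mp hzmem).2
  simp only [Finset.mem_insert, Finset.mem_singleton] at hzxy
  push_neg at hzxy
  have ht₃ : t₃ = {x,y,z} := by
    apply Finset.ext; intro i
    simp only [Finset.mem_insert, Finset.mem_singleton]
    constructor
    · intro hi
      by_cases h : i ∈ ({x,y} : Finset (Fin 5))
      · simp at h; tauto
      · have : i ∈ t₃ \ ({x,y} : Finset (Fin 5)) := Finset.mem_sdiff.mpr ⟨hi, h⟩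
        rw [hz] at this; simp at this; tauto
    · rintro (rfl | rfl | rfl); exacts [hxt₃, hyt₃, hzt₃]
  refine ⟨a, b, x, y, z,
    ⟨hab, (Ne.symm hxab.1), (Ne.symm hyab.1), fun h => hat₃ (h ▸ hzt₃),
     (Ne.symm hxab.2), (Ne.symm hyab.2), fun h => hbt₃ (h ▸ hzt₃),
     hxy, (Ne.symm hzxy.1), (Ne.symm hzxy.2)⟩, ?_⟩
  intro s; rw [ht₁, ht₂, ht₃]

/- ### Geometric part -/

private def ff (α β : ℝ) (w : ℝ × ℝ) : ℝ := α * w.1 + β * w.2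
private def gg (α β : ℝ) (w : ℝ × ℝ) : ℝ := -β * w.1 + α * w.2

private lemma ff_comb (α β a b : ℝ) (P Q : ℝ × ℝ) :
    ff α β (a • P + b • Q) = a * ff α β P + b * ff α β Q := by
  simp [ff, Prod.fst_add, Prod.snd_add, Prod.smul_fst, Prod.smul_snd, smul_eq_mul]
  ring

private lemma gg_comb (α β a b : ℝ) (P Q : ℝ × ℝ) :
    gg α β (a • P + b • Q) = a * gg α β P + b * gg α β Q := by
  simp [gg, Prod.fst_add, Prod.snd_add, Prod.smul_fst, Prod.smul_snd, smul_eq_mul]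
  ring

private lemma pt_inj (α β : ℝ) (hne : ¬(α = 0 ∧ β = 0)) {P Q : ℝ × ℝ}
    (h1 : ff α β P = ff α β Q) (h2 : gg α β P = gg α β Q) : P = Q := by
  have hs : α ^ 2 + β ^ 2 ≠ 0 := by
    rcases not_and_or.mp hne with h | h <;> positivity
  simp only [ff, gg] at h1 h2
  have e1 : (α ^ 2 + β ^ 2) * (P.1 - Q.1) = 0 := by linear_combination α * h1 - β * h2
  have e2 : (α ^ 2 + β ^ 2) * (P.2 - Q.2) = 0 := by linear_combination β * h1 + α * h2
  have p1 : P.1 = Q.1 := by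
    rcases mul_eq_zero.mp e1 with h | h
    · exact absurd h hs
    · linarith
  have p2 : P.2 = Q.2 := by
    rcases mul_eq_zero.mp e2 with h | h
    · exact absurd h hs
    · linarith
  exact Prod.ext_iff.mpr ⟨p1, p2⟩

private lemma cross_s6 (α β c : ℝ) (P Q : ℝ × ℝ) (h1 : ff α β P < c) (h2 : c < ff α β Q) :
    ∃ M ∈ segment ℝ P Q, ff α β M = c := by
  set θ := (c - ff α β P) / (ff α β Q - ff α β P) with hθ
  have hd : 0 < ff α β Q - ff α β P := by linarith
  have hθ0 : 0 ≤ θ := div_nonneg (by linarith) (by linarith)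
  have hθ1 : θ ≤ 1 := by rw [div_le_one hd]; linarith
  refine ⟨(1 - θ) • P + θ • Q, ⟨1 - θ, θ, by linarith, hθ0, by ring, rfl⟩, ?_⟩
  rw [ff_comb]
  have : θ * (ff α β Q - ff α β P) = c - ff α β P := by
    rw [hθ]; field_simp
  nlinarith [this]

private lemma seg_exists_aux (α β c w : ℝ) (P Q : ℝ × ℝ)
    (hP : ff α β P = c) (hQ : ff α β Q = c)
    (h1 : gg α β P ≤ w) (h2 : w ≤ gg α β Q) :
    ∃ M ∈ segment ℝ P Q, ff α β M = c ∧ gg α β M = w := by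
  rcases eq_or_lt_of_le (le_trans h1 h2) with heq | hlt
  · refine ⟨P, left_mem_segment ℝ P Q, hP, ?_⟩
    exact le_antisymm h1 (by rw [heq]; exact h2)
  · set θ := (w - gg α β P) / (gg α β Q - gg α β P) with hθ
    have hd : 0 < gg α β Q - gg α β P := by linarith
    have hθ0 : 0 ≤ θ := div_nonneg (by linarith) (by linarith)
    have hθ1 : θ ≤ 1 := by rw [div_le_one hd]; linarith
    refine ⟨(1 - θ) • P + θ • Q, ⟨1 - θ, θ, by linarith, hθ0, by ring, rfl⟩, ?_, ?_⟩
    · rw [ff_comb, hP, hQ]; ring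
    · rw [gg_comb]
      have : θ * (gg α β Q - gg α β P) = w - gg α β P := by
        rw [hθ]; field_simp
      nlinarith [this]

private lemma seg_exists (α β c w : ℝ) (P Q : ℝ × ℝ)
    (hP : ff α β P = c) (hQ : ff α β Q = c)
    (h1 : min (gg α β P) (gg α β Q) ≤ w) (h2 : w ≤ max (gg α β P) (gg α β Q)) :
    ∃ M ∈ segment ℝ P Q, ff α β M = c ∧ gg α β M = w := by
  rcases le_total (gg α β P) (gg α β Q) with hle | hle
  · rw [min_eq_left hle] at h1; rw [max_eq_right hle] at h2
    exact seg_exists_aux α β c w P Q hP hQ h1 h2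
  · rw [min_eq_right hle] at h1; rw [max_eq_left hle] at h2
    obtain ⟨M, hM, hMf, hMg⟩ := seg_exists_aux α β c w Q P hQ hP h1 h2
    exact ⟨M, segment_symm ℝ Q P ▸ hM, hMf, hMg⟩

private lemma mem_of_between (α β c : ℝ) (hne : ¬(α = 0 ∧ β = 0)) (P Q z : ℝ × ℝ)
    (hP : ff α β P = c) (hQ : ff α β Q = c) (hz : ff α β z = c)
    (h1 : min (gg α β P) (gg α β Q) ≤ gg α β z) (h2 : gg α β z ≤ max (gg α β P) (gg α β Q)) :
    z ∈ segment ℝ P Q := by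
  obtain ⟨M, hM, hMf, hMg⟩ := seg_exists α β c (gg α β z) P Q hP hQ h1 h2
  have : M = z := pt_inj α β hne (hMf.trans hz.symm) hMg
  rwa [← this]

private lemma core (S₁ S₂ S₃ S₄ S₅ : Set (ℝ × ℝ))
    (hv₁ : Convex ℝ S₁) (hv₂ : Convex ℝ S₂) (hv₃ : Convex ℝ S₃)
    (hv₄ : Convex ℝ S₄) (hv₅ : Convex ℝ S₅)
    (hk₃ : IsCompact S₃) (hk₄ : IsCompact S₄) (hk₅ : IsCompact S₅)
    (h134 : (S₁ ∩ S₃ ∩ S₄).Nonempty) (h234 : (S₂ ∩ S₃ ∩ S₄).Nonempty)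
    (h135 : (S₁ ∩ S₃ ∩ S₅).Nonempty) (h145 : (S₁ ∩ S₄ ∩ S₅).Nonempty)
    (h235 : (S₂ ∩ S₃ ∩ S₅).Nonempty) (h245 : (S₂ ∩ S₄ ∩ S₅).Nonempty)
    (h345 : S₃ ∩ S₄ ∩ S₅ = ∅)
    (h123 : S₁ ∩ S₂ ∩ S₃ = ∅) (h124 : S₁ ∩ S₂ ∩ S₄ = ∅) : False := by
  -- separate S₃ ∩ S₄ from S₅
  have hC : Convex ℝ (S₃ ∩ S₄) := hv₃.inter hv₄
  have hCk : IsCompact (S₃ ∩ S₄) := hk₃.inter_right hk₄.isClosed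
  have hdisj : Disjoint (S₃ ∩ S₄) S₅ := Set.disjoint_iff_inter_eq_empty.mpr h345
  obtain ⟨f, u, v, hfu, huv, hfv⟩ :=
    geometric_hahn_banach_compact_closed hC hCk hv₅ hk₅.isClosed hdisj
  set c : ℝ := (u + v) / 2 with hc
  set α : ℝ := f (1, 0) with hα
  set β : ℝ := f (0, 1) with hβ
  have hf_eq : ∀ w : ℝ × ℝ, f w = ff α β w := by
    intro w
    have hw : w = w.1 • ((1 : ℝ), (0 : ℝ)) + w.2 • ((0 : ℝ), (1 : ℝ)) := by
      simp [Prod.ext_iff]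
    conv_lhs => rw [hw]; rw [map_add, map_smul, map_smul]
    simp only [ff, smul_eq_mul, hα, hβ]
    ring
  have hfC : ∀ w ∈ S₃ ∩ S₄, ff α β w < c := by
    intro w hw; rw [← hf_eq]; have := hfu w hw; simp [hc]; linarith
  have hfS5 : ∀ w ∈ S₅, c < ff α β w := by
    intro w hw; rw [← hf_eq]; have := hfv w hw; simp [hc]; linarith
  -- the six points
  obtain ⟨q₂, hq₂⟩ := h134
  obtain ⟨q₁, hq₁⟩ := h234
  obtain ⟨r, hr⟩ := h135
  obtain ⟨s, hs⟩ := h145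
  obtain ⟨t, ht⟩ := h235
  obtain ⟨p, hp⟩ := h245
  have hq₂f : ff α β q₂ < c := hfC q₂ ⟨hq₂.1.2, hq₂.2⟩
  have hq₁f : ff α β q₁ < c := hfC q₁ ⟨hq₁.1.2, hq₁.2⟩
  have hrf : c < ff α β r := hfS5 r hr.2
  have hsf : c < ff α β s := hfS5 s hs.2
  have htf : c < ff α β t := hfS5 t ht.2
  have hpf : c < ff α β p := hfS5 p hp.2
  have hne : ¬(α = 0 ∧ β = 0) := by
    rintro ⟨h1, h2⟩
    have e1 : ff α β q₂ = 0 := by simp [ff, h1, h2]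
    have e2 : ff α β r = 0 := by simp [ff, h1, h2]
    rw [e1] at hq₂f; rw [e2] at hrf; linarith
  -- crossing points on the line {ff = c}
  obtain ⟨x₃, hx₃seg, hx₃f⟩ := cross_s6 α β c q₂ r hq₂f hrf
  obtain ⟨x₄, hx₄seg, hx₄f⟩ := cross_s6 α β c q₂ s hq₂f hsf
  obtain ⟨y₃, hy₃seg, hy₃f⟩ := cross_s6 α β c q₁ t hq₁f htf
  obtain ⟨y₄, hy₄seg, hy₄f⟩ := cross_s6 α β c q₁ p hq₁f hpf
  have hx₃1 : x₃ ∈ S₁ := hv₁.segment_subset hq₂.1.1 hr.1.1 hx₃seg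
  have hx₃3 : x₃ ∈ S₃ := hv₃.segment_subset hq₂.1.2 hr.1.2 hx₃seg
  have hx₄1 : x₄ ∈ S₁ := hv₁.segment_subset hq₂.1.1 hs.1.1 hx₄seg
  have hx₄4 : x₄ ∈ S₄ := hv₄.segment_subset hq₂.2 hs.1.2 hx₄seg
  have hy₃2 : y₃ ∈ S₂ := hv₂.segment_subset hq₁.1.1 ht.1.1 hy₃seg
  have hy₃3 : y₃ ∈ S₃ := hv₃.segment_subset hq₁.1.2 ht.1.2 hy₃seg
  have hy₄2 : y₄ ∈ S₂ := hv₂.segment_subset hq₁.1.1 hp.1.1 hy₄seg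
  have hy₄4 : y₄ ∈ S₄ := hv₄.segment_subset hq₁.2 hp.1.2 hy₄seg
  set p3 := gg α β x₃ with hp3
  set r3 := gg α β y₃ with hr3
  set p4 := gg α β x₄ with hp4
  set r4 := gg α β y₄ with hr4
  -- the g-intervals of S₃ and S₄ on the line are disjoint
  have key : max p3 r3 < min p4 r4 ∨ max p4 r4 < min p3 r3 := by
    by_contra hcon
    push_neg at hcon
    obtain ⟨hcon1, hcon2⟩ := hcon
    set w := max (min p3 r3) (min p4 r4) with hw
    have w3l : min p3 r3 ≤ w := le_max_left _ _
    have w3r : w ≤ max p3 r3 := max_le (min_le_max) hcon1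
    have w4l : min p4 r4 ≤ w := le_max_right _ _
    have w4r : w ≤ max p4 r4 := max_le hcon2 (min_le_max)
    obtain ⟨m₃, hm₃seg, hm₃f, hm₃g⟩ := seg_exists α β c w x₃ y₃ hx₃f hy₃f w3l w3r
    obtain ⟨m₄, hm₄seg, hm₄f, hm₄g⟩ := seg_exists α β c w x₄ y₄ hx₄f hy₄f w4l w4r
    have hmm : m₃ = m₄ := pt_inj α β hne (hm₃f.trans hm₄f.symm) (hm₃g.trans hm₄g.symm)
    have hm₃3 : m₃ ∈ S₃ := hv₃.segment_subset hx₃3 hy₃3 hm₃seg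
    have hm₄4 : m₄ ∈ S₄ := hv₄.segment_subset hx₄4 hy₄4 hm₄seg
    have : ff α β m₃ < c := hfC m₃ ⟨hm₃3, hmm ▸ hm₄4⟩
    rw [hm₃f] at this; exact lt_irrefl c this
  rcases key with hk | hk
  · -- blue triple S₁ S₂ S₃ is hit
    rcases le_total r3 p3 with h | h
    · -- z = x₃ ∈ segment y₃ y₄ ⊆ S₂
      have hx₃2 : x₃ ∈ S₂ := by
        apply hv₂.segment_subset hy₃2 hy₄2
        apply mem_of_between α β c hne y₃ y₄ x₃ hy₃f hy₄f hx₃f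
        · calc min r3 r4 ≤ r3 := min_le_left _ _
            _ ≤ p3 := h
        · calc p3 ≤ max p3 r3 := le_max_left _ _
            _ ≤ min p4 r4 := le_of_lt hk
            _ ≤ r4 := min_le_right _ _
            _ ≤ max r3 r4 := le_max_right _ _
      exact Set.eq_empty_iff_forall_notMem.mp h123 x₃ ⟨⟨hx₃1, hx₃2⟩, hx₃3⟩
    · -- z = y₃ ∈ segment x₃ x₄ ⊆ S₁
      have hy₃1 : y₃ ∈ S₁ := by
        apply hv₁.segment_subset hx₃1 hx₄1
        apply mem_of_between α β c hne x₃ x₄ y₃ hx₃f hx₄f hy₃f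
        · calc min p3 p4 ≤ p3 := min_le_left _ _
            _ ≤ r3 := h
        · calc r3 ≤ max p3 r3 := le_max_right _ _
            _ ≤ min p4 r4 := le_of_lt hk
            _ ≤ p4 := min_le_left _ _
            _ ≤ max p3 p4 := le_max_right _ _
      exact Set.eq_empty_iff_forall_notMem.mp h123 y₃ ⟨⟨hy₃1, hy₃2⟩, hy₃3⟩
  · -- blue triple S₁ S₂ S₄ is hit
    rcases le_total r4 p4 with h | h
    · have hx₄2 : x₄ ∈ S₂ := by
        apply hv₂.segment_subset hy₃2 hy₄2
        apply mem_of_between α β c hne y₃ y₄ x₄ hy₃f hy₄f hx₄f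
        · calc min r3 r4 ≤ r4 := min_le_right _ _
            _ ≤ p4 := h
        · calc p4 ≤ max p4 r4 := le_max_left _ _
            _ ≤ min p3 r3 := le_of_lt hk
            _ ≤ r3 := min_le_right _ _
            _ ≤ max r3 r4 := le_max_left _ _
      exact Set.eq_empty_iff_forall_notMem.mp h124 x₄ ⟨⟨hx₄1, hx₄2⟩, hx₄4⟩
    · have hy₄1 : y₄ ∈ S₁ := by
        apply hv₁.segment_subset hx₃1 hx₄1
        apply mem_of_between α β c hne x₃ x₄ y₄ hx₃f hx₄f hy₄f
        · calc min p3 p4 ≤ p4 := min_le_right _ _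
            _ ≤ r4 := h
        · calc r4 ≤ max p4 r4 := le_max_right _ _
            _ ≤ min p3 r3 := le_of_lt hk
            _ ≤ p3 := min_le_left _ _
            _ ≤ max p3 p4 := le_max_left _ _
      exact Set.eq_empty_iff_forall_notMem.mp h124 y₄ ⟨⟨hy₄1, hy₄2⟩, hy₄4⟩

private lemma ne3 {w p q r : Fin 5} {t : Finset (Fin 5)} (hw : w ∈ t)
    (h1 : w ≠ p) (h2 : w ≠ q) (h3 : w ≠ r) : ({p,q,r} : Finset (Fin 5)) ≠ t := by
  intro h; rw [← h] at hw
  simp only [Finset.mem_insert, Finset.mem_singleton] at hw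
  tauto

private lemma finish (A : Fin 5 → Set (ℝ × ℝ))
    (hcp : ∀ i, IsCompact (A i)) (hcv : ∀ i, Convex ℝ (A i))
    (a b x y z : Fin 5)
    (hab : a ≠ b) (hax : a ≠ x) (hay : a ≠ y) (haz : a ≠ z) (hbx : b ≠ x)
    (hby : b ≠ y) (hbz : b ≠ z) (hxy : x ≠ y) (hxz : x ≠ z) (hyz : y ≠ z)
    (hblue : ∀ s : Finset (Fin 5), s.card = 3 →
      ((⋂ i ∈ s, A i) = ∅ ↔ (s = {a,b,x} ∨ s = {a,b,y} ∨ s = {x,y,z}))) : False := by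
  have tri : ∀ p q r : Fin 5, (⋂ i ∈ ({p,q,r} : Finset (Fin 5)), A i) = A p ∩ A q ∩ A r := by
    intro p q r; ext w
    simp only [Set.mem_iInter, Finset.mem_insert, Finset.mem_singleton, Set.mem_inter_iff]
    constructor
    · intro h; exact ⟨⟨h p (Or.inl rfl), h q (Or.inr (Or.inl rfl))⟩, h r (Or.inr (Or.inr rfl))⟩
    · rintro ⟨⟨h1, h2⟩, h3⟩ i (rfl | rfl | rfl) <;> assumption
  have card3 : ∀ p q r : Fin 5, p ≠ q → p ≠ r → q ≠ r →
      ({p,q,r} : Finset (Fin 5)).card = 3 := by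
    intro p q r h1 h2 h3
    rw [Finset.card_insert_of_notMem (by simp [h1, h2]),
      Finset.card_insert_of_notMem (by simp [h3]), Finset.card_singleton]
  have red : ∀ p q r : Fin 5, p ≠ q → p ≠ r → q ≠ r →
      ¬((({p,q,r} : Finset (Fin 5)) = {a,b,x}) ∨ (({p,q,r} : Finset (Fin 5)) = {a,b,y}) ∨
        (({p,q,r} : Finset (Fin 5)) = {x,y,z})) → (A p ∩ A q ∩ A r).Nonempty := by
    intro p q r h1 h2 h3 hno
    have h := hblue {p,q,r} (card3 p q r h1 h2 h3)
    rw [tri] at h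
    rw [Set.nonempty_iff_ne_empty]
    exact fun he => hno (h.mp he)
  have hB1 : A a ∩ A b ∩ A x = ∅ := by
    rw [← tri]; exact (hblue _ (card3 _ _ _ hab hax hbx)).mpr (Or.inl rfl)
  have hB2 : A a ∩ A b ∩ A y = ∅ := by
    rw [← tri]; exact (hblue _ (card3 _ _ _ hab hay hby)).mpr (Or.inr (Or.inl rfl))
  have hB3 : A x ∩ A y ∩ A z = ∅ := by
    rw [← tri]; exact (hblue _ (card3 _ _ _ hxy hxz hyz)).mpr (Or.inr (Or.inr rfl))
  have hR134 : (A a ∩ A x ∩ A y).Nonempty := by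
    refine red a x y hax hay hxy ?_
    rintro (h | h | h)
    · exact ne3 (by simp) hab.symm hbx hby h
    · exact ne3 (by simp) hab.symm hbx hby h
    · exact ne3 (by simp) haz.symm hxz.symm hyz.symm h
  have hR234 : (A b ∩ A x ∩ A y).Nonempty := by
    refine red b x y hbx hby hxy ?_
    rintro (h | h | h)
    · exact ne3 (by simp) hab hax hay h
    · exact ne3 (by simp) hab hax hay h
    · exact ne3 (by simp) hbz.symm hxz.symm hyz.symm h
  have hR135 : (A a ∩ A x ∩ A z).Nonempty := by
    refine red a x z hax haz hxz ?_
    rintro (h | h | h)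
    · exact ne3 (by simp) hab.symm hbx hbz h
    · exact ne3 (by simp) hab.symm hbx hbz h
    · exact ne3 (by simp) hay.symm hxy.symm hyz h
  have hR145 : (A a ∩ A y ∩ A z).Nonempty := by
    refine red a y z hay haz hyz ?_
    rintro (h | h | h)
    · exact ne3 (by simp) hab.symm hby hbz h
    · exact ne3 (by simp) hab.symm hby hbz h
    · exact ne3 (by simp) hax.symm hxy hxz h
  have hR235 : (A b ∩ A x ∩ A z).Nonempty := by
    refine red b x z hbx hbz hxz ?_
    rintro (h | h | h)
    · exact ne3 (by simp) hab hax haz h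
    · exact ne3 (by simp) hab hax haz h
    · exact ne3 (by simp) hby.symm hxy.symm hyz h
  have hR245 : (A b ∩ A y ∩ A z).Nonempty := by
    refine red b y z hby hbz hyz ?_
    rintro (h | h | h)
    · exact ne3 (by simp) hab hay haz h
    · exact ne3 (by simp) hab hay haz h
    · exact ne3 (by simp) hbx.symm hxy hxz h
  exact core (A a) (A b) (A x) (A y) (A z) (hcv a) (hcv b) (hcv x) (hcv y) (hcv z)
    (hcp x) (hcp y) (hcp z) hR134 hR234 hR135 hR145 hR235 hR245 hB3 hB1 hB2

/-- No convex red/blue clique on 5 convex planar sets has exactly a blue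
`C₃⁽³⁾` (three pairwise intersecting triples of indices with no common index)
as its family of empty-intersection triples. -/
theorem no_blue_C3 (A : Fin 5 → Set (ℝ × ℝ))
    (hcp : ∀ i, IsCompact (A i)) (hcv : ∀ i, Convex ℝ (A i))
    (t₁ t₂ t₃ : Finset (Fin 5))
    (hc₁ : t₁.card = 3) (hc₂ : t₂.card = 3) (hc₃ : t₃.card = 3)
    (h12 : (t₁ ∩ t₂).Nonempty) (h23 : (t₂ ∩ t₃).Nonempty) (h13 : (t₁ ∩ t₃).Nonempty)
    (hcom : t₁ ∩ t₂ ∩ t₃ = ∅)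
    (hblue : ∀ s : Finset (Fin 5), s.card = 3 →
      ((⋂ i ∈ s, A i) = ∅ ↔ s = t₁ ∨ s = t₂ ∨ s = t₃)) :
    False := by
  have hd := comb0 t₁ t₂ t₃ hc₁ hc₂ hc₃ h23 h13 hcom
  have hperm : ∃ a b x y z : Fin 5,
      (a ≠ b ∧ a ≠ x ∧ a ≠ y ∧ a ≠ z ∧ b ≠ x ∧ b ≠ y ∧ b ≠ z ∧ x ≠ y ∧ x ≠ z ∧ y ≠ z) ∧
      ∀ s : Finset (Fin 5), (s = t₁ ∨ s = t₂ ∨ s = t₃) ↔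
        (s = {a,b,x} ∨ s = {a,b,y} ∨ s = {x,y,z}) := by
    rcases hd with h | h | h
    · exact extract t₁ t₂ t₃ hc₁ hc₂ hc₃ h23 h13 hcom h
    · obtain ⟨a, b, x, y, z, hdist, hiff⟩ := extract t₂ t₃ t₁ hc₂ hc₃ hc₁
        (by rwa [Finset.inter_comm] at h13) (by rwa [Finset.inter_comm] at h12)
        (by rw [show t₂ ∩ t₃ ∩ t₁ = t₁ ∩ t₂ ∩ t₃ by
              ext i; simp only [Finset.mem_inter]; tauto]
            exact hcom) h
      exact ⟨a, b, x, y, z, hdist, fun s => Iff.trans (by tauto) (hiff s)⟩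
    · obtain ⟨a, b, x, y, z, hdist, hiff⟩ := extract t₁ t₃ t₂ hc₁ hc₃ hc₂
        (by rwa [Finset.inter_comm] at h23) h12
        (by rw [show t₁ ∩ t₃ ∩ t₂ = t₁ ∩ t₂ ∩ t₃ by
              ext i; simp only [Finset.mem_inter]; tauto]
            exact hcom) h
      exact ⟨a, b, x, y, z, hdist, fun s => Iff.trans (by tauto) (hiff s)⟩
  obtain ⟨a, b, x, y, z, ⟨d1, d2, d3, d4, d5, d6, d7, d8, d9, d10⟩, hiff⟩ := hperm
  exact finish A hcp hcv a b x y z d1 d2 d3 d4 d5 d6 d7 d8 d9 d10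
    (fun s hs => (hblue s hs).trans (hiff s))
end

section
/- For every integer k ≥ 2 there exist 2k compact convex sets in ℝ² such that no point of the plane is contained in more than k of them, yet no two of the sets together contain all points covered by at least k of the sets. -/
/-!
The regular `(2k-1)`-gon and its inscribed disk are replaced by the `2r+1 = 2k-1` points `(m, m²)`
of the parabola, in their cyclic order around their convex hull, and by the polygon spanned by the
midpoints of the edges of that hull: only the combinatorics of the construction matters.
The caps are the hulls of `r+1` cyclically consecutive vertices. Each cap is cut off by a chord of
the parabola, so it contains a vertex only if the vertex is one of its own, and an edge midpoint
only if both ends of the edge are. The caps starting at `t` and at `t + r` share only the vertex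
`t + r`, and lie on opposite sides of two different lines through it, so they meet only there.
Hence a point other than a vertex lies in a set `T` of caps disjoint from its translate `T - r`,
that is in at most `r` caps, while a vertex lies in exactly `r+1` caps and misses the midpoint
polygon, which lies strictly above the parabola. All vertices and edge midpoints are
`(r+1)`-covered; but a cap misses a vertex, the midpoint polygon misses all of them, and two caps
contain at most `2r` of the `2r+1` edge midpoints.
-/

open Set

namespace CapConstruction

lemma val_sub_eq {N : ℕ} (m t : Fin N) :
    ((m - t : Fin N) : ℕ) = if (t : ℕ) ≤ m then (m : ℕ) - t else N + m - t := by
  split_ifs with h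
  exacts [Fin.coe_sub_iff_le.2 h, Fin.coe_sub_iff_lt.2 (not_le.1 h)]

lemma val_add_one_sub {N : ℕ} (e t : Fin (N + 1)) : ((e + 1 - t : Fin _) : ℕ) =
    if ((e - t : Fin _) : ℕ) = N then 0 else ((e - t : Fin _) : ℕ) + 1 := by
  rw [add_sub_right_comm, Fin.val_add_one]
  simp only [Fin.ext_iff, Fin.val_last]

lemma ncard_setOf_val_lt {N j : ℕ} (hj : j ≤ N) : {d : Fin N | (d : ℕ) < j}.ncard = j := by
  classical
  rw [ncard_eq_toFinset_card', toFinset_ofPred, Fin.card_filter_val_lt, min_eq_right hj]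

lemma ncard_setOf_val_sub_lt {N j : ℕ} [NeZero N] (m : Fin N) (hj : j ≤ N) :
    {t : Fin N | ((m - t : Fin N) : ℕ) < j}.ncard = j :=
  (ncard_preimage_of_injective_subset_range (s := {d : Fin N | (d : ℕ) < j})
    (Equiv.subLeft m).injective (by simp)).trans (ncard_setOf_val_lt hj)

lemma ncard_setOf_val_sub_right_lt {N j : ℕ} [NeZero N] (t : Fin N) (hj : j ≤ N) :
    {e : Fin N | ((e - t : Fin N) : ℕ) < j}.ncard = j :=
  (ncard_preimage_of_injective_subset_range (s := {d : Fin N | (d : ℕ) < j})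
    (Equiv.subRight t).injective (by simp)).trans (ncard_setOf_val_lt hj)

open Classical in
lemma ncard_setOf_fin_succ {N : ℕ} (P : Fin (N + 1) → Prop) :
    {i | P i}.ncard = (if P 0 then 1 else 0) + {i : Fin N | P i.succ}.ncard := by
  simp only [ncard_eq_toFinset_card', toFinset_ofPred, Fin.card_filter_univ_succ']

lemma two_mul_ncard_le_of_disjoint_preimage {α : Type*} [Finite α] (σ : α ≃ α) {T : Set α}
    (h : Disjoint T (σ ⁻¹' T)) : 2 * T.ncard ≤ Nat.card α := by
  have hunion := ncard_union_eq h (toFinite _) (toFinite _)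
  rw [ncard_preimage_of_injective_subset_range σ.injective (by simp)] at hunion
  rw [← ncard_univ]
  linarith [ncard_le_ncard (subset_univ (T ∪ σ ⁻¹' T))]

lemma affineMap_midpoint_pos {E : Type*} [AddCommGroup E] [Module ℝ E] {f : E →ᵃ[ℝ] ℝ}
    {x y : E} (hxy : 0 < f x + f y) : 0 < f (midpoint ℝ x y) := by
  rw [f.map_midpoint, midpoint_eq_smul_add, smul_eq_mul, invOf_eq_inv]
  positivity

def parabola (s : ℝ) : ℝ × ℝ := (s, s ^ 2)

def chord (u v : ℝ) : ℝ × ℝ →ᵃ[ℝ] ℝ :=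
  (LinearMap.snd ℝ ℝ ℝ - (u + v) • LinearMap.fst ℝ ℝ ℝ).toAffineMap + AffineMap.const ℝ _ (u * v)

lemma chord_apply (u v : ℝ) (x : ℝ × ℝ) : chord u v x = x.2 - (u + v) * x.1 + u * v := by
  simp [chord, sub_eq_add_neg]

lemma chord_parabola (u v s : ℝ) : chord u v (parabola s) = (s - u) * (s - v) := by
  rw [chord_apply, parabola]; ring

lemma eq_parabola_of_chord_eq_zero {u v w : ℝ} {x : ℝ × ℝ} (hvw : v ≠ w)
    (hv : chord u v x = 0) (hw : chord u w x = 0) : x = parabola u := by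
  rw [chord_apply] at hv hw
  have hx : x.1 = u := by
    have : (w - v) * (x.1 - u) = 0 := by linear_combination hv - hw
    linarith [(mul_eq_zero.1 this).resolve_left (sub_ne_zero.2 hvw.symm)]
  ext
  · exact hx
  · rw [hx] at hv; simp only [parabola]; linear_combination hv

lemma convex_setOf_sq_lt : Convex ℝ {x : ℝ × ℝ | x.1 ^ 2 < x.2} := by
  simpa using (even_two.convexOn_pow (𝕜 := ℝ)).convex_strict_epigraph

lemma midpoint_parabola_mem {s s' : ℝ} (h : s ≠ s') :
    midpoint ℝ (parabola s) (parabola s') ∈ {x : ℝ × ℝ | x.1 ^ 2 < x.2} := by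
  have : 0 < (s - s') ^ 2 := by positivity
  simp only [mem_ofPred_eq, midpoint_eq_smul_add, parabola, Prod.smul_fst, Prod.smul_snd,
    Prod.fst_add, Prod.snd_add, smul_eq_mul, invOf_eq_inv]
  nlinarith

def vertex {N : ℕ} (m : Fin N) : ℝ × ℝ := parabola (m : ℕ)

def arc (r : ℕ) (t : Fin (2 * r + 1)) : Set (Fin (2 * r + 1)) := {m | ((m - t : Fin _) : ℕ) ≤ r}

def cap (r : ℕ) (t : Fin (2 * r + 1)) : Set (ℝ × ℝ) := convexHull ℝ (vertex '' arc r t)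

/-- For `t ≤ r` the vertices of `cap r t` are those of abscissa in `[t, t + r]`, otherwise those
outside `[t - r, t - 1]`. For `0 ≤ δ < 1` the form is `≤ 0` exactly at these vertices, and its
zero line passes through `vertex t`; for `δ = 0` it also passes through the other end vertex. -/
def capForm (r : ℕ) (t : Fin (2 * r + 1)) (δ : ℝ) : ℝ × ℝ →ᵃ[ℝ] ℝ :=
  if (t : ℕ) ≤ r then chord (t : ℕ) ((t : ℕ) + r + δ) else -chord (t : ℕ) ((t : ℕ) - r - 1 + δ)

variable {r : ℕ} {t m e : Fin (2 * r + 1)} {δ : ℝ}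

lemma capForm_vertex : capForm r t δ (vertex m) = if (t : ℕ) ≤ r
    then ((m : ℕ) - (t : ℕ) : ℝ) * ((m : ℕ) - ((t : ℕ) + r + δ))
    else -(((m : ℕ) - (t : ℕ) : ℝ) * ((m : ℕ) - ((t : ℕ) - r - 1 + δ))) := by
  unfold capForm vertex
  split_ifs <;> simp [chord_parabola]

lemma capForm_vertex_nonpos (hδ₀ : 0 ≤ δ) (hδ₁ : δ < 1) (hm : m ∈ arc r t) :
    capForm r t δ (vertex m) ≤ 0 := by
  rw [arc, mem_ofPred_eq, val_sub_eq] at hm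
  rw [capForm_vertex]
  split_ifs at hm ⊢ with htr htm htm
  · have h₁ : ((t : ℕ) : ℝ) ≤ (m : ℕ) := by exact_mod_cast htm
    have h₂ : ((m : ℕ) : ℝ) ≤ (t : ℕ) + r := by exact_mod_cast (by omega : (m : ℕ) ≤ t + r)
    nlinarith
  · omega
  · have h₁ : ((t : ℕ) : ℝ) ≤ (m : ℕ) := by exact_mod_cast htm
    have : (0 : ℝ) ≤ r := by positivity
    nlinarith
  · have h₁ : ((m : ℕ) : ℝ) + r + 1 ≤ (t : ℕ) := by
      exact_mod_cast (by omega : (m : ℕ) + r + 1 ≤ t)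
    nlinarith

lemma capForm_vertex_pos (hδ₀ : 0 ≤ δ) (hδ₁ : δ < 1) (hm : r < ((m - t : Fin _) : ℕ)) :
    0 < capForm r t δ (vertex m) := by
  have hlt := (m - t).isLt
  rw [val_sub_eq] at hm hlt
  rw [capForm_vertex]
  split_ifs at hm hlt ⊢ with htr htm htm
  · have h₁ : ((t : ℕ) : ℝ) + r + 1 ≤ (m : ℕ) := by
      exact_mod_cast (by omega : (t : ℕ) + r + 1 ≤ m)
    nlinarith
  · have h₁ : ((m : ℕ) : ℝ) + 1 ≤ (t : ℕ) := by exact_mod_cast (by omega : (m : ℕ) + 1 ≤ t)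
    have : (0 : ℝ) ≤ r := by positivity
    nlinarith
  · omega
  · have h₁ : ((m : ℕ) : ℝ) + 1 ≤ (t : ℕ) := by exact_mod_cast (by omega : (m : ℕ) + 1 ≤ t)
    have h₂ : ((t : ℕ) : ℝ) ≤ (m : ℕ) + r := by exact_mod_cast (by omega : (t : ℕ) ≤ m + r)
    nlinarith

lemma capForm_vertex_self : capForm r t δ (vertex t) = 0 := by
  rw [capForm_vertex]; split_ifs <;> ring

lemma capForm_zero_vertex_of_val_sub_eq (hm : ((m - t : Fin _) : ℕ) = r) :
    capForm r t 0 (vertex m) = 0 := by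
  rw [val_sub_eq] at hm
  rw [capForm_vertex]
  split_ifs at hm ⊢ with htr htm htm
  · have h₁ : ((m : ℕ) : ℝ) = (t : ℕ) + r := by exact_mod_cast (by omega : (m : ℕ) = t + r)
    rw [h₁]; ring
  · omega
  · omega
  · have h₁ : ((m : ℕ) : ℝ) + r + 1 = (t : ℕ) := by
      exact_mod_cast (by omega : (m : ℕ) + r + 1 = t)
    rw [← h₁]; ring

lemma eq_vertex_of_capForm_eq_zero {δ δ' : ℝ} {x : ℝ × ℝ} (hδ : δ ≠ δ')
    (h : capForm r t δ x = 0) (h' : capForm r t δ' x = 0) : x = vertex t := by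
  unfold capForm at h h'
  split_ifs at h h'
  · exact eq_parabola_of_chord_eq_zero (by contrapose! hδ; linarith) h h'
  · simp only [AffineMap.coe_neg, Pi.neg_apply, neg_eq_zero] at h h'
    exact eq_parabola_of_chord_eq_zero (by contrapose! hδ; linarith) h h'

lemma cap_subset_capForm_nonpos (hδ₀ : 0 ≤ δ) (hδ₁ : δ < 1) :
    cap r t ⊆ capForm r t δ ⁻¹' Iic 0 :=
  convexHull_min (image_subset_iff.2 fun _ hm => capForm_vertex_nonpos hδ₀ hδ₁ hm)
    ((convex_Iic 0).affine_preimage _)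

lemma vertex_mem_cap_iff : vertex m ∈ cap r t ↔ m ∈ arc r t := by
  refine ⟨fun h => ?_, fun h => subset_convexHull ℝ _ (mem_image_of_mem _ h)⟩
  by_contra hm
  exact (capForm_vertex_pos le_rfl zero_lt_one (not_le.1 hm)).not_ge
    (cap_subset_capForm_nonpos le_rfl zero_lt_one h)

lemma capForm_vertex_nonneg_of_mem_arc {s : Fin (2 * r + 1)} (hδ₀ : 0 ≤ δ) (hδ₁ : δ < 1)
    (hs : ((s - t : Fin _) : ℕ) = r) (hm : m ∈ arc r t) : 0 ≤ capForm r s δ (vertex m) := by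
  rw [arc, mem_ofPred_eq] at hm
  have hms : m - s = (m - t) - (s - t) := by abel
  rcases hm.lt_or_eq with hm | hm
  · refine (capForm_vertex_pos hδ₀ hδ₁ ?_).le
    rw [hms, val_sub_eq, hs, if_neg (by omega)]
    omega
  · have : m = s := by
      rw [← sub_eq_zero, hms, Fin.ext_iff, val_sub_eq, hs, if_pos hm.ge, hm]; simp
    rw [this, capForm_vertex_self]

lemma cap_subset_capForm_nonneg {s : Fin (2 * r + 1)} (hδ₀ : 0 ≤ δ) (hδ₁ : δ < 1)
    (hs : ((s - t : Fin _) : ℕ) = r) : cap r t ⊆ capForm r s δ ⁻¹' Ici 0 :=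
  convexHull_min (image_subset_iff.2 fun _ => capForm_vertex_nonneg_of_mem_arc hδ₀ hδ₁ hs)
    ((convex_Ici 0).affine_preimage _)

lemma cap_inter_cap_subset {s : Fin (2 * r + 1)} (hs : ((s - t : Fin _) : ℕ) = r) :
    cap r t ∩ cap r s ⊆ {vertex s} := by
  rintro x ⟨hx, hx'⟩
  have onLine : ∀ δ ∈ Ico (0 : ℝ) 1, capForm r s δ x = 0 := fun δ ⟨hδ₀, hδ₁⟩ =>
    le_antisymm (cap_subset_capForm_nonpos hδ₀ hδ₁ hx') (cap_subset_capForm_nonneg hδ₀ hδ₁ hs hx)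
  exact eq_vertex_of_capForm_eq_zero (by norm_num : (0 : ℝ) ≠ 1 / 2)
    (onLine 0 (by norm_num)) (onLine (1 / 2) (by norm_num))

noncomputable def edgeMidpoint (e : Fin (2 * r + 1)) : ℝ × ℝ :=
  midpoint ℝ (vertex e) (vertex (e + 1))

lemma edgeMidpoint_mem_cap_iff (hr : 0 < r) :
    edgeMidpoint e ∈ cap r t ↔ ((e - t : Fin _) : ℕ) < r := by
  have hsucc := val_add_one_sub e t
  constructor
  · intro h
    by_contra! hD
    refine (cap_subset_capForm_nonpos le_rfl zero_lt_one h).not_gt (affineMap_midpoint_pos ?_)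
    rcases hD.eq_or_lt with hD | hD
    · rw [capForm_zero_vertex_of_val_sub_eq hD.symm, zero_add]
      exact capForm_vertex_pos le_rfl zero_lt_one (by rw [hsucc, if_neg (by omega)]; omega)
    · have hsucc_nonneg : 0 ≤ capForm r t 0 (vertex (e + 1)) := by
        by_cases hlast : ((e - t : Fin _) : ℕ) = 2 * r
        · have : e + 1 = t := by rw [← sub_eq_zero, Fin.ext_iff, hsucc, if_pos hlast]; rfl
          rw [this, capForm_vertex_self]
        · exact (capForm_vertex_pos le_rfl zero_lt_one (by rw [hsucc, if_neg hlast]; omega)).le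
      linarith [capForm_vertex_pos (t := t) le_rfl zero_lt_one hD]
  · intro h
    refine (convex_convexHull ℝ _).midpoint_mem (subset_convexHull ℝ _ (mem_image_of_mem _ ?_))
      (subset_convexHull ℝ _ (mem_image_of_mem _ ?_))
    · exact h.le
    · show _ ≤ r
      rw [hsucc, if_neg (by omega)]
      omega

def midpointPolygon (r : ℕ) : Set (ℝ × ℝ) := convexHull ℝ (range (edgeMidpoint (r := r)))

lemma midpointPolygon_subset_setOf_sq_lt (hr : 0 < r) :
    midpointPolygon r ⊆ {x | x.1 ^ 2 < x.2} := by
  refine convexHull_min (range_subset_iff.2 fun e => midpoint_parabola_mem ?_) convex_setOf_sq_lt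
  rw [Ne, Nat.cast_inj, Fin.val_add_one]
  split_ifs with h
  · rw [h, Fin.val_last]; omega
  · omega

lemma vertex_notMem_midpointPolygon (hr : 0 < r) (m : Fin (2 * r + 1)) :
    vertex m ∉ midpointPolygon r :=
  fun h => lt_irrefl (vertex m).2 (midpointPolygon_subset_setOf_sq_lt hr h)

lemma ncard_setOf_vertex_mem_cap (m : Fin (2 * r + 1)) :
    {t | vertex m ∈ cap r t}.ncard = r + 1 := by
  simp_rw [vertex_mem_cap_iff, arc, mem_ofPred_eq, ← Nat.lt_succ_iff]
  exact ncard_setOf_val_sub_lt m (by omega)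

lemma ncard_setOf_edgeMidpoint_mem_cap (hr : 0 < r) (e : Fin (2 * r + 1)) :
    {t | edgeMidpoint e ∈ cap r t}.ncard = r := by
  simp_rw [edgeMidpoint_mem_cap_iff hr]
  exact ncard_setOf_val_sub_lt e (by omega)

lemma ncard_setOf_mem_cap_le {x : ℝ × ℝ} (hx : ∀ m : Fin (2 * r + 1), x ≠ vertex m) :
    {t | x ∈ cap r t}.ncard ≤ r := by
  let c : Fin (2 * r + 1) := ⟨r, by omega⟩
  have hdisj : Disjoint {t | x ∈ cap r t} (Equiv.addRight c ⁻¹' {t | x ∈ cap r t}) :=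
    disjoint_left.2 fun t ht ht' => hx _ (cap_inter_cap_subset (by simp [c]) ⟨ht, ht'⟩)
  have := two_mul_ncard_le_of_disjoint_preimage _ hdisj
  rw [Nat.card_eq_fintype_card, Fintype.card_fin] at this
  omega

lemma exists_edgeMidpoint_notMem_cap (hr : 0 < r) (t s : Fin (2 * r + 1)) :
    ∃ e : Fin (2 * r + 1), edgeMidpoint e ∉ cap r t ∧ edgeMidpoint e ∉ cap r s := by
  by_contra! h
  have hcover : (univ : Set (Fin (2 * r + 1))) ⊆
      {e | ((e - t : Fin _) : ℕ) < r} ∪ {e | ((e - s : Fin _) : ℕ) < r} := fun e _ => by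
    by_cases he : edgeMidpoint e ∈ cap r t
    · exact Or.inl ((edgeMidpoint_mem_cap_iff hr).1 he)
    · exact Or.inr ((edgeMidpoint_mem_cap_iff hr).1 (h e he))
  have := (ncard_le_ncard hcover).trans (ncard_union_le _ _)
  rw [ncard_univ, Nat.card_eq_fintype_card, Fintype.card_fin,
    ncard_setOf_val_sub_right_lt t (by omega), ncard_setOf_val_sub_right_lt s (by omega)] at this
  omega

lemma vertex_sub_one_notMem_cap (hr : 0 < r) (t : Fin (2 * r + 1)) :
    vertex (t - 1) ∉ cap r t := by
  rw [vertex_mem_cap_iff, arc, mem_ofPred_eq, sub_sub_cancel_left, Fin.coe_neg_one]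
  omega

def family (r : ℕ) : Fin (2 * r + 1 + 1) → Set (ℝ × ℝ) := Fin.cons (midpointPolygon r) (cap r)

lemma isCompact_family (i : Fin (2 * r + 1 + 1)) : IsCompact (family r i) := by
  cases i using Fin.cases with
  | zero => exact (finite_range _).isCompact_convexHull ℝ
  | succ t => exact ((arc r t).toFinite.image _).isCompact_convexHull ℝ

lemma convex_family (i : Fin (2 * r + 1 + 1)) : Convex ℝ (family r i) := by
  cases i using Fin.cases <;> exact convex_convexHull ℝ _

open Classical in
lemma ncard_setOf_mem_family (x : ℝ × ℝ) : {i | x ∈ family r i}.ncard =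
    (if x ∈ midpointPolygon r then 1 else 0) + {t | x ∈ cap r t}.ncard :=
  ncard_setOf_fin_succ _

lemma ncard_setOf_mem_family_le (hr : 0 < r) (x : ℝ × ℝ) :
    {i | x ∈ family r i}.ncard ≤ r + 1 := by
  rw [ncard_setOf_mem_family]
  by_cases hx : ∃ m : Fin (2 * r + 1), x = vertex m
  · obtain ⟨m, rfl⟩ := hx
    rw [if_neg (vertex_notMem_midpointPolygon hr m), ncard_setOf_vertex_mem_cap, zero_add]
  · have := ncard_setOf_mem_cap_le (not_exists.1 hx)
    split_ifs <;> omega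

lemma ncard_setOf_vertex_mem_family (m : Fin (2 * r + 1)) :
    r + 1 ≤ {i | vertex m ∈ family r i}.ncard := by
  rw [ncard_setOf_mem_family, ncard_setOf_vertex_mem_cap]
  omega

lemma ncard_setOf_edgeMidpoint_mem_family (hr : 0 < r) (e : Fin (2 * r + 1)) :
    r + 1 ≤ {i | edgeMidpoint e ∈ family r i}.ncard := by
  have he : edgeMidpoint e ∈ midpointPolygon r := subset_convexHull ℝ _ (mem_range_self e)
  rw [ncard_setOf_mem_family, ncard_setOf_edgeMidpoint_mem_cap hr, if_pos he]
  omega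

lemma not_exists_family_union_cover (hr : 0 < r) : ¬ ∃ i j, ∀ x,
    r + 1 ≤ {l | x ∈ family r l}.ncard → x ∈ family r i ∪ family r j := by
  rintro ⟨i, j, hcover⟩
  have hvertex m := hcover (vertex m) (ncard_setOf_vertex_mem_family m)
  have hD := vertex_notMem_midpointPolygon hr
  cases i using Fin.cases with
  | zero =>
    cases j using Fin.cases with
    | zero => exact (hvertex 0).elim (hD 0) (hD 0)
    | succ s => exact (hvertex (s - 1)).elim (hD _) (vertex_sub_one_notMem_cap hr s)
  | succ t =>
    cases j using Fin.cases with
    | zero => exact (hvertex (t - 1)).elim (vertex_sub_one_notMem_cap hr t) (hD _)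
    | succ s =>
      obtain ⟨e, het, hes⟩ := exists_edgeMidpoint_notMem_cap hr t s
      exact (hcover _ (ncard_setOf_edgeMidpoint_mem_family hr e)).elim het hes

end CapConstruction

/-- For every `k ≥ 2` there are `2k` compact convex planar sets such that no
point is covered more than `k` times, yet no two of the sets together contain
all `k`-covered points. -/
theorem two_k_construction (k : ℕ) (hk : 2 ≤ k) :
    ∃ F : Fin (2 * k) → Set (ℝ × ℝ),
      (∀ i, IsCompact (F i)) ∧ (∀ i, Convex ℝ (F i)) ∧
      (∀ x : ℝ × ℝ, ({i | x ∈ F i} : Set (Fin (2 * k))).ncard ≤ k) ∧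
      ¬ ∃ i j : Fin (2 * k), ∀ x : ℝ × ℝ,
          k ≤ ({l | x ∈ F l} : Set (Fin (2 * k))).ncard → x ∈ F i ∪ F j := by
  obtain ⟨r, rfl⟩ : ∃ r, k = r + 1 := ⟨k - 1, by omega⟩
  have hr : 0 < r := by omega
  rw [show 2 * (r + 1) = 2 * r + 1 + 1 by ring]
  exact ⟨CapConstruction.family r, CapConstruction.isCompact_family,
    CapConstruction.convex_family, CapConstruction.ncard_setOf_mem_family_le hr,
    CapConstruction.not_exists_family_union_cover hr⟩
end

section
/- Let P₁,…,P₂ₖ₋₁ be the vertices of a regular (2k−1)-gon, and for each i let Mᵢ be the convex hull of the k consecutive vertices Pᵢ, Pᵢ₊₁, …, Pᵢ₊ₖ₋₁ (indices mod 2k−1). Then the intersection of any k distinct sets among M₁,…,M₂ₖ₋₁ is either empty or a single vertex of the polygon, and every vertex Pⱼ lies in exactly k of the sets Mᵢ. -/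
open Real

/-!
Each `Mᵢ` lies in the unit disk and in the half-plane cut off by its chord `PᵢPᵢ₊ₖ₋₁`; that
half-plane contains exactly the `k` vertices of `Mᵢ`, which gives the count. The hulls `Mᵢ` and
`Mᵢ₊ₖ₋₁` share the vertex `Pᵢ₊ₖ₋₁`, and since the arc of `k` vertices spans less than a half
circle, their two half-planes meet the disk only there. Finally, any `k` of the `2k - 1` indices
contain some pair `i, i + (k - 1)`, because `S` and `S + (k - 1)` cannot be disjoint.
-/

noncomputable section

def circlePoint (θ : ℝ) : ℝ × ℝ := (cos θ, sin θ)

def angleFunctional (t : ℝ) : ℝ × ℝ →ₗ[ℝ] ℝ :=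
  cos t • LinearMap.fst ℝ ℝ ℝ + sin t • LinearMap.snd ℝ ℝ ℝ

@[simp]
lemma angleFunctional_apply (t : ℝ) (x : ℝ × ℝ) :
    angleFunctional t x = x.1 * cos t + x.2 * sin t := by
  simp [angleFunctional, mul_comm]

lemma angleFunctional_circlePoint (t θ : ℝ) :
    angleFunctional t (circlePoint θ) = cos (θ - t) := by
  simp [circlePoint, cos_sub]

def unitDisk : Set (ℝ × ℝ) := {x | x.1 ^ 2 + x.2 ^ 2 ≤ 1}

lemma convex_unitDisk : Convex ℝ unitDisk := by
  have hsq : ConvexOn ℝ Set.univ fun a : ℝ => a ^ 2 := even_two.convexOn_pow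
  simpa [unitDisk] using ((hsq.comp_linearMap (LinearMap.fst ℝ ℝ ℝ)).add
    (hsq.comp_linearMap (LinearMap.snd ℝ ℝ ℝ))).convex_le 1

lemma circlePoint_mem_unitDisk (θ : ℝ) : circlePoint θ ∈ unitDisk :=
  (cos_sq_add_sin_sq θ).le

lemma eq_circlePoint_of_mem_unitDisk {x : ℝ × ℝ} {t β : ℝ} (hβ : 0 < cos β)
    (hx : x ∈ unitDisk) (h₁ : cos β ≤ angleFunctional (t - β) x)
    (h₂ : cos β ≤ angleFunctional (t + β) x) : x = circlePoint t := by
  simp only [angleFunctional_apply, cos_sub, sin_sub, cos_add, sin_add] at h₁ h₂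
  have hone : 1 ≤ x.1 * cos t + x.2 * sin t := by nlinarith
  have hpy := cos_sq_add_sin_sq t
  change x.1 ^ 2 + x.2 ^ 2 ≤ 1 at hx
  refine Prod.ext ?_ ?_ <;> simp only [circlePoint] <;>
    nlinarith [sq_nonneg (x.1 - cos t), sq_nonneg (x.2 - sin t)]

lemma cos_le_cos_iff_le {x β : ℝ} (hβ₀ : 0 ≤ β) (hβπ : β ≤ π) (hx₁ : -β ≤ x)
    (hx₂ : x < 2 * π - β) : cos β ≤ cos x ↔ x ≤ β := by
  refine ⟨fun h => ?_, fun h => ?_⟩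
  · by_contra! hβx
    rcases le_or_gt x π with hxπ | hπx
    · exact (cos_lt_cos_of_nonneg_of_le_pi hβ₀ hxπ hβx).not_ge h
    · rw [← cos_two_pi_sub x] at h
      exact (cos_lt_cos_of_nonneg_of_le_pi hβ₀ (by linarith) (by linarith)).not_ge h
  · rw [← cos_abs x]
    exact cos_le_cos_of_nonneg_of_le_pi (abs_nonneg x) hβπ (abs_le.2 ⟨hx₁, h⟩)

lemma circlePoint_add_int_mul_two_pi (θ : ℝ) (z : ℤ) :
    circlePoint (θ + z * (2 * π)) = circlePoint θ := by
  simp only [circlePoint, cos_add_int_mul_two_pi, sin_add_int_mul_two_pi]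

def polygonVertex (n : ℕ) (j : ZMod n) : ℝ × ℝ := circlePoint (2 * π * j.val / n)

def consecutiveHull (n k : ℕ) (i : ZMod n) : Set (ℝ × ℝ) :=
  convexHull ℝ {p | ∃ m : ℕ, m < k ∧ p = polygonVertex n (i + m)}

lemma consecutiveHull_subset_unitDisk {n k : ℕ} (i : ZMod n) :
    consecutiveHull n k i ⊆ unitDisk :=
  convexHull_min (fun _ ⟨_, _, hp⟩ => hp ▸ circlePoint_mem_unitDisk _) convex_unitDisk

section Polygon

variable {n k : ℕ} [NeZero n]

lemma polygonVertex_intCast (a : ℤ) : polygonVertex n a = circlePoint (2 * π * a / n) := by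
  have hn : (n : ℝ) ≠ 0 := NeZero.ne _
  have hval : ((a : ZMod n).val : ℝ) = a - n * (a / n : ℤ) := by
    rw [← Int.cast_natCast, ZMod.val_intCast, Int.emod_def]
    push_cast; ring
  rw [polygonVertex, hval, ← circlePoint_add_int_mul_two_pi _ (a / n : ℤ)]
  congr 1
  field_simp
  ring

lemma angleFunctional_polygonVertex (a : ℤ) (m : ℕ) :
    angleFunctional ((2 * a + (k - 1)) * π / n) (polygonVertex n (a + m)) =
      cos ((2 * m - (k - 1)) * π / n) := by
  have hn : (n : ℝ) ≠ 0 := NeZero.ne _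
  rw [← Int.cast_natCast m, ← Int.cast_add, polygonVertex_intCast, angleFunctional_circlePoint]
  congr 1
  push_cast
  field_simp
  ring

lemma cos_le_angleFunctional_polygonVertex_iff (hk : 0 < k) (hkn : k ≤ n) (a : ℤ) {m : ℕ}
    (hm : m < n) :
    cos ((k - 1) * π / n) ≤
        angleFunctional ((2 * a + (k - 1)) * π / n) (polygonVertex n (a + m)) ↔ m < k := by
  have hn : (0 : ℝ) < n := by simpa [Nat.pos_iff_ne_zero] using NeZero.ne n
  have hkn' : (k : ℝ) ≤ n := by exact_mod_cast hkn
  have hm' : (m : ℝ) + 1 ≤ n := by exact_mod_cast hm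
  have hk' : (1 : ℝ) ≤ k := by exact_mod_cast hk
  rw [angleFunctional_polygonVertex, cos_le_cos_iff_le, div_le_div_iff_of_pos_right hn,
    mul_le_mul_iff_of_pos_right pi_pos]
  · constructor <;> intro h
    · exact_mod_cast (show (m : ℝ) < k by linarith)
    · have : (m : ℝ) + 1 ≤ k := by exact_mod_cast h
      linarith
  all_goals
    field_simp
    nlinarith [pi_pos]

/-- The half-plane cut off by the chord from `P a` to `P (a + k - 1)`, whose normal points to
the middle `(2a + k - 1)π/n` of their arc. -/
lemma consecutiveHull_subset_halfPlane (hk : 0 < k) (hkn : k ≤ n) (a : ℤ) :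
    consecutiveHull n k a ⊆
      {x | cos ((k - 1) * π / n) ≤ angleFunctional ((2 * a + (k - 1)) * π / n) x} :=
  convexHull_min (fun _ ⟨_, hm, hp⟩ =>
      hp ▸ (cos_le_angleFunctional_polygonVertex_iff hk hkn a (hm.trans_le hkn)).2 hm)
    (convex_halfSpace_ge (LinearMap.isLinear _) _)

lemma polygonVertex_mem_consecutiveHull_iff (hk : 0 < k) (hkn : k ≤ n) (i j : ZMod n) :
    polygonVertex n j ∈ consecutiveHull n k i ↔ (j - i).val < k := by
  obtain ⟨a, rfl⟩ := ZMod.intCast_surjective i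
  have hj : j = a + ((j - a).val : ZMod n) := by simp
  constructor
  · intro h
    rw [hj] at h
    exact (cos_le_angleFunctional_polygonVertex_iff hk hkn _ (ZMod.val_lt _)).1
      (consecutiveHull_subset_halfPlane hk hkn _ h)
  · intro h
    exact subset_convexHull ℝ _ ⟨_, h, by simp⟩

lemma consecutiveHull_inter_subset (hk : 0 < k) (hkn : 2 * k ≤ n + 1) (i : ZMod n) :
    consecutiveHull n k i ∩ consecutiveHull n k (i + (k - 1 : ℕ)) ⊆
      {polygonVertex n (i + (k - 1 : ℕ))} := by
  rintro x ⟨hx₁, hx₂⟩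
  -- The two chords bound half-planes with normals at angles `t ∓ β` around the shared vertex
  -- at angle `t`; they meet the unit disk in that vertex alone because `cos β > 0`.
  have hn : (0 : ℝ) < n := by simpa [Nat.pos_iff_ne_zero] using NeZero.ne n
  have hkn' : (2 * k : ℝ) ≤ n + 1 := by exact_mod_cast hkn
  have hk' : (1 : ℝ) ≤ k := by exact_mod_cast hk
  obtain ⟨a, rfl⟩ := ZMod.intCast_surjective i
  have hi' : ((a + (k - 1 : ℕ) : ℤ) : ZMod n) = a + (k - 1 : ℕ) := by push_cast; rfl
  set β := ((k : ℝ) - 1) * π / n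
  set t := 2 * π * ((a + (k - 1 : ℕ) : ℤ) : ℝ) / n
  have hkn₁ : k ≤ n := by omega
  have h₁ : cos β ≤ angleFunctional (t - β) x := by
    have hangle : t - β = (2 * a + (k - 1)) * π / n := by
      simp only [t, β]; push_cast [Nat.cast_sub hk]; ring
    rw [hangle]
    exact consecutiveHull_subset_halfPlane hk hkn₁ a hx₁
  have h₂ : cos β ≤ angleFunctional (t + β) x := by
    have hangle : t + β = (2 * ((a + (k - 1 : ℕ) : ℤ) : ℝ) + (k - 1)) * π / n := by
      simp only [t, β]; push_cast [Nat.cast_sub hk]; ring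
    rw [hangle]
    exact consecutiveHull_subset_halfPlane hk hkn₁ _ (hi' ▸ hx₂)
  have hβ : 0 < cos β := by
    apply cos_pos_of_mem_Ioo
    constructor
    · have : 0 ≤ β := by positivity
      linarith [pi_pos]
    · rw [div_lt_iff₀ hn]
      nlinarith [pi_pos]
  rw [Set.mem_singleton_iff, ← hi', polygonVertex_intCast]
  exact eq_circlePoint_of_mem_unitDisk hβ (consecutiveHull_subset_unitDisk _ hx₁) h₁ h₂

end Polygon

lemma Finset.exists_add_mem_of_card_lt {G : Type*} [AddGroup G] [Fintype G] [DecidableEq G]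
    (S : Finset G) (d : G) (h : Fintype.card G < 2 * S.card) : ∃ i ∈ S, i + d ∈ S := by
  obtain ⟨x, hx⟩ := Finset.inter_nonempty_of_card_lt_card_add_card S.subset_univ
    (S.map (Equiv.addRight d).toEmbedding).subset_univ (by simpa [two_mul] using h)
  rw [Finset.mem_inter, Finset.mem_map_equiv] at hx
  exact ⟨x - d, by simpa [sub_eq_add_neg] using hx.2, by simpa using hx.1⟩

lemma ncard_setOf_val_sub_lt {n k : ℕ} [NeZero n] (hkn : k ≤ n) (j : ZMod n) :
    {i : ZMod n | (j - i).val < k}.ncard = k := by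
  have himage : {i : ZMod n | (j - i).val < k} = (fun m : ℕ => j - m) '' Set.Iio k := by
    ext i
    constructor
    · intro h
      exact ⟨(j - i).val, h, by simp⟩
    · rintro ⟨m, hm, rfl⟩
      simpa [ZMod.val_cast_of_lt (hm.trans_le hkn)] using hm
  rw [himage, Set.InjOn.ncard_image, Set.ncard_Iio_nat]
  intro a ha b hb hab
  have := congrArg ZMod.val (sub_right_injective hab)
  rwa [ZMod.val_cast_of_lt (ha.trans_le hkn), ZMod.val_cast_of_lt (hb.trans_le hkn)] at this

end

/-- For the regular `(2k-1)`-gon with `Mᵢ` the convex hull of `k` consecutive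
vertices starting at `Pᵢ`: the intersection of any `k` distinct sets `Mᵢ` is
empty or a single vertex, and every vertex lies in exactly `k` of the sets. -/
theorem polygon_consecutive_hulls (k : ℕ) (hk : 2 ≤ k)
    (P : ZMod (2 * k - 1) → ℝ × ℝ)
    (hP : ∀ j : ZMod (2 * k - 1),
      P j = (Real.cos (2 * π * j.val / (2 * k - 1)),
             Real.sin (2 * π * j.val / (2 * k - 1))))
    (M : ZMod (2 * k - 1) → Set (ℝ × ℝ))
    (hM : ∀ i, M i = convexHull ℝ {p | ∃ m : ℕ, m < k ∧ p = P (i + m)}) :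
    (∀ S : Finset (ZMod (2 * k - 1)), S.card = k →
        (⋂ i ∈ S, M i) = ∅ ∨ ∃ j, (⋂ i ∈ S, M i) = {P j}) ∧
    (∀ j, ({i | P j ∈ M i} : Set (ZMod (2 * k - 1))).ncard = k) := by
  have : NeZero (2 * k - 1) := ⟨by omega⟩
  obtain rfl : P = polygonVertex (2 * k - 1) := funext fun j => by
    rw [hP, polygonVertex, circlePoint, Nat.cast_sub (by omega)]
    push_cast
    rfl
  obtain rfl : M = consecutiveHull (2 * k - 1) k := funext hM
  refine ⟨fun S hS => ?_, fun j => ?_⟩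
  · obtain ⟨i, hi, hi'⟩ := S.exists_add_mem_of_card_lt ((k - 1 : ℕ) : ZMod (2 * k - 1))
      (by rw [ZMod.card, hS]; omega)
    have hsub : ⋂ i ∈ S, consecutiveHull (2 * k - 1) k i ⊆
        {polygonVertex (2 * k - 1) (i + ((k - 1 : ℕ) : ZMod (2 * k - 1)))} :=
      fun x hx => consecutiveHull_inter_subset (by omega) (by omega) i
        ⟨Set.mem_iInter₂.1 hx i hi, Set.mem_iInter₂.1 hx _ hi'⟩
    exact (Set.subset_singleton_iff_eq.1 hsub).imp_right fun h => ⟨_, h⟩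
  · simp_rw [polygonVertex_mem_consecutiveHull_iff (by omega : 0 < k) (by omega : k ≤ 2 * k - 1)]
    exact ncard_setOf_val_sub_lt (by omega) j
end

section
/- There do not exist ten compact convex sets in ℝ² labeled 1,2,3,4,5,6,a,b,c,d such that: every triple of these sets has nonempty intersection EXCEPT exactly the following triples, which have empty intersection: all four triples among {a,b,c,d}, and the triples {1,a,b}, {2,a,c}, {3,a,d}, {4,b,c}, {5,b,d}, {6,c,d}. -/
open Module

set_option linter.unreachableTactic false
set_option linter.unusedTactic false

lemma radon4 (w x y z : ℝ × ℝ) :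
    ∃ q : ℝ × ℝ,
      (q ∈ convexHull ℝ ({w, x} : Set (ℝ × ℝ)) ∧ q ∈ convexHull ℝ ({y, z} : Set (ℝ × ℝ))) ∨
      (q ∈ convexHull ℝ ({w, y} : Set (ℝ × ℝ)) ∧ q ∈ convexHull ℝ ({x, z} : Set (ℝ × ℝ))) ∨
      (q ∈ convexHull ℝ ({w, z} : Set (ℝ × ℝ)) ∧ q ∈ convexHull ℝ ({x, y} : Set (ℝ × ℝ))) ∨
      w ∈ convexHull ℝ ({x, y, z} : Set (ℝ × ℝ)) ∨ x ∈ convexHull ℝ ({w, y, z} : Set (ℝ × ℝ)) ∨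
      y ∈ convexHull ℝ ({w, x, z} : Set (ℝ × ℝ)) ∨ z ∈ convexHull ℝ ({w, x, y} : Set (ℝ × ℝ)) := by
  classical
  have hdep : ¬ AffineIndependent ℝ ![w, x, y, z] := by
    rw [← finrank_vectorSpan_le_iff_not_affineIndependent ℝ ![w, x, y, z]
      (by simp : Fintype.card (Fin 4) = 3 + 1)]
    exact (Submodule.finrank_le _).trans (by simp)
  obtain ⟨I, q, hqI, hqIc⟩ := Convex.radon_partition hdep
  have F : ∀ T : Set (ℝ × ℝ), (∀ i, i ∈ I → ![w, x, y, z] i ∈ T) → q ∈ convexHull ℝ T := by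
    intro T hT
    refine convexHull_mono ?_ hqI
    rintro r ⟨i, hi, rfl⟩
    exact hT i hi
  have G : ∀ T : Set (ℝ × ℝ), (∀ i, i ∉ I → ![w, x, y, z] i ∈ T) → q ∈ convexHull ℝ T := by
    intro T hT
    refine convexHull_mono ?_ hqIc
    rintro r ⟨i, hi, rfl⟩
    exact hT i hi
  refine ⟨q, ?_⟩
  by_cases h0 : (0 : Fin 4) ∈ I <;> by_cases h1 : (1 : Fin 4) ∈ I <;>
    by_cases h2 : (2 : Fin 4) ∈ I <;> by_cases h3 : (3 : Fin 4) ∈ I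
  · exact absurd (G ∅ (fun i hi => absurd (show i ∈ I by fin_cases i <;> assumption) hi))
      (by simp)
  · refine Or.inr <| Or.inr <| Or.inr <| Or.inr <| Or.inr <| Or.inr ?_
    have hs : q = z := by
      have := G {z} (fun i hi => by
        fin_cases i <;>
          first
            | exact absurd h0 hi
            | exact absurd h1 hi
            | exact absurd h2 hi
            | exact rfl
        )
      rwa [convexHull_singleton, Set.mem_singleton_iff] at this
    exact hs ▸ F {w, x, y} (fun i hi => by
        fin_cases i <;>
          first
            | exact absurd hi h3
            | exact Set.mem_insert _ _
            | exact Set.mem_insert_iff.mpr (Or.inr (Set.mem_insert _ _))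
            | exact Set.mem_insert_iff.mpr (Or.inr rfl)
            | exact Set.mem_insert_iff.mpr (Or.inr (Set.mem_insert_iff.mpr (Or.inr rfl)))
        )
  · refine Or.inr <| Or.inr <| Or.inr <| Or.inr <| Or.inr <| Or.inl ?_
    have hs : q = y := by
      have := G {y} (fun i hi => by
        fin_cases i <;>
          first
            | exact absurd h0 hi
            | exact absurd h1 hi
            | exact absurd h3 hi
            | exact rfl
        )
      rwa [convexHull_singleton, Set.mem_singleton_iff] at this
    exact hs ▸ F {w, x, z} (fun i hi => by
        fin_cases i <;>
          first
            | exact absurd hi h2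
            | exact Set.mem_insert _ _
            | exact Set.mem_insert_iff.mpr (Or.inr (Set.mem_insert _ _))
            | exact Set.mem_insert_iff.mpr (Or.inr rfl)
            | exact Set.mem_insert_iff.mpr (Or.inr (Set.mem_insert_iff.mpr (Or.inr rfl)))
        )
  · exact Or.inl ⟨F {w, x} (fun i hi => by
        fin_cases i <;>
          first
            | exact absurd hi h2
            | exact absurd hi h3
            | exact Set.mem_insert _ _
            | exact Set.mem_insert_iff.mpr (Or.inr (Set.mem_insert _ _))
            | exact Set.mem_insert_iff.mpr (Or.inr rfl)
            | exact Set.mem_insert_iff.mpr (Or.inr (Set.mem_insert_iff.mpr (Or.inr rfl)))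
        ),
      G {y, z} (fun i hi => by
        fin_cases i <;>
          first
            | exact absurd h0 hi
            | exact absurd h1 hi
            | exact Set.mem_insert _ _
            | exact Set.mem_insert_iff.mpr (Or.inr (Set.mem_insert _ _))
            | exact Set.mem_insert_iff.mpr (Or.inr rfl)
            | exact Set.mem_insert_iff.mpr (Or.inr (Set.mem_insert_iff.mpr (Or.inr rfl)))
        )⟩
  · refine Or.inr <| Or.inr <| Or.inr <| Or.inr <| Or.inl ?_
    have hs : q = x := by
      have := G {x} (fun i hi => by
        fin_cases i <;>
          first
            | exact absurd h0 hi
            | exact absurd h2 hi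
            | exact absurd h3 hi
            | exact rfl
        )
      rwa [convexHull_singleton, Set.mem_singleton_iff] at this
    exact hs ▸ F {w, y, z} (fun i hi => by
        fin_cases i <;>
          first
            | exact absurd hi h1
            | exact Set.mem_insert _ _
            | exact Set.mem_insert_iff.mpr (Or.inr (Set.mem_insert _ _))
            | exact Set.mem_insert_iff.mpr (Or.inr rfl)
            | exact Set.mem_insert_iff.mpr (Or.inr (Set.mem_insert_iff.mpr (Or.inr rfl)))
        )
  · exact Or.inr <| Or.inl ⟨F {w, y} (fun i hi => by
        fin_cases i <;>
          first
            | exact absurd hi h1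
            | exact absurd hi h3
            | exact Set.mem_insert _ _
            | exact Set.mem_insert_iff.mpr (Or.inr (Set.mem_insert _ _))
            | exact Set.mem_insert_iff.mpr (Or.inr rfl)
            | exact Set.mem_insert_iff.mpr (Or.inr (Set.mem_insert_iff.mpr (Or.inr rfl)))
        ),
      G {x, z} (fun i hi => by
        fin_cases i <;>
          first
            | exact absurd h0 hi
            | exact absurd h2 hi
            | exact Set.mem_insert _ _
            | exact Set.mem_insert_iff.mpr (Or.inr (Set.mem_insert _ _))
            | exact Set.mem_insert_iff.mpr (Or.inr rfl)
            | exact Set.mem_insert_iff.mpr (Or.inr (Set.mem_insert_iff.mpr (Or.inr rfl)))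
        )⟩
  · exact Or.inr <| Or.inr <| Or.inl ⟨F {w, z} (fun i hi => by
        fin_cases i <;>
          first
            | exact absurd hi h1
            | exact absurd hi h2
            | exact Set.mem_insert _ _
            | exact Set.mem_insert_iff.mpr (Or.inr (Set.mem_insert _ _))
            | exact Set.mem_insert_iff.mpr (Or.inr rfl)
            | exact Set.mem_insert_iff.mpr (Or.inr (Set.mem_insert_iff.mpr (Or.inr rfl)))
        ),
      G {x, y} (fun i hi => by
        fin_cases i <;>
          first
            | exact absurd h0 hi
            | exact absurd h3 hi
            | exact Set.mem_insert _ _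
            | exact Set.mem_insert_iff.mpr (Or.inr (Set.mem_insert _ _))
            | exact Set.mem_insert_iff.mpr (Or.inr rfl)
            | exact Set.mem_insert_iff.mpr (Or.inr (Set.mem_insert_iff.mpr (Or.inr rfl)))
        )⟩
  · refine Or.inr <| Or.inr <| Or.inr <| Or.inl ?_
    have hs : q = w := by
      have := F {w} (fun i hi => by
        fin_cases i <;>
          first
            | exact absurd hi h1
            | exact absurd hi h2
            | exact absurd hi h3
            | exact rfl
        )
      rwa [convexHull_singleton, Set.mem_singleton_iff] at this
    exact hs ▸ G {x, y, z} (fun i hi => by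
        fin_cases i <;>
          first
            | exact absurd h0 hi
            | exact Set.mem_insert _ _
            | exact Set.mem_insert_iff.mpr (Or.inr (Set.mem_insert _ _))
            | exact Set.mem_insert_iff.mpr (Or.inr rfl)
            | exact Set.mem_insert_iff.mpr (Or.inr (Set.mem_insert_iff.mpr (Or.inr rfl)))
        )
  · refine Or.inr <| Or.inr <| Or.inr <| Or.inl ?_
    have hs : q = w := by
      have := G {w} (fun i hi => by
        fin_cases i <;>
          first
            | exact absurd h1 hi
            | exact absurd h2 hi
            | exact absurd h3 hi
            | exact rfl
        )
      rwa [convexHull_singleton, Set.mem_singleton_iff] at this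
    exact hs ▸ F {x, y, z} (fun i hi => by
        fin_cases i <;>
          first
            | exact absurd hi h0
            | exact Set.mem_insert _ _
            | exact Set.mem_insert_iff.mpr (Or.inr (Set.mem_insert _ _))
            | exact Set.mem_insert_iff.mpr (Or.inr rfl)
            | exact Set.mem_insert_iff.mpr (Or.inr (Set.mem_insert_iff.mpr (Or.inr rfl)))
        )
  · exact Or.inr <| Or.inr <| Or.inl ⟨G {w, z} (fun i hi => by
        fin_cases i <;>
          first
            | exact absurd h1 hi
            | exact absurd h2 hi
            | exact Set.mem_insert _ _
            | exact Set.mem_insert_iff.mpr (Or.inr (Set.mem_insert _ _))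
            | exact Set.mem_insert_iff.mpr (Or.inr rfl)
            | exact Set.mem_insert_iff.mpr (Or.inr (Set.mem_insert_iff.mpr (Or.inr rfl)))
        ),
      F {x, y} (fun i hi => by
        fin_cases i <;>
          first
            | exact absurd hi h0
            | exact absurd hi h3
            | exact Set.mem_insert _ _
            | exact Set.mem_insert_iff.mpr (Or.inr (Set.mem_insert _ _))
            | exact Set.mem_insert_iff.mpr (Or.inr rfl)
            | exact Set.mem_insert_iff.mpr (Or.inr (Set.mem_insert_iff.mpr (Or.inr rfl)))
        )⟩
  · exact Or.inr <| Or.inl ⟨G {w, y} (fun i hi => by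
        fin_cases i <;>
          first
            | exact absurd h1 hi
            | exact absurd h3 hi
            | exact Set.mem_insert _ _
            | exact Set.mem_insert_iff.mpr (Or.inr (Set.mem_insert _ _))
            | exact Set.mem_insert_iff.mpr (Or.inr rfl)
            | exact Set.mem_insert_iff.mpr (Or.inr (Set.mem_insert_iff.mpr (Or.inr rfl)))
        ),
      F {x, z} (fun i hi => by
        fin_cases i <;>
          first
            | exact absurd hi h0
            | exact absurd hi h2
            | exact Set.mem_insert _ _
            | exact Set.mem_insert_iff.mpr (Or.inr (Set.mem_insert _ _))
            | exact Set.mem_insert_iff.mpr (Or.inr rfl)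
            | exact Set.mem_insert_iff.mpr (Or.inr (Set.mem_insert_iff.mpr (Or.inr rfl)))
        )⟩
  · refine Or.inr <| Or.inr <| Or.inr <| Or.inr <| Or.inl ?_
    have hs : q = x := by
      have := F {x} (fun i hi => by
        fin_cases i <;>
          first
            | exact absurd hi h0
            | exact absurd hi h2
            | exact absurd hi h3
            | exact rfl
        )
      rwa [convexHull_singleton, Set.mem_singleton_iff] at this
    exact hs ▸ G {w, y, z} (fun i hi => by
        fin_cases i <;>
          first
            | exact absurd h1 hi
            | exact Set.mem_insert _ _
            | exact Set.mem_insert_iff.mpr (Or.inr (Set.mem_insert _ _))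
            | exact Set.mem_insert_iff.mpr (Or.inr rfl)
            | exact Set.mem_insert_iff.mpr (Or.inr (Set.mem_insert_iff.mpr (Or.inr rfl)))
        )
  · exact Or.inl ⟨G {w, x} (fun i hi => by
        fin_cases i <;>
          first
            | exact absurd h2 hi
            | exact absurd h3 hi
            | exact Set.mem_insert _ _
            | exact Set.mem_insert_iff.mpr (Or.inr (Set.mem_insert _ _))
            | exact Set.mem_insert_iff.mpr (Or.inr rfl)
            | exact Set.mem_insert_iff.mpr (Or.inr (Set.mem_insert_iff.mpr (Or.inr rfl)))
        ),
      F {y, z} (fun i hi => by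
        fin_cases i <;>
          first
            | exact absurd hi h0
            | exact absurd hi h1
            | exact Set.mem_insert _ _
            | exact Set.mem_insert_iff.mpr (Or.inr (Set.mem_insert _ _))
            | exact Set.mem_insert_iff.mpr (Or.inr rfl)
            | exact Set.mem_insert_iff.mpr (Or.inr (Set.mem_insert_iff.mpr (Or.inr rfl)))
        )⟩
  · refine Or.inr <| Or.inr <| Or.inr <| Or.inr <| Or.inr <| Or.inl ?_
    have hs : q = y := by
      have := F {y} (fun i hi => by
        fin_cases i <;>
          first
            | exact absurd hi h0
            | exact absurd hi h1
            | exact absurd hi h3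
            | exact rfl
        )
      rwa [convexHull_singleton, Set.mem_singleton_iff] at this
    exact hs ▸ G {w, x, z} (fun i hi => by
        fin_cases i <;>
          first
            | exact absurd h2 hi
            | exact Set.mem_insert _ _
            | exact Set.mem_insert_iff.mpr (Or.inr (Set.mem_insert _ _))
            | exact Set.mem_insert_iff.mpr (Or.inr rfl)
            | exact Set.mem_insert_iff.mpr (Or.inr (Set.mem_insert_iff.mpr (Or.inr rfl)))
        )
  · refine Or.inr <| Or.inr <| Or.inr <| Or.inr <| Or.inr <| Or.inr ?_
    have hs : q = z := by
      have := F {z} (fun i hi => by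
        fin_cases i <;>
          first
            | exact absurd hi h0
            | exact absurd hi h1
            | exact absurd hi h2
            | exact rfl
        )
      rwa [convexHull_singleton, Set.mem_singleton_iff] at this
    exact hs ▸ G {w, x, y} (fun i hi => by
        fin_cases i <;>
          first
            | exact absurd h3 hi
            | exact Set.mem_insert _ _
            | exact Set.mem_insert_iff.mpr (Or.inr (Set.mem_insert _ _))
            | exact Set.mem_insert_iff.mpr (Or.inr rfl)
            | exact Set.mem_insert_iff.mpr (Or.inr (Set.mem_insert_iff.mpr (Or.inr rfl)))
        )
  · exact absurd (F ∅ (fun i hi => absurd hi (show i ∉ I by fin_cases i <;> assumption)))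
      (by simp)


lemma tri_seg {x y z u v q1 q2 q3 : ℝ × ℝ}
    (h1 : q1 ∈ segment ℝ x y) (h2 : q2 ∈ segment ℝ x z) (h3 : q3 ∈ segment ℝ y z)
    (hu1 : q1 ∈ segment ℝ u v) (hu2 : q2 ∈ segment ℝ u v) (hu3 : q3 ∈ segment ℝ u v) :
    x ∈ segment ℝ u v ∨ y ∈ segment ℝ u v ∨ z ∈ segment ℝ u v ∨
    x ∈ segment ℝ y z ∨ y ∈ segment ℝ x z ∨ z ∈ segment ℝ x y := by
  by_cases hcol : Collinear ℝ ({x, y, z} : Set (ℝ × ℝ))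
  · rcases hcol.wbtw_or_wbtw_or_wbtw with h | h | h
    · exact Or.inr <| Or.inr <| Or.inr <| Or.inr <| Or.inl h.mem_segment
    · refine Or.inr <| Or.inr <| Or.inr <| Or.inr <| Or.inr ?_
      rw [segment_symm]
      exact h.mem_segment
    · refine Or.inr <| Or.inr <| Or.inr <| Or.inl ?_
      rw [segment_symm]
      exact h.mem_segment
  · obtain ⟨a1, b1, ha1, hb1, hab1, hq1⟩ := h1
    obtain ⟨a2, c2, ha2, hc2, hac2, hq2⟩ := h2
    obtain ⟨b3, c3, hb3, hc3, hbc3, hq3⟩ := h3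
    have e1 : a1 = 1 - b1 := by linarith
    have e2 : a2 = 1 - c2 := by linarith
    have e3 : b3 = 1 - c3 := by linarith
    subst e1 e2 e3
    have c1f : (1 - b1) * x.1 + b1 * y.1 = q1.1 := by
      have := congrArg Prod.fst hq1; simpa using this
    have c1s : (1 - b1) * x.2 + b1 * y.2 = q1.2 := by
      have := congrArg Prod.snd hq1; simpa using this
    have c2f : (1 - c2) * x.1 + c2 * z.1 = q2.1 := by
      have := congrArg Prod.fst hq2; simpa using this
    have c2s : (1 - c2) * x.2 + c2 * z.2 = q2.2 := by
      have := congrArg Prod.snd hq2; simpa using this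
    have c3f : (1 - c3) * y.1 + c3 * z.1 = q3.1 := by
      have := congrArg Prod.fst hq3; simpa using this
    have c3s : (1 - c3) * y.2 + c3 * z.2 = q3.2 := by
      have := congrArg Prod.snd hq3; simpa using this
    have hcan : ∀ s t : ℝ, s * (y.1 - x.1) + t * (z.1 - x.1) = 0 →
        s * (y.2 - x.2) + t * (z.2 - x.2) = 0 → s = 0 ∧ t = 0 := by
      intro s t hf hs2
      by_contra hcon
      apply hcol
      rw [collinear_iff_exists_forall_eq_smul_vadd]
      by_cases hs : s = 0
      · have ht : t ≠ 0 := fun h' => hcon ⟨hs, h'⟩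
        have hz1 : z.1 = x.1 := by
          have : t * (z.1 - x.1) = 0 := by rw [hs] at hf; linarith
          rcases mul_eq_zero.mp this with h' | h'
          · exact absurd h' ht
          · linarith
        have hz2 : z.2 = x.2 := by
          have : t * (z.2 - x.2) = 0 := by rw [hs] at hs2; linarith
          rcases mul_eq_zero.mp this with h' | h'
          · exact absurd h' ht
          · linarith
        have hzx : z = x := Prod.ext hz1 hz2
        refine ⟨x, y - x, ?_⟩
        rintro p (rfl | rfl | rfl)
        · exact ⟨0, by simp⟩
        · exact ⟨1, by simp⟩
        · exact ⟨0, by simp [hzx]⟩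
      · refine ⟨x, z - x, ?_⟩
        rintro p (rfl | rfl | rfl)
        · exact ⟨0, by simp⟩
        · refine ⟨-t / s, ?_⟩
          have hy1 : p.1 = -t / s * (z.1 - x.1) + x.1 := by
            field_simp
            linear_combination hf
          have hy2 : p.2 = -t / s * (z.2 - x.2) + x.2 := by
            field_simp
            linear_combination hs2
          refine Prod.ext ?_ ?_ <;> simpa [vadd_eq_add] using ‹_›
        · exact ⟨1, by simp⟩
    have hqcol : Collinear ℝ ({q1, q2, q3} : Set (ℝ × ℝ)) := by
      rw [collinear_iff_exists_forall_eq_smul_vadd]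
      refine ⟨u, v - u, ?_⟩
      rintro p (rfl | rfl | rfl)
      · obtain ⟨a, b, ha, hb, hab, hq⟩ := hu1
        refine ⟨b, ?_⟩
        rw [← hq]
        have e : a = 1 - b := by linarith
        subst e
        rw [vadd_eq_add]
        module
      · obtain ⟨a, b, ha, hb, hab, hq⟩ := hu2
        refine ⟨b, ?_⟩
        rw [← hq]
        have e : a = 1 - b := by linarith
        subst e
        rw [vadd_eq_add]
        module
      · obtain ⟨a, b, ha, hb, hab, hq⟩ := hu3
        refine ⟨b, ?_⟩
        rw [← hq]
        have e : a = 1 - b := by linarith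
        subst e
        rw [vadd_eq_add]
        module
    rcases hqcol.wbtw_or_wbtw_or_wbtw with h | h | h
    · obtain ⟨a, b, ha, hb, hab, heq⟩ := h.mem_segment
      have e : a = 1 - b := by linarith
      subst e
      have hf : (1 - b) * q1.1 + b * q3.1 = q2.1 := by
        have := congrArg Prod.fst heq; simpa using this
      have hs' : (1 - b) * q1.2 + b * q3.2 = q2.2 := by
        have := congrArg Prod.snd heq; simpa using this
      obtain ⟨hS, hT⟩ := hcan ((1 - b) * b1 + b * (1 - c3)) (b * c3 - c2)
        (by linear_combination hf + (1 - b) * c1f + b * c3f - c2f)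
        (by linear_combination hs' + (1 - b) * c1s + b * c3s - c2s)
      rcases mul_eq_zero.mp (show (1 - b) * b1 = 0 by
          linarith [mul_nonneg ha hb1, mul_nonneg hb (show (0:ℝ) ≤ 1 - c3 by linarith), hS])
        with hb0 | hb10
      · have hbe : b = 1 := by linarith
        subst hbe
        have hc31 : c3 = 1 := by
          have := hS
          ring_nf at this ⊢
          linarith
        have hz : z = q3 := by
          rw [← hq3, hc31]
          module
        exact Or.inr <| Or.inr <| Or.inl (hz ▸ hu3)
      · have hx : x = q1 := by
          rw [← hq1, hb10]
          module
        exact Or.inl (hx ▸ hu1)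
    · obtain ⟨a, b, ha, hb, hab, heq⟩ := h.mem_segment
      have e : a = 1 - b := by linarith
      subst e
      have hf : (1 - b) * q2.1 + b * q1.1 = q3.1 := by
        have := congrArg Prod.fst heq; simpa using this
      have hs' : (1 - b) * q2.2 + b * q1.2 = q3.2 := by
        have := congrArg Prod.snd heq; simpa using this
      obtain ⟨hS, hT⟩ := hcan (b * b1 - (1 - c3)) ((1 - b) * c2 - c3)
        (by linear_combination hf + (1 - b) * c2f + b * c1f - c3f)
        (by linear_combination hs' + (1 - b) * c2s + b * c1s - c3s)
      have k1 : 0 ≤ b * (1 - b1) := mul_nonneg hb (by linarith)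
      have k2 : 0 ≤ (1 - b) * (1 - c2) := mul_nonneg (by linarith) (by linarith)
      have ksum : b * (1 - b1) + (1 - b) * (1 - c2) = 0 := by linear_combination - hS - hT
      have k1' : b * (1 - b1) = 0 := by linarith
      have k2' : (1 - b) * (1 - c2) = 0 := by linarith
      rcases mul_eq_zero.mp k1' with hb0 | hb11
      · subst hb0
        have hc21 : c2 = 1 := by
          have := k2'
          ring_nf at this ⊢
          linarith
        have hz : z = q2 := by
          rw [← hq2, hc21]
          module
        exact Or.inr <| Or.inr <| Or.inl (hz ▸ hu2)
      · have hb1' : b1 = 1 := by linarith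
        have hy : y = q1 := by
          rw [← hq1, hb1']
          module
        exact Or.inr <| Or.inl (hy ▸ hu1)
    · obtain ⟨a, b, ha, hb, hab, heq⟩ := h.mem_segment
      have e : a = 1 - b := by linarith
      subst e
      have hf : (1 - b) * q3.1 + b * q2.1 = q1.1 := by
        have := congrArg Prod.fst heq; simpa using this
      have hs' : (1 - b) * q3.2 + b * q2.2 = q1.2 := by
        have := congrArg Prod.snd heq; simpa using this
      obtain ⟨hS, hT⟩ := hcan ((1 - b) * (1 - c3) - b1) ((1 - b) * c3 + b * c2)
        (by linear_combination hf + (1 - b) * c3f + b * c2f - c1f)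
        (by linear_combination hs' + (1 - b) * c3s + b * c2s - c1s)
      rcases mul_eq_zero.mp (show (1 - b) * c3 = 0 by
          linarith [mul_nonneg ha hc3, mul_nonneg hb hc2, hT]) with hb0 | hc30
      · have hbe : b = 1 := by linarith
        subst hbe
        have hb10 : b1 = 0 := by
          have := hS
          ring_nf at this ⊢
          linarith
        have hx : x = q1 := by
          rw [← hq1, hb10]
          module
        exact Or.inl (hx ▸ hu1)
      · have hy : y = q3 := by
          rw [← hq3, hc30]
          module
        exact Or.inr <| Or.inl (hy ▸ hu3)


/-- The blue triples of the witness hypergraph `WH(3)` on ten vertices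
`1,…,6,a,b,c,d` (here `0,…,5,6,7,8,9`): all four triples among `{a,b,c,d}`,
together with `{1,a,b},{2,a,c},{3,a,d},{4,b,c},{5,b,d},{6,c,d}`. -/
def WH3Blue : Finset (Finset (Fin 10)) :=
  {{6,7,8},{6,7,9},{6,8,9},{7,8,9},
   {0,6,7},{1,6,8},{2,6,9},{3,7,8},{4,7,9},{5,8,9}}

set_option maxRecDepth 40000 in
/-- `WH(3)` is not 2-representable: there are no ten compact convex planar
sets whose triples with empty intersection are exactly the blue triples of
`WH(3)`. -/
theorem WH3_not_convex :
    ¬ ∃ f : Fin 10 → Set (ℝ × ℝ),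
        (∀ i, IsCompact (f i)) ∧ (∀ i, Convex ℝ (f i)) ∧
        ∀ s : Finset (Fin 10), s.card = 3 →
          ((⋂ i ∈ s, f i) = ∅ ↔ s ∈ WH3Blue) := by
  rintro ⟨f, hcomp, hconv, hiff⟩
  have hblue : ∀ i j k : Fin 10, ({i, j, k} : Finset (Fin 10)).card = 3 →
      ({i, j, k} : Finset (Fin 10)) ∈ WH3Blue →
      ∀ q : ℝ × ℝ, q ∈ f i → q ∈ f j → q ∈ f k → False := by
    intro i j k hc hb q hi hj hk
    have he := (hiff _ hc).mpr hb
    have hq : q ∈ ⋂ l ∈ ({i, j, k} : Finset (Fin 10)), f l := by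
      simp only [Set.mem_iInter]
      intro l hl
      rcases Finset.mem_insert.mp hl with rfl | hl
      · exact hi
      rcases Finset.mem_insert.mp hl with rfl | hl
      · exact hj
      have := Finset.mem_singleton.mp hl
      subst this
      exact hk
    rw [he] at hq
    exact hq
  have red : ∀ s : Finset (Fin 10), s.card = 3 → s ∉ WH3Blue → (⋂ i ∈ s, f i).Nonempty := by
    intro s hc hb
    exact Set.nonempty_iff_ne_empty.mpr (fun he => hb ((hiff s hc).mp he))
  have helly : ∀ s : Finset (Fin 10), s.card = 7 →
      (∀ I : Finset (Fin 10), I ⊆ s → I.card = 3 → I ∉ WH3Blue) →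
      (⋂ i ∈ s, f i).Nonempty := by
    intro s hs hred
    apply Convex.helly_theorem' (𝕜 := ℝ) (fun i _ => hconv i)
    intro I hIs hIcard
    have hfr : Module.finrank ℝ (ℝ × ℝ) = 2 := by simp
    rw [hfr] at hIcard
    obtain ⟨J, hIJ, hJs, hJcard⟩ := Finset.exists_subsuperset_card_eq hIs hIcard (by omega)
    exact (red J hJcard (hred J hJs hJcard)).mono
      (Set.biInter_mono hIJ (fun _ _ => Set.Subset.rfl))
  have hhull2 : ∀ (i : Fin 10) {A B : ℝ × ℝ}, A ∈ f i → B ∈ f i →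
      ∀ {q : ℝ × ℝ}, q ∈ convexHull ℝ ({A, B} : Set (ℝ × ℝ)) → q ∈ f i := by
    intro i A B hA hB q hq
    refine convexHull_min ?_ (hconv i) hq
    intro r hr
    simp only [Set.mem_insert_iff, Set.mem_singleton_iff] at hr
    rcases hr with rfl | rfl <;> assumption
  have hhull3 : ∀ (i : Fin 10) {A B C : ℝ × ℝ}, A ∈ f i → B ∈ f i → C ∈ f i →
      ∀ {q : ℝ × ℝ}, q ∈ convexHull ℝ ({A, B, C} : Set (ℝ × ℝ)) → q ∈ f i := by
    intro i A B C hA hB hC q hq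
    refine convexHull_min ?_ (hconv i) hq
    intro r hr
    simp only [Set.mem_insert_iff, Set.mem_singleton_iff] at hr
    rcases hr with rfl | rfl | rfl <;> assumption
  have hseg : ∀ (i : Fin 10) {A B : ℝ × ℝ}, A ∈ f i → B ∈ f i →
      ∀ {q : ℝ × ℝ}, q ∈ segment ℝ A B → q ∈ f i := by
    intro i A B hA hB q hq
    exact hhull2 i hA hB (by rwa [convexHull_pair])
  obtain ⟨Pab, hPab⟩ := helly ({1, 2, 3, 4, 5, 6, 7} : Finset (Fin 10)) (by decide) (by decide)
  have mab : ∀ i ∈ ({1, 2, 3, 4, 5, 6, 7} : Finset (Fin 10)), Pab ∈ f i := by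
    intro i hi
    simp only [Set.mem_iInter] at hPab
    exact hPab i hi
  obtain ⟨Pcd, hPcd⟩ := helly ({0, 1, 2, 3, 4, 8, 9} : Finset (Fin 10)) (by decide) (by decide)
  have mcd : ∀ i ∈ ({0, 1, 2, 3, 4, 8, 9} : Finset (Fin 10)), Pcd ∈ f i := by
    intro i hi
    simp only [Set.mem_iInter] at hPcd
    exact hPcd i hi
  obtain ⟨Pac, hPac⟩ := helly ({0, 2, 3, 4, 5, 6, 8} : Finset (Fin 10)) (by decide) (by decide)
  have mac : ∀ i ∈ ({0, 2, 3, 4, 5, 6, 8} : Finset (Fin 10)), Pac ∈ f i := by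
    intro i hi
    simp only [Set.mem_iInter] at hPac
    exact hPac i hi
  obtain ⟨Pad, hPad⟩ := helly ({0, 1, 3, 4, 5, 6, 9} : Finset (Fin 10)) (by decide) (by decide)
  have mad : ∀ i ∈ ({0, 1, 3, 4, 5, 6, 9} : Finset (Fin 10)), Pad ∈ f i := by
    intro i hi
    simp only [Set.mem_iInter] at hPad
    exact hPad i hi
  obtain ⟨Pbc, hPbc⟩ := helly ({0, 1, 2, 4, 5, 7, 8} : Finset (Fin 10)) (by decide) (by decide)
  have mbc : ∀ i ∈ ({0, 1, 2, 4, 5, 7, 8} : Finset (Fin 10)), Pbc ∈ f i := by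
    intro i hi
    simp only [Set.mem_iInter] at hPbc
    exact hPbc i hi
  have key1 : ∃ q : ℝ × ℝ, q ∈ convexHull ℝ ({Pab, Pcd} : Set (ℝ × ℝ)) ∧ q ∈ convexHull ℝ ({Pac, Pad} : Set (ℝ × ℝ)) := by
    rcases radon4 Pab Pcd Pac Pad with ⟨q, h | h | h | h | h | h | h⟩
    · exact ⟨q, h⟩
    · exact (hblue 2 6 9 (by decide) (by decide) _ (hhull2 2 (mab 2 (by decide)) (mac 2 (by decide)) h.1) (hhull2 6 (mab 6 (by decide)) (mac 6 (by decide)) h.1) (hhull2 9 (mcd 9 (by decide)) (mad 9 (by decide)) h.2)).elim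
    · exact (hblue 1 6 8 (by decide) (by decide) _ (hhull2 1 (mab 1 (by decide)) (mad 1 (by decide)) h.1) (hhull2 6 (mab 6 (by decide)) (mad 6 (by decide)) h.1) (hhull2 8 (mcd 8 (by decide)) (mac 8 (by decide)) h.2)).elim
    · exact (hblue 0 6 7 (by decide) (by decide) Pab (hhull3 0 (mcd 0 (by decide)) (mac 0 (by decide)) (mad 0 (by decide)) h) (mab 6 (by decide)) (mab 7 (by decide))).elim
    · exact (hblue 6 8 9 (by decide) (by decide) Pcd (hhull3 6 (mab 6 (by decide)) (mac 6 (by decide)) (mad 6 (by decide)) h) (mcd 8 (by decide)) (mcd 9 (by decide))).elim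
    · exact (hblue 1 6 8 (by decide) (by decide) Pac (hhull3 1 (mab 1 (by decide)) (mcd 1 (by decide)) (mad 1 (by decide)) h) (mac 6 (by decide)) (mac 8 (by decide))).elim
    · exact (hblue 2 6 9 (by decide) (by decide) Pad (hhull3 2 (mab 2 (by decide)) (mcd 2 (by decide)) (mac 2 (by decide)) h) (mad 6 (by decide)) (mad 9 (by decide))).elim
  have key2 : ∃ q : ℝ × ℝ, q ∈ convexHull ℝ ({Pab, Pcd} : Set (ℝ × ℝ)) ∧ q ∈ convexHull ℝ ({Pac, Pbc} : Set (ℝ × ℝ)) := by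
    rcases radon4 Pab Pcd Pac Pbc with ⟨q, h | h | h | h | h | h | h⟩
    · exact ⟨q, h⟩
    · exact (hblue 1 6 8 (by decide) (by decide) _ (hhull2 1 (mcd 1 (by decide)) (mbc 1 (by decide)) h.2) (hhull2 6 (mab 6 (by decide)) (mac 6 (by decide)) h.1) (hhull2 8 (mcd 8 (by decide)) (mbc 8 (by decide)) h.2)).elim
    · exact (hblue 3 7 8 (by decide) (by decide) _ (hhull2 3 (mcd 3 (by decide)) (mac 3 (by decide)) h.2) (hhull2 7 (mab 7 (by decide)) (mbc 7 (by decide)) h.1) (hhull2 8 (mcd 8 (by decide)) (mac 8 (by decide)) h.2)).elim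
    · exact (hblue 6 7 8 (by decide) (by decide) Pab (mab 6 (by decide)) (mab 7 (by decide)) (hhull3 8 (mcd 8 (by decide)) (mac 8 (by decide)) (mbc 8 (by decide)) h)).elim
    · exact (hblue 5 8 9 (by decide) (by decide) Pcd (hhull3 5 (mab 5 (by decide)) (mac 5 (by decide)) (mbc 5 (by decide)) h) (mcd 8 (by decide)) (mcd 9 (by decide))).elim
    · exact (hblue 1 6 8 (by decide) (by decide) Pac (hhull3 1 (mab 1 (by decide)) (mcd 1 (by decide)) (mbc 1 (by decide)) h) (mac 6 (by decide)) (mac 8 (by decide))).elim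
    · exact (hblue 3 7 8 (by decide) (by decide) Pbc (hhull3 3 (mab 3 (by decide)) (mcd 3 (by decide)) (mac 3 (by decide)) h) (mbc 7 (by decide)) (mbc 8 (by decide))).elim
  have key3 : ∃ q : ℝ × ℝ, q ∈ convexHull ℝ ({Pab, Pcd} : Set (ℝ × ℝ)) ∧ q ∈ convexHull ℝ ({Pad, Pbc} : Set (ℝ × ℝ)) := by
    rcases radon4 Pab Pcd Pad Pbc with ⟨q, h | h | h | h | h | h | h⟩
    · exact ⟨q, h⟩
    · exact (hblue 1 6 8 (by decide) (by decide) _ (hhull2 1 (mab 1 (by decide)) (mad 1 (by decide)) h.1) (hhull2 6 (mab 6 (by decide)) (mad 6 (by decide)) h.1) (hhull2 8 (mcd 8 (by decide)) (mbc 8 (by decide)) h.2)).elim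
    · exact (hblue 4 7 9 (by decide) (by decide) _ (hhull2 4 (mab 4 (by decide)) (mbc 4 (by decide)) h.1) (hhull2 7 (mab 7 (by decide)) (mbc 7 (by decide)) h.1) (hhull2 9 (mcd 9 (by decide)) (mad 9 (by decide)) h.2)).elim
    · exact (hblue 0 6 7 (by decide) (by decide) Pab (hhull3 0 (mcd 0 (by decide)) (mad 0 (by decide)) (mbc 0 (by decide)) h) (mab 6 (by decide)) (mab 7 (by decide))).elim
    · exact (hblue 5 8 9 (by decide) (by decide) Pcd (hhull3 5 (mab 5 (by decide)) (mad 5 (by decide)) (mbc 5 (by decide)) h) (mcd 8 (by decide)) (mcd 9 (by decide))).elim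
    · exact (hblue 2 6 9 (by decide) (by decide) Pad (hhull3 2 (mab 2 (by decide)) (mcd 2 (by decide)) (mbc 2 (by decide)) h) (mad 6 (by decide)) (mad 9 (by decide))).elim
    · exact (hblue 3 7 8 (by decide) (by decide) Pbc (hhull3 3 (mab 3 (by decide)) (mcd 3 (by decide)) (mad 3 (by decide)) h) (mbc 7 (by decide)) (mbc 8 (by decide))).elim
  obtain ⟨q1, hq1uv, hq1e⟩ := key1
  obtain ⟨q2, hq2uv, hq2e⟩ := key2
  obtain ⟨q3, hq3uv, hq3e⟩ := key3
  rw [convexHull_pair] at hq1uv hq1e hq2uv hq2e hq3uv hq3e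
  rcases tri_seg hq1e hq2e hq3e hq1uv hq2uv hq3uv with h | h | h | h | h | h
  · exact hblue 1 6 8 (by decide) (by decide) Pac (hseg 1 (mab 1 (by decide)) (mcd 1 (by decide)) h) (mac 6 (by decide)) (mac 8 (by decide))
  · exact hblue 2 6 9 (by decide) (by decide) Pad (hseg 2 (mab 2 (by decide)) (mcd 2 (by decide)) h) (mad 6 (by decide)) (mad 9 (by decide))
  · exact hblue 3 7 8 (by decide) (by decide) Pbc (hseg 3 (mab 3 (by decide)) (mcd 3 (by decide)) h) (mbc 7 (by decide)) (mbc 8 (by decide))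
  · exact hblue 1 6 8 (by decide) (by decide) Pac (hseg 1 (mad 1 (by decide)) (mbc 1 (by decide)) h) (mac 6 (by decide)) (mac 8 (by decide))
  · exact hblue 6 8 9 (by decide) (by decide) Pad (mad 6 (by decide)) (hseg 8 (mac 8 (by decide)) (mbc 8 (by decide)) h) (mad 9 (by decide))
  · exact hblue 6 7 8 (by decide) (by decide) Pbc (hseg 6 (mac 6 (by decide)) (mad 6 (by decide)) h) (mbc 7 (by decide)) (mbc 8 (by decide))
end

section
/- Triangle construction: let P, Q, R ∈ ℝ² be non-collinear and let ω ≥ 2. The family consisting of ⌈ω/2⌉ copies of the segment [P,R], ⌊ω/2⌋ copies of [P,Q], ⌊ω/2⌋ copies of [R,Q], and, if ω is odd, the singleton {Q}, has ω + ⌈ω/2⌉ members (counted with multiplicity), no point of ℝ² is contained in more than ω members, and each of the points P, Q, R is contained in exactly ω members. -/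
open Finset in
lemma filter_ite_card (c1 c2 c3 N : ℕ) (h1 : c1 ≤ c2) (h2 : c2 ≤ c3) (h3 : c3 ≤ N)
    (A B C D : Prop) [Decidable A] [Decidable B] [Decidable C] [Decidable D] :
    ((Finset.range N).filter
      (fun n => if n < c1 then A else if n < c2 then B else if n < c3 then C else D)).card
    = (if A then c1 else 0) + (if B then c2 - c1 else 0) + (if C then c3 - c2 else 0)
      + (if D then N - c3 else 0) := by
  rw [Finset.card_filter, Finset.range_eq_Ico,
    ← Finset.sum_Ico_consecutive _ (Nat.zero_le c1) (h1.trans (h2.trans h3)),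
    ← Finset.sum_Ico_consecutive _ h1 (h2.trans h3),
    ← Finset.sum_Ico_consecutive _ h2 h3]
  have e1 : ∀ n ∈ Finset.Ico 0 c1,
      (if (if n < c1 then A else if n < c2 then B else if n < c3 then C else D) then 1 else 0)
      = (if A then 1 else 0) := by
    intro n hn; simp only [Finset.mem_Ico] at hn; simp only [if_pos hn.2]
  have e2 : ∀ n ∈ Finset.Ico c1 c2,
      (if (if n < c1 then A else if n < c2 then B else if n < c3 then C else D) then 1 else 0)
      = (if B then 1 else 0) := by
    intro n hn; simp only [Finset.mem_Ico] at hn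
    simp only [if_neg (show ¬ n < c1 by omega), if_pos hn.2]
  have e3 : ∀ n ∈ Finset.Ico c2 c3,
      (if (if n < c1 then A else if n < c2 then B else if n < c3 then C else D) then 1 else 0)
      = (if C then 1 else 0) := by
    intro n hn; simp only [Finset.mem_Ico] at hn
    simp only [if_neg (show ¬ n < c1 by omega), if_neg (show ¬ n < c2 by omega), if_pos hn.2]
  have e4 : ∀ n ∈ Finset.Ico c3 N,
      (if (if n < c1 then A else if n < c2 then B else if n < c3 then C else D) then 1 else 0)
      = (if D then 1 else 0) := by
    intro n hn; simp only [Finset.mem_Ico] at hn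
    simp only [if_neg (show ¬ n < c1 by omega), if_neg (show ¬ n < c2 by omega),
      if_neg (show ¬ n < c3 by omega)]
  rw [Finset.sum_congr rfl e1, Finset.sum_congr rfl e2, Finset.sum_congr rfl e3,
    Finset.sum_congr rfl e4]
  simp only [Finset.sum_const, Nat.card_Ico, smul_eq_mul, mul_ite, mul_one, mul_zero,
    Nat.sub_zero]
  ring

lemma ncard_fin (N : ℕ) (p : ℕ → Prop) [DecidablePred p] :
    ({i : Fin N | p i.val}).ncard = ((Finset.range N).filter p).card := by
  have himg : Fin.val '' {i : Fin N | p i.val} = ↑((Finset.range N).filter p) := by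
    ext n
    simp only [Set.mem_image, Set.mem_setOf_eq, Finset.coe_filter, Finset.mem_range,
      Set.mem_setOf_eq]
    constructor
    · rintro ⟨i, hi, rfl⟩; exact ⟨i.isLt, hi⟩
    · rintro ⟨hn, hp⟩; exact ⟨⟨n, hn⟩, hp, rfl⟩
  rw [← Set.ncard_image_of_injective _ Fin.val_injective, himg, Set.ncard_coe_finset]

lemma collinear_of_mem_segment' {P Q x : ℝ × ℝ} (h : x ∈ segment ℝ P Q) :
    Collinear ℝ ({P, Q, x} : Set (ℝ × ℝ)) := by
  have := (mem_segment_iff_wbtw.mp h).collinear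
  exact this.subset (by intro y hy; simp at hy ⊢; tauto)

lemma eq_of_mem_two_segments {P Q R x : ℝ × ℝ}
    (hncol : ¬ Collinear ℝ ({P, Q, R} : Set (ℝ × ℝ)))
    (h1 : x ∈ segment ℝ P R) (h2 : x ∈ segment ℝ P Q) : x = P := by
  by_contra hxP
  apply hncol
  have c1 : Collinear ℝ ({P, R, x} : Set (ℝ × ℝ)) := collinear_of_mem_segment' h1
  have c2 : Collinear ℝ ({P, Q, x} : Set (ℝ × ℝ)) := collinear_of_mem_segment' h2
  have hPmem : P ∈ ({P, Q, x} : Set (ℝ × ℝ)) := by simp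
  have hxmem : x ∈ ({P, Q, x} : Set (ℝ × ℝ)) := by simp
  have key := (c2.collinear_insert_iff_of_ne (p₁ := R) hPmem hxmem (Ne.symm hxP)).mpr
    (c1.subset (by intro y hy; simp at hy ⊢; tauto))
  exact key.subset (by intro y hy; simp at hy ⊢; tauto)

/-- Triangle construction: for non-collinear `P, Q, R` and `ω ≥ 2`, the family
of `⌈ω/2⌉` copies of `[P,R]`, `⌊ω/2⌋` copies of `[P,Q]`, `⌊ω/2⌋` copies of
`[R,Q]` and, for odd `ω`, the singleton `{Q}` — a family of `ω + ⌈ω/2⌉`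
members — covers no point of the plane more than `ω` times, and covers each of
`P, Q, R` exactly `ω` times. -/
theorem triangle_construction (ω : ℕ) (hω : 2 ≤ ω) (P Q R : ℝ × ℝ)
    (hncol : ¬ Collinear ℝ ({P, Q, R} : Set (ℝ × ℝ)))
    (F : Fin (ω + (ω + 1) / 2) → Set (ℝ × ℝ))
    (hF : ∀ i : Fin (ω + (ω + 1) / 2), F i =
      if (i : ℕ) < (ω + 1) / 2 then segment ℝ P R
      else if (i : ℕ) < (ω + 1) / 2 + ω / 2 then segment ℝ P Q
      else if (i : ℕ) < (ω + 1) / 2 + ω / 2 + ω / 2 then segment ℝ R Q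
      else {Q}) :
    (∀ x : ℝ × ℝ, ({i | x ∈ F i} : Set (Fin (ω + (ω + 1) / 2))).ncard ≤ ω) ∧
    ({i | P ∈ F i} : Set (Fin (ω + (ω + 1) / 2))).ncard = ω ∧
    ({i | Q ∈ F i} : Set (Fin (ω + (ω + 1) / 2))).ncard = ω ∧
    ({i | R ∈ F i} : Set (Fin (ω + (ω + 1) / 2))).ncard = ω := by
  classical
  have main : ∀ x : ℝ × ℝ, ({i | x ∈ F i} : Set (Fin (ω + (ω + 1) / 2))).ncard =
      (if x ∈ segment ℝ P R then (ω + 1) / 2 else 0)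
      + (if x ∈ segment ℝ P Q then ω / 2 else 0)
      + (if x ∈ segment ℝ R Q then ω / 2 else 0)
      + (if x = Q then ω - (ω / 2 + ω / 2) else 0) := by
    intro x
    have hset : ({i | x ∈ F i} : Set (Fin (ω + (ω + 1) / 2))) =
        {i : Fin (ω + (ω + 1) / 2) |
          (fun n => if n < (ω + 1) / 2 then x ∈ segment ℝ P R
            else if n < (ω + 1) / 2 + ω / 2 then x ∈ segment ℝ P Q
            else if n < (ω + 1) / 2 + ω / 2 + ω / 2 then x ∈ segment ℝ R Q
            else x = Q) i.val} := by
      ext i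
      simp only [Set.mem_setOf_eq, hF i]
      split_ifs <;> simp
    rw [hset, ncard_fin (ω + (ω + 1) / 2)
        (fun n => if n < (ω + 1) / 2 then x ∈ segment ℝ P R
          else if n < (ω + 1) / 2 + ω / 2 then x ∈ segment ℝ P Q
          else if n < (ω + 1) / 2 + ω / 2 + ω / 2 then x ∈ segment ℝ R Q
          else x = Q),
      filter_ite_card ((ω + 1) / 2) ((ω + 1) / 2 + ω / 2) ((ω + 1) / 2 + ω / 2 + ω / 2)
        (ω + (ω + 1) / 2) (by omega) (by omega) (by omega)]
    have e1 : (ω + 1) / 2 + ω / 2 - (ω + 1) / 2 = ω / 2 := by omega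
    have e2 : (ω + 1) / 2 + ω / 2 + ω / 2 - ((ω + 1) / 2 + ω / 2) = ω / 2 := by omega
    have e3 : ω + (ω + 1) / 2 - ((ω + 1) / 2 + ω / 2 + ω / 2) = ω - (ω / 2 + ω / 2) := by
      omega
    rw [e1, e2, e3]
  have hPQ : P ≠ Q := ne₁₂_of_not_collinear hncol
  have hQR : Q ≠ R := ne₂₃_of_not_collinear hncol
  have hQPR : Q ∉ segment ℝ P R := fun h => hncol
    ((collinear_of_mem_segment' h).subset (by intro y hy; simp at hy ⊢; tauto))
  have hPRQ : P ∉ segment ℝ R Q := fun h => hncol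
    ((collinear_of_mem_segment' h).subset (by intro y hy; simp at hy ⊢; tauto))
  have hRPQ : R ∉ segment ℝ P Q := fun h => hncol
    ((collinear_of_mem_segment' h).subset (by intro y hy; simp at hy ⊢; tauto))
  have hncol' : ¬ Collinear ℝ ({Q, P, R} : Set (ℝ × ℝ)) := fun h => hncol
    (h.subset (by intro y hy; simp at hy ⊢; tauto))
  have tBC : ∀ x : ℝ × ℝ, x ∈ segment ℝ P Q → x ∈ segment ℝ R Q → x = Q := by
    intro x hB hC
    rw [segment_symm] at hB hC
    exact eq_of_mem_two_segments hncol' hC hB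
  refine ⟨?_, ?_, ?_, ?_⟩
  · intro x
    rw [main x]
    by_cases hA : x ∈ segment ℝ P R
    · have hD : ¬ x = Q := fun h => hQPR (h ▸ hA)
      by_cases hB : x ∈ segment ℝ P Q
      · have hC : x ∉ segment ℝ R Q := fun hC => hD (tBC x hB hC)
        simp only [if_pos hA, if_pos hB, if_neg hC, if_neg hD]
        omega
      · simp only [if_pos hA, if_neg hB, if_neg hD]
        split_ifs <;> omega
    · simp only [if_neg hA]
      split_ifs <;> omega
  · rw [main P]
    simp only [if_pos (left_mem_segment ℝ P R), if_pos (left_mem_segment ℝ P Q),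
      if_neg hPRQ, if_neg hPQ]
    omega
  · rw [main Q]
    simp only [if_neg hQPR, if_pos (right_mem_segment ℝ P Q), if_pos (right_mem_segment ℝ R Q),
      eq_self_iff_true, if_true]
    omega
  · rw [main R]
    simp only [if_pos (right_mem_segment ℝ P R), if_neg hRPQ, if_pos (left_mem_segment ℝ R Q),
      if_neg hQR.symm]
    omega
end
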